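/- arXiv:2303.05751 — 6 statements merged into one kernel-verified Lean document; each statement's English description precedes it below -/
import Mathlib

section
/- For s ∈ ℝ^{P_n}, the following are equivalent: (1) s lies in the image of T; (2) there exist reals m₁, …, m_n such that P_σ(s) = m_{σ₁} for every permutation σ of [n]; (3) for all distinct i, j, k ∈ [n] and all I ⊆ [n]∖{i,j,k}, one has s_{I∪{i},I∪{j}} + s_{I∪{i,j},I∪{j,k}} = s_{I∪{i},I∪{k}} + s_{I∪{i,k},I∪{j,k}}. -/
/-- A pair `{I, J}` of subsets of `[n]` is close if
`|I| = |J| = |I ∩ J| + 1 = |I ∪ J| − 1`. -/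
def ClosePair {n : ℕ} (I J : Finset (Fin n)) : Prop :=
  I.card = J.card ∧ I.card = (I ∩ J).card + 1 ∧ I.card + 1 = (I ∪ J).card

/-- `I_r(σ) = {σ₁, …, σ_r}` (in `0`-indexed form, `{σ 0, …, σ (r-1)}`). -/
def Iset {n : ℕ} (σ : Equiv.Perm (Fin n)) (r : ℕ) : Finset (Fin n) :=
  Finset.univ.filter (fun x => (σ.symm x : ℕ) < r)

/-- `J_r(σ) = {σ₂, …, σ_{r+1}}` (in `0`-indexed form, `{σ 1, …, σ r}`). -/
def Jset {n : ℕ} (σ : Equiv.Perm (Fin n)) (r : ℕ) : Finset (Fin n) :=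
  Finset.univ.filter (fun x => 1 ≤ (σ.symm x : ℕ) ∧ (σ.symm x : ℕ) < r + 1)

/-- The path sum of `s` along the permutation `σ`: `P_σ(s) = Σ_{r=1}^{n-1} s_{I_r, J_r}`. -/
def pathSum {n : ℕ} (σ : Equiv.Perm (Fin n)) (s : Finset (Fin n) → Finset (Fin n) → ℝ) : ℝ :=
  ∑ r ∈ Finset.Icc 1 (n - 1), s (Iset σ r) (Jset σ r)

section basics
variable {n : ℕ} (σ : Equiv.Perm (Fin n))

lemma mem_Iset {x : Fin n} {r : ℕ} : x ∈ Iset σ r ↔ (σ.symm x : ℕ) < r := by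
  simp [Iset]

lemma mem_Jset {x : Fin n} {r : ℕ} : x ∈ Jset σ r ↔ 1 ≤ (σ.symm x : ℕ) ∧ (σ.symm x : ℕ) < r + 1 := by
  simp [Jset]

lemma Jset_eq_erase (hn : 0 < n) (r : ℕ) :
    Jset σ r = (Iset σ (r + 1)).erase (σ ⟨0, hn⟩) := by
  ext x
  simp only [mem_Jset, Finset.mem_erase, mem_Iset]
  constructor
  · rintro ⟨h1, h2⟩
    refine ⟨?_, h2⟩
    intro h; subst h
    simp at h1
  · rintro ⟨h1, h2⟩
    refine ⟨Nat.one_le_iff_ne_zero.mpr ?_, h2⟩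
    intro h0
    apply h1
    have : σ.symm x = ⟨0, hn⟩ := by
      apply Fin.ext; simp [h0]
    rw [← this]; simp

lemma Iset_card {r : ℕ} (hr : r ≤ n) : (Iset σ r).card = r := by
  have : Iset σ r = (Finset.univ.filter (fun p : Fin n => (p : ℕ) < r)).image σ := by
    ext x
    simp only [mem_Iset, Finset.mem_image, Finset.mem_filter, Finset.mem_univ, true_and]
    constructor
    · intro h; exact ⟨σ.symm x, h, by simp⟩
    · rintro ⟨p, hp, rfl⟩; simpa using hp
  rw [this, Finset.card_image_of_injective _ σ.injective]
  have : (Finset.univ.filter (fun p : Fin n => (p : ℕ) < r)) =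
      (Finset.range r).attachFin (fun m hm => lt_of_lt_of_le (Finset.mem_range.mp hm) hr) := by
    ext p
    simp [Finset.mem_attachFin]
  rw [this, Finset.card_attachFin, Finset.card_range]

lemma Jset_zero : Jset σ 0 = ∅ := by
  ext x
  simp only [mem_Jset, Finset.notMem_empty, iff_false]
  omega

lemma Iset_zero : Iset σ 0 = ∅ := by
  ext x; simp [mem_Iset]

lemma Iset_top {r : ℕ} (hr : n ≤ r) : Iset σ r = Finset.univ := by
  ext x; simp only [mem_Iset, Finset.mem_univ, iff_true]
  exact lt_of_lt_of_le (σ.symm x).isLt hr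

lemma Iset_one (hn : 0 < n) : Iset σ 1 = {σ ⟨0, hn⟩} := by
  ext x
  simp only [mem_Iset, Finset.mem_singleton, Nat.lt_one_iff]
  constructor
  · intro h
    have : σ.symm x = ⟨0, hn⟩ := by ext; exact h
    rw [← this]; simp
  · rintro rfl; simp

lemma Iset_inter_Jset {r : ℕ} (hr : 1 ≤ r) :
    Iset σ r ∩ Jset σ r = Jset σ (r - 1) := by
  ext x
  simp only [Finset.mem_inter, mem_Iset, mem_Jset]
  omega

lemma Iset_union_Jset {r : ℕ} (hr : 1 ≤ r) :
    Iset σ r ∪ Jset σ r = Iset σ (r + 1) := by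
  ext x
  simp only [Finset.mem_union, mem_Iset, mem_Jset]
  omega

lemma closePair_Iset_Jset (hr1 : 1 ≤ r) (hr2 : r ≤ n - 1) :
    ClosePair (Iset σ r) (Jset σ r) := by
  have hrn : r + 1 ≤ n := by omega
  have hJ : (Jset σ r).card = r := by
    rw [Jset_eq_erase σ (by omega) r, Finset.card_erase_of_mem, Iset_card σ hrn]
    · omega
    · rw [mem_Iset]; simp
  refine ⟨?_, ?_, ?_⟩
  · rw [Iset_card σ (by omega), hJ]
  · rw [Iset_card σ (by omega), Iset_inter_Jset σ hr1]
    rw [Jset_eq_erase σ (by omega) (r-1), Finset.card_erase_of_mem, Iset_card σ (by omega)]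
    · omega
    · rw [mem_Iset]; simp
  · rw [Iset_card σ (by omega), Iset_union_Jset σ hr1, Iset_card σ hrn]

end basics

noncomputable def bF {n : ℕ} (s : Finset (Fin n) → Finset (Fin n) → ℝ) :
    Finset (Fin n) → ℝ := fun S =>
  if h : 2 ≤ S.card then
    have hS : S.Nonempty := Finset.card_pos.mp (by omega)
    let a := S.min' hS
    have ha : a ∈ S := S.min'_mem hS
    have hS' : (S.erase a).Nonempty := by
      rw [← Finset.card_pos, Finset.card_erase_of_mem ha]; omega
    let b := (S.erase a).min' hS'
    have hb : b ∈ S.erase a := (S.erase a).min'_mem hS'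
    have hbS : b ∈ S := Finset.mem_of_mem_erase hb
    have h1 : (S.erase b).card < S.card := Finset.card_erase_lt_of_mem hbS
    have h2 : (S.erase a).card < S.card := Finset.card_erase_lt_of_mem ha
    have h3 : ((S.erase a).erase b).card < S.card :=
      lt_of_le_of_lt (Finset.card_erase_le) h2
    s (S.erase b) (S.erase a) + bF s (S.erase b) + bF s (S.erase a)
      - bF s ((S.erase a).erase b)
  else 0
  termination_by S => S.card

lemma bF_small {n : ℕ} (s : Finset (Fin n) → Finset (Fin n) → ℝ) {S : Finset (Fin n)}
    (h : S.card ≤ 1) : bF s S = 0 := by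
  rw [bF]
  simp only [dif_neg (by omega : ¬ 2 ≤ S.card)]

lemma bF_unfold {n : ℕ} (s : Finset (Fin n) → Finset (Fin n) → ℝ) {S : Finset (Fin n)}
    (h : 2 ≤ S.card) (hS : S.Nonempty) (hS' : (S.erase (S.min' hS)).Nonempty) :
    bF s S = s (S.erase ((S.erase (S.min' hS)).min' hS')) (S.erase (S.min' hS))
      + bF s (S.erase ((S.erase (S.min' hS)).min' hS'))
      + bF s (S.erase (S.min' hS))
      - bF s ((S.erase (S.min' hS)).erase ((S.erase (S.min' hS)).min' hS')) := by
  rw [bF]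
  simp only [dif_pos h]

lemma bF_unfold' {n : ℕ} (s : Finset (Fin n) → Finset (Fin n) → ℝ) {S : Finset (Fin n)}
    (h : 2 ≤ S.card) (hS : S.Nonempty) (a : Fin n) (hA : a = S.min' hS)
    (hS' : (S.erase a).Nonempty) (b : Fin n) (hB : b = (S.erase a).min' hS') :
    bF s S = s (S.erase b) (S.erase a) + bF s (S.erase b) + bF s (S.erase a)
      - bF s ((S.erase a).erase b) := by
  subst hA
  subst hB
  exact bF_unfold s h hS hS'

section key
variable {n : ℕ} (s : Finset (Fin n) → Finset (Fin n) → ℝ)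

/-- The defect of the pair `{x,y}` in `S`. -/
noncomputable def Edef (S : Finset (Fin n)) (x y : Fin n) : ℝ :=
  bF s S - bF s (S.erase x) - bF s (S.erase y) + bF s ((S.erase x).erase y)
    - s (S.erase x) (S.erase y)

variable (hsymm : ∀ I J : Finset (Fin n), s I J = s J I)
variable (hs : ∀ i j k : Fin n, ∀ I : Finset (Fin n), i ≠ j → i ≠ k → j ≠ k →
        i ∉ I → j ∉ I → k ∉ I →
        s (insert i I) (insert j I) + s (insert j (insert i I)) (insert k (insert j I)) =
        s (insert i I) (insert k I) + s (insert k (insert i I)) (insert k (insert j I)))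

include hsymm in
lemma Edef_symm (S : Finset (Fin n)) (x y : Fin n) : Edef s S x y = Edef s S y x := by
  unfold Edef
  rw [Finset.erase_right_comm, hsymm]
  ring

include hsymm hs in
lemma Edef_step {S : Finset (Fin n)} {x y z : Fin n}
    (IH : ∀ (K : Finset (Fin n)) (u v : Fin n), u ≠ v → u ∉ K → v ∉ K →
      K.card + 3 = S.card →
      s (insert u K) (insert v K) =
        bF s K + bF s (insert u (insert v K)) - bF s (insert u K) - bF s (insert v K))
    (hx : x ∈ S) (hy : y ∈ S) (hz : z ∈ S)
    (hxy : x ≠ y) (hxz : x ≠ z) (hyz : y ≠ z) :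
    Edef s S x y = Edef s S x z := by
  classical
  set K := (S \ {x, y, z}) with hK
  have hxK : x ∉ K := by simp [hK]
  have hyK : y ∉ K := by simp [hK]
  have hzK : z ∉ K := by simp [hK]
  have hcard : K.card + 3 = S.card := by
    have hsub : ({x, y, z} : Finset (Fin n)) ⊆ S := by
      intro w hw
      simp only [Finset.mem_insert, Finset.mem_singleton] at hw
      rcases hw with rfl | rfl | rfl <;> assumption
    have h3 : ({x, y, z} : Finset (Fin n)).card = 3 := by
      rw [Finset.card_insert_of_notMem (by simp [hxy, hxz]),
        Finset.card_insert_of_notMem (by simp [hyz]), Finset.card_singleton]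
    rw [hK, Finset.card_sdiff_of_subset hsub, h3]
    have := Finset.card_le_card hsub
    omega
  have hSy : S.erase y = insert x (insert z K) := by
    ext w
    simp only [Finset.mem_erase, hK, Finset.mem_insert, Finset.mem_sdiff,
      Finset.mem_singleton]
    constructor
    · rintro ⟨hw1, hw2⟩
      by_cases h1 : w = x; · tauto
      by_cases h2 : w = z; · tauto
      tauto
    · rintro (rfl | rfl | ⟨h1, h2⟩) <;> tauto
  have hSz : S.erase z = insert x (insert y K) := by
    ext w
    simp only [Finset.mem_erase, hK, Finset.mem_insert, Finset.mem_sdiff,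
      Finset.mem_singleton]
    constructor
    · rintro ⟨hw1, hw2⟩
      by_cases h1 : w = x; · tauto
      by_cases h2 : w = y; · tauto
      tauto
    · rintro (rfl | rfl | ⟨h1, h2⟩) <;> tauto
  have hSx : S.erase x = insert y (insert z K) := by
    ext w
    simp only [Finset.mem_erase, hK, Finset.mem_insert, Finset.mem_sdiff,
      Finset.mem_singleton]
    constructor
    · rintro ⟨hw1, hw2⟩
      by_cases h1 : w = y; · tauto
      by_cases h2 : w = z; · tauto
      tauto
    · rintro (rfl | rfl | ⟨h1, h2⟩) <;> tauto
  have hSxy : (S.erase x).erase y = insert z K := by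
    rw [hSx, Finset.erase_insert]
    rw [Finset.mem_insert]
    push_neg
    exact ⟨hyz, hyK⟩
  have hSxz : (S.erase x).erase z = insert y K := by
    rw [hSx, Finset.insert_comm, Finset.erase_insert]
    rw [Finset.mem_insert]
    push_neg
    exact ⟨fun h => hyz h.symm, hzK⟩
  have IH1 := IH K x z hxz hxK hzK hcard
  have IH2 := IH K x y hxy hxK hyK hcard
  have hex := hs x y z K hxy hxz hyz hxK hyK hzK
  have e1 : s (S.erase x) (S.erase y) = s (insert x (insert z K)) (insert z (insert y K)) := by
    rw [hSx, hSy, hsymm, Finset.insert_comm y]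
  have e2 : s (S.erase x) (S.erase z) = s (insert y (insert x K)) (insert z (insert y K)) := by
    rw [hSx, hSz, hsymm, Finset.insert_comm y z, Finset.insert_comm x y]
  unfold Edef
  rw [e1, e2, hSy, hSz, hSxy, hSxz]
  have hex' : s (insert x K) (insert y K) + s (insert y (insert x K)) (insert z (insert y K)) =
      s (insert x K) (insert z K) + s (insert x (insert z K)) (insert z (insert y K)) := by
    rw [hex]
    rw [Finset.insert_comm z x]
  linarith [hex', IH1, IH2]

include hsymm hs in
lemma Edef_const {S : Finset (Fin n)} {x y u v : Fin n}
    (IH : ∀ (K : Finset (Fin n)) (u v : Fin n), u ≠ v → u ∉ K → v ∉ K →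
      K.card + 3 = S.card →
      s (insert u K) (insert v K) =
        bF s K + bF s (insert u (insert v K)) - bF s (insert u K) - bF s (insert v K))
    (hx : x ∈ S) (hy : y ∈ S) (hu : u ∈ S) (hv : v ∈ S)
    (hxy : x ≠ y) (huv : u ≠ v) :
    Edef s S x y = Edef s S u v := by
  by_cases hxu : x = u
  · subst hxu
    by_cases hyv : y = v
    · subst hyv; rfl
    · exact Edef_step s hsymm hs IH hx hy hv hxy huv hyv
  · by_cases hxv : x = v
    · subst hxv
      by_cases hyu : y = u
      · subst hyu; exact Edef_symm s hsymm S x y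
      · calc Edef s S x y = Edef s S x u :=
              Edef_step s hsymm hs IH hx hy hu hxy (fun h => huv h.symm) (fun h => hyu h)
          _ = Edef s S u x := Edef_symm s hsymm S x u
    · by_cases hyu : y = u
      · subst hyu
        calc Edef s S x y = Edef s S y x := Edef_symm s hsymm S x y
          _ = Edef s S y v := Edef_step s hsymm hs IH hy hx hv (Ne.symm hxy) huv hxv
      · by_cases hyv : y = v
        · subst hyv
          calc Edef s S x y = Edef s S x u :=
                Edef_step s hsymm hs IH hx hy hu hxy hxu (fun h => hyu h)
            _ = Edef s S u x := Edef_symm s hsymm S x u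
            _ = Edef s S u y := Edef_step s hsymm hs IH hu hx hy (fun h => hxu h.symm) huv hxy
        · calc Edef s S x y = Edef s S x u :=
                Edef_step s hsymm hs IH hx hy hu hxy hxu (fun h => hyu h)
            _ = Edef s S u x := Edef_symm s hsymm S x u
            _ = Edef s S u v := Edef_step s hsymm hs IH hu hx hv (fun h => hxu h.symm) huv hxv

include hsymm hs in
lemma bF_spec : ∀ (I : Finset (Fin n)) (i j : Fin n), i ≠ j → i ∉ I → j ∉ I →
    s (insert i I) (insert j I) =
      bF s I + bF s (insert i (insert j I)) - bF s (insert i I) - bF s (insert j I) := by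
  classical
  suffices H : ∀ c : ℕ, ∀ (I : Finset (Fin n)) (i j : Fin n), i ≠ j → i ∉ I → j ∉ I →
      I.card + 2 = c →
      s (insert i I) (insert j I) =
        bF s I + bF s (insert i (insert j I)) - bF s (insert i I) - bF s (insert j I) by
    intro I i j h1 h2 h3
    exact H (I.card + 2) I i j h1 h2 h3 rfl
  intro c
  induction c using Nat.strong_induction_on with
  | _ c IHc =>
    intro I i j hij hiI hjI hc
    set S := insert i (insert j I) with hSdef
    have hiS : i ∈ S := Finset.mem_insert_self _ _
    have hjS : j ∈ S := by simp [hSdef]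
    have hScard : S.card = I.card + 2 := by
      rw [hSdef, Finset.card_insert_of_notMem (by simp [hij, hiI]),
        Finset.card_insert_of_notMem hjI]
    have hSi : S.erase i = insert j I := by
      rw [hSdef, Finset.erase_insert (by simp [hij, hiI])]
    have hSj : S.erase j = insert i I := by
      rw [hSdef, Finset.insert_comm, Finset.erase_insert (by simp [hij.symm, hjI])]
    have hSij : (S.erase i).erase j = I := by
      rw [hSi, Finset.erase_insert hjI]
    -- the goal is equivalent to Edef s S i j = 0
    have hgoal : Edef s S i j = 0 →
        s (insert i I) (insert j I) =
          bF s I + bF s (insert i (insert j I)) - bF s (insert i I) - bF s (insert j I) := by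
      intro hE
      unfold Edef at hE
      rw [hSij, hSi, hSj] at hE
      rw [hsymm (insert j I) (insert i I)] at hE
      linarith [hE]
    apply hgoal
    -- IH in the form needed by Edef_const
    have IH : ∀ (K : Finset (Fin n)) (u v : Fin n), u ≠ v → u ∉ K → v ∉ K →
        K.card + 3 = S.card →
        s (insert u K) (insert v K) =
          bF s K + bF s (insert u (insert v K)) - bF s (insert u K) - bF s (insert v K) := by
      intro K u v h1 h2 h3 h4
      exact IHc (K.card + 2) (by omega) K u v h1 h2 h3 rfl
    -- min pair of S
    have h2S : 2 ≤ S.card := by omega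
    have hS : S.Nonempty := Finset.card_pos.mp (by omega)
    set a := S.min' hS with ha
    have haS : a ∈ S := S.min'_mem hS
    have hS' : (S.erase a).Nonempty := by
      rw [← Finset.card_pos, Finset.card_erase_of_mem haS]; omega
    set b := (S.erase a).min' hS' with hb
    have hbS' : b ∈ S.erase a := (S.erase a).min'_mem hS'
    have hbS : b ∈ S := Finset.mem_of_mem_erase hbS'
    have hba : b ≠ a := Finset.ne_of_mem_erase hbS'
    have hEba : Edef s S b a = 0 := by
      have h := bF_unfold' s h2S hS a ha hS' b hb
      unfold Edef
      rw [Finset.erase_right_comm]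
      linarith [h]
    rw [Edef_const s hsymm hs IH hiS hjS hbS haS hij hba]
    exact hEba

end key


noncomputable def permOfList {n : ℕ} (l : List (Fin n)) (hlen : l.length = n)
    (hnd : l.Nodup) : Equiv.Perm (Fin n) :=
  Equiv.ofBijective (fun p => l.get (Fin.cast hlen.symm p))
    (Finite.injective_iff_bijective.mp (by
      intro p q h
      have h2 := (hnd.get_inj_iff).mp h
      have h3 := congrArg Fin.val h2
      exact Fin.ext h3))

lemma permOfList_apply {n : ℕ} (l : List (Fin n)) (hlen : l.length = n)
    (hnd : l.Nodup) (p : Fin n) :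
    permOfList l hlen hnd p = l.get (Fin.cast hlen.symm p) := rfl

lemma permOfList_symm {n : ℕ} (l : List (Fin n)) (hlen : l.length = n)
    (hnd : l.Nodup) (m : ℕ) (hm : m < l.length) :
    ((permOfList l hlen hnd).symm (l.get ⟨m, hm⟩) : ℕ) = m := by
  have hmn : m < n := hlen ▸ hm
  have : permOfList l hlen hnd ⟨m, hmn⟩ = l.get ⟨m, hm⟩ := rfl
  rw [← this, Equiv.symm_apply_apply]

lemma Iset_permOfList {n : ℕ} (l : List (Fin n)) (hlen : l.length = n)
    (hnd : l.Nodup) (t : ℕ) :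
    Iset (permOfList l hlen hnd) t = (l.take t).toFinset := by
  classical
  set σ := permOfList l hlen hnd with hσ
  ext x
  rw [mem_Iset, List.mem_toFinset, List.mem_take_iff_getElem]
  constructor
  · intro h
    have hlt : ((σ.symm x : ℕ)) < l.length := by rw [hlen]; exact (σ.symm x).isLt
    refine ⟨(σ.symm x : ℕ), lt_min h hlt, ?_⟩
    show l.get ⟨(σ.symm x : ℕ), hlt⟩ = x
    have : σ (σ.symm x) = x := σ.apply_symm_apply x
    rw [hσ, permOfList_apply] at this
    convert this using 2
    rfl
  · rintro ⟨m, hm, rfl⟩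
    have hm2 : m < l.length := lt_of_lt_of_le hm (min_le_right _ _)
    have : l[m] = l.get ⟨m, hm2⟩ := rfl
    rw [this, permOfList_symm]
    exact lt_of_lt_of_le hm (min_le_left _ _)

lemma mul_swap_symm_apply {n : ℕ} (σ : Equiv.Perm (Fin n)) (a b x : Fin n) :
    (σ * Equiv.swap a b).symm x = Equiv.swap a b (σ.symm x) := by
  simp [Equiv.Perm.mul_def, Equiv.symm_trans_apply]

lemma Iset_mul_swap {n : ℕ} (σ : Equiv.Perm (Fin n)) {a b : Fin n} {t : ℕ}
    (h : ((a : ℕ) < t ↔ (b : ℕ) < t)) :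
    Iset (σ * Equiv.swap a b) t = Iset σ t := by
  ext x
  rw [mem_Iset, mem_Iset, mul_swap_symm_apply]
  by_cases h1 : σ.symm x = a
  · rw [h1, Equiv.swap_apply_left]
    exact h.symm
  · by_cases h2 : σ.symm x = b
    · rw [h2, Equiv.swap_apply_right]
      exact h
    · rw [Equiv.swap_apply_of_ne_of_ne h1 h2]

lemma Iset_mul_swap_mid {n : ℕ} (σ : Equiv.Perm (Fin n)) {a b : Fin n} {t : ℕ}
    (hab : a ≠ b) (ha : (a : ℕ) < t) (hb : ¬ (b : ℕ) < t) :
    Iset (σ * Equiv.swap a b) t = insert (σ b) ((Iset σ t).erase (σ a)) := by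
  ext x
  rw [mem_Iset, mul_swap_symm_apply]
  simp only [Finset.mem_insert, Finset.mem_erase, mem_Iset]
  by_cases h1 : σ.symm x = a
  · have hx : x = σ a := by rw [← h1, Equiv.apply_symm_apply]
    rw [h1, Equiv.swap_apply_left]
    constructor
    · intro h; exact absurd h hb
    · rintro (h | h)
      · exact absurd (σ.injective (hx ▸ h)) hab
      · exact absurd hx h.1
  · by_cases h2 : σ.symm x = b
    · have hx : x = σ b := by rw [← h2, Equiv.apply_symm_apply]
      rw [h2, Equiv.swap_apply_right]
      simp [hx, ha]
    · rw [Equiv.swap_apply_of_ne_of_ne h1 h2]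
      constructor
      · intro h
        right
        refine ⟨?_, h⟩
        intro hx
        exact h1 (by rw [hx, Equiv.symm_apply_apply])
      · rintro (h | h)
        · exact absurd (by rw [h, Equiv.symm_apply_apply]) h2
        · exact h.2

lemma two_to_three {n : ℕ} (hn : 0 < n) (s : Finset (Fin n) → Finset (Fin n) → ℝ)
    (h2 : ∃ m : Fin n → ℝ, ∀ σ : Equiv.Perm (Fin n), pathSum σ s = m (σ ⟨0, hn⟩)) :
    (∀ i j k : Fin n, ∀ I : Finset (Fin n), i ≠ j → i ≠ k → j ≠ k →
        i ∉ I → j ∉ I → k ∉ I →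
        s (insert i I) (insert j I) + s (insert j (insert i I)) (insert k (insert j I)) =
        s (insert i I) (insert k I) + s (insert k (insert i I)) (insert k (insert j I))) := by
  classical
  obtain ⟨m, hm⟩ := h2
  intro i j k I hij hik hjk hiI hjI hkI
  set r := I.card + 1 with hr
  set A := insert i (insert j (insert k I)) with hA
  have hAcard : A.card = I.card + 3 := by
    rw [hA, Finset.card_insert_of_notMem (by simp [hij, hik, hiI]),
      Finset.card_insert_of_notMem (by simp [hjk, hjI]),
      Finset.card_insert_of_notMem hkI]
  have hAn : I.card + 3 ≤ n := by
    rw [← hAcard]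
    have := Finset.card_le_univ A
    simpa using this
  set R := (Finset.univ \ A : Finset (Fin n)) with hR
  have hRcard : R.card = n - (I.card + 3) := by
    rw [hR, Finset.card_sdiff_of_subset (Finset.subset_univ A), Finset.card_univ, Fintype.card_fin, hAcard]
  set Is := I.sort (· ≤ ·) with hIs
  set Rs := R.sort (· ≤ ·) with hRs
  have hIslen : Is.length = I.card := Finset.length_sort _
  have hRslen : Rs.length = R.card := Finset.length_sort _
  have hmemIs : ∀ x, x ∈ Is ↔ x ∈ I := fun x => Finset.mem_sort _
  have hmemRs : ∀ x, x ∈ Rs ↔ (x ∉ A) := by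
    intro x
    rw [hRs, Finset.mem_sort, hR, Finset.mem_sdiff]
    simp
  set l : List (Fin n) := i :: (Is ++ j :: k :: Rs) with hl
  have hlen : l.length = n := by
    rw [hl]
    simp only [List.length_cons, List.length_append, hIslen, hRslen, hRcard]
    omega
  have hiA : i ∈ A := by simp [hA]
  have hjA : j ∈ A := by simp [hA]
  have hkA : k ∈ A := by simp [hA]
  have hIA : ∀ x ∈ I, x ∈ A := by intro x hx; simp [hA, hx]
  have hnd : l.Nodup := by
    rw [hl, List.nodup_cons]
    constructor
    · simp only [List.mem_append, List.mem_cons]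
      push_neg
      refine ⟨?_, hij, hik, ?_⟩
      · rw [hmemIs]; exact hiI
      · simp only [hmemRs, not_not]; exact hiA
    · rw [List.nodup_append]
      refine ⟨Finset.sort_nodup _ _, ?_, ?_⟩
      · rw [List.nodup_cons]
        constructor
        · simp only [List.mem_cons]
          push_neg
          refine ⟨hjk, ?_⟩
          simp only [hmemRs, not_not]; exact hjA
        · rw [List.nodup_cons]
          constructor
          · simp only [hmemRs, not_not]; exact hkA
          · exact Finset.sort_nodup _ _
      · intro x hx
        rw [hmemIs] at hx
        intro b hcon hxb
        subst hxb
        rcases List.mem_cons.mp hcon with rfl | hcon2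
        · exact hjI hx
        rcases List.mem_cons.mp hcon2 with rfl | hcon3
        · exact hkI hx
        · rw [hmemRs] at hcon3; exact hcon3 (hIA x hx)
  set σ := permOfList l hlen hnd with hσ
  have hrn : r + 1 < n := by omega
  set pr : Fin n := ⟨r, by omega⟩ with hpr
  set pr1 : Fin n := ⟨r + 1, hrn⟩ with hpr1
  have hσ0 : σ ⟨0, hn⟩ = i := rfl
  -- generic: value of σ at a position given a decomposition of l
  have hgetAt : ∀ (L1 L2 : List (Fin n)) (a : Fin n), l = L1 ++ a :: L2 →
      ∀ (p : Fin n), (p : ℕ) = L1.length → σ p = a := by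
    intro L1 L2 a hL p hp
    rw [hσ, permOfList_apply]
    have hlt : L1.length < l.length := by rw [hL]; simp
    have h1 : l.get (Fin.cast hlen.symm p) = l.get ⟨L1.length, hlt⟩ := by
      congr 1
      apply Fin.ext
      simpa using hp
    rw [h1, List.get_of_eq hL]
    rw [List.get_eq_getElem, List.getElem_append_right le_rfl]
    simp
  have hgetj : σ pr = j := by
    refine hgetAt (i :: Is) (k :: Rs) j rfl pr ?_
    simp [hIslen, hpr, hr]
  have hgetk : σ pr1 = k := by
    have hL : l = ((i :: Is) ++ [j]) ++ k :: Rs := by simp [hl]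
    refine hgetAt ((i :: Is) ++ [j]) Rs k hL pr1 ?_
    simp [hIslen, hpr1, hr]
  -- take computations
  have htake1 : l.take r = i :: Is := by
    rw [hl, hr, List.take_succ_cons, List.take_append]
    rw [show I.card - Is.length = 0 by omega]
    rw [List.take_zero, List.append_nil, ← hIslen, List.take_length]
  have htake2 : l.take (r + 1) = i :: (Is ++ [j]) := by
    rw [hl, hr, List.take_succ_cons, List.take_append]
    rw [show I.card + 1 - Is.length = 1 by omega]
    rw [List.take_of_length_le (by rw [hIslen]; omega)]
    rfl
  have htake3 : l.take (r + 2) = i :: (Is ++ [j, k]) := by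
    rw [hl, hr, List.take_succ_cons, List.take_append]
    rw [show I.card + 2 - Is.length = 2 by omega]
    rw [List.take_of_length_le (by rw [hIslen]; omega)]
    rfl
  have hIr : Iset σ r = insert i I := by
    rw [hσ, Iset_permOfList, htake1]
    ext x
    simp only [List.toFinset_cons, Finset.mem_insert, List.mem_toFinset, hmemIs x]
  have hIr1 : Iset σ (r + 1) = insert i (insert j I) := by
    rw [hσ, Iset_permOfList, htake2]
    ext x
    simp only [List.toFinset_cons, List.toFinset_append, Finset.mem_insert, Finset.mem_union,
      List.mem_toFinset, hmemIs x, List.toFinset_cons, List.toFinset_nil, Finset.mem_singleton,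
      Finset.notMem_empty, or_false, Finset.mem_insert]
    tauto
  have hIr2 : Iset σ (r + 2) = insert i (insert j (insert k I)) := by
    rw [hσ, Iset_permOfList, htake3]
    ext x
    simp only [List.toFinset_cons, List.toFinset_append, Finset.mem_insert, Finset.mem_union,
      List.mem_toFinset, hmemIs x, List.toFinset_cons, List.toFinset_nil, Finset.mem_singleton,
      Finset.notMem_empty, or_false, Finset.mem_insert]
    tauto
  have hiJI : i ∉ insert j I := by simp [hij, hiI]
  have hiJKI : i ∉ insert j (insert k I) := by simp [hij, hik, hiI]
  have hJr : Jset σ r = insert j I := by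
    rw [Jset_eq_erase σ hn, hσ0, hIr1, Finset.erase_insert hiJI]
  have hJr1 : Jset σ (r + 1) = insert j (insert k I) := by
    rw [Jset_eq_erase σ hn, hσ0, hIr2, Finset.erase_insert hiJKI]
  -- the swapped permutation
  set σ' := σ * Equiv.swap pr pr1 with hσ'
  have hpr0 : pr ≠ ⟨0, hn⟩ := by
    intro h
    have := congrArg Fin.val h
    simp [hpr, hr] at this
  have hpr10 : pr1 ≠ ⟨0, hn⟩ := by
    intro h
    have := congrArg Fin.val h
    simp [hpr1, hr] at this
  have hprne : pr ≠ pr1 := by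
    intro h
    have := congrArg Fin.val h
    simp [hpr, hpr1] at this
  have hσ'0 : σ' ⟨0, hn⟩ = i := by
    rw [hσ', Equiv.Perm.mul_apply, Equiv.swap_apply_of_ne_of_ne (Ne.symm hpr0) (Ne.symm hpr10),
      hσ0]
  have hI'r : Iset σ' r = insert i I := by
    rw [hσ', Iset_mul_swap σ (by simp [hpr, hpr1])]
    exact hIr
  have hI'r1 : Iset σ' (r + 1) = insert k (insert i I) := by
    rw [hσ', Iset_mul_swap_mid σ hprne (by simp [hpr]) (by simp [hpr1]), hgetk, hgetj, hIr1,
      Finset.erase_insert_of_ne hij, Finset.erase_insert hjI]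
  have hI'r2 : Iset σ' (r + 2) = Iset σ (r + 2) := by
    rw [hσ', Iset_mul_swap σ (by simp [hpr, hpr1])]
  have hJ'r : Jset σ' r = insert k I := by
    rw [Jset_eq_erase σ' hn, hσ'0, hI'r1, Finset.erase_insert_of_ne (Ne.symm hik),
      Finset.erase_insert hiI]
  have hJ'r1 : Jset σ' (r + 1) = insert j (insert k I) := by
    rw [Jset_eq_erase σ' hn, hσ'0, hI'r2, hIr2, Finset.erase_insert hiJKI]
  -- path sums agree
  have hps : pathSum σ s - pathSum σ' s = 0 := by
    rw [hm σ, hm σ', hσ0, hσ'0]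
    ring
  rw [pathSum, pathSum, ← Finset.sum_sub_distrib] at hps
  have hsub : ({r, r + 1} : Finset ℕ) ⊆ Finset.Icc 1 (n - 1) := by
    intro t ht
    simp only [Finset.mem_insert, Finset.mem_singleton] at ht
    rw [Finset.mem_Icc]
    rcases ht with rfl | rfl <;> omega
  have hzero : ∀ t ∈ Finset.Icc 1 (n - 1), t ∉ ({r, r + 1} : Finset ℕ) →
      s (Iset σ t) (Jset σ t) - s (Iset σ' t) (Jset σ' t) = 0 := by
    intro t ht hnt
    simp only [Finset.mem_insert, Finset.mem_singleton] at hnt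
    push_neg at hnt
    have hIe : Iset σ' t = Iset σ t := by
      rw [hσ']
      exact Iset_mul_swap σ (by simp only [hpr, hpr1]; omega)
    have hJe : Jset σ' t = Jset σ t := by
      rw [Jset_eq_erase σ' hn, Jset_eq_erase σ hn, hσ'0, hσ0, hσ']
      rw [Iset_mul_swap σ (by simp only [hpr, hpr1]; omega)]
    rw [hIe, hJe]
    ring
  have hsum2 : ∑ t ∈ ({r, r + 1} : Finset ℕ),
      (s (Iset σ t) (Jset σ t) - s (Iset σ' t) (Jset σ' t)) = 0 := by
    rw [Finset.sum_subset hsub hzero]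
    exact hps
  rw [Finset.sum_pair (by omega : r ≠ r + 1)] at hsum2
  rw [hIr, hJr, hI'r, hJ'r, hIr1, hJr1, hI'r1, hJ'r1] at hsum2
  rw [Finset.insert_comm j i, Finset.insert_comm k j]
  linarith [hsum2]

lemma closePair_decomp {n : ℕ} {I J : Finset (Fin n)} (h : ClosePair I J) :
    ∃ (K : Finset (Fin n)) (i j : Fin n), i ≠ j ∧ i ∉ K ∧ j ∉ K ∧
      I = insert i K ∧ J = insert j K ∧ K = I ∩ J ∧ I ∪ J = insert i (insert j K) := by
  classical
  obtain ⟨h1, h2, h3⟩ := h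
  have hI : (I \ J).card = 1 := by
    have := Finset.card_inter_add_card_sdiff I J
    omega
  have hJ : (J \ I).card = 1 := by
    have := Finset.card_inter_add_card_sdiff J I
    rw [Finset.inter_comm] at this
    omega
  obtain ⟨i, hi⟩ := Finset.card_eq_one.mp hI
  obtain ⟨j, hj⟩ := Finset.card_eq_one.mp hJ
  have hiIJ : i ∈ I \ J := by rw [hi]; exact Finset.mem_singleton_self i
  have hjJI : j ∈ J \ I := by rw [hj]; exact Finset.mem_singleton_self j
  rw [Finset.mem_sdiff] at hiIJ hjJI
  refine ⟨I ∩ J, i, j, ?_, ?_, ?_, ?_, ?_, rfl, ?_⟩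
  · intro hij; exact hiIJ.2 (hij ▸ hjJI.1)
  · intro hK; exact hiIJ.2 (Finset.mem_of_mem_inter_right hK)
  · intro hK; exact hjJI.2 (Finset.mem_of_mem_inter_left hK)
  · ext w
    simp only [Finset.mem_insert, Finset.mem_inter]
    constructor
    · intro hw
      by_cases hwj : w ∈ J
      · exact Or.inr ⟨hw, hwj⟩
      · left
        have : w ∈ I \ J := Finset.mem_sdiff.mpr ⟨hw, hwj⟩
        rw [hi] at this; exact Finset.mem_singleton.mp this
    · rintro (rfl | ⟨hw, _⟩) <;> [exact hiIJ.1; exact hw]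
  · ext w
    simp only [Finset.mem_insert, Finset.mem_inter]
    constructor
    · intro hw
      by_cases hwi : w ∈ I
      · exact Or.inr ⟨hwi, hw⟩
      · left
        have : w ∈ J \ I := Finset.mem_sdiff.mpr ⟨hw, hwi⟩
        rw [hj] at this; exact Finset.mem_singleton.mp this
    · rintro (rfl | ⟨_, hw⟩) <;> [exact hjJI.1; exact hw]
  · ext w
    simp only [Finset.mem_union, Finset.mem_insert, Finset.mem_inter]
    constructor
    · rintro (hw | hw)
      · by_cases hwj : w ∈ J
        · exact Or.inr (Or.inr ⟨hw, hwj⟩)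
        · have : w ∈ I \ J := Finset.mem_sdiff.mpr ⟨hw, hwj⟩
          rw [hi] at this
          exact Or.inl (Finset.mem_singleton.mp this)
      · by_cases hwi : w ∈ I
        · exact Or.inr (Or.inr ⟨hwi, hw⟩)
        · have : w ∈ J \ I := Finset.mem_sdiff.mpr ⟨hw, hwi⟩
          rw [hj] at this
          exact Or.inr (Or.inl (Finset.mem_singleton.mp this))
    · rintro (rfl | rfl | ⟨hw, _⟩)
      · exact Or.inl hiIJ.1
      · exact Or.inr hjJI.1
      · exact Or.inl hw

/-- For a symmetric assignment `s` of reals to close pairs, the following are equivalent: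
(1) `s` is realized by a function `f : 2^[n] → ℝ` as its supermodularity values;
(2) there exist `m₁, …, m_n` such that `P_σ(s) = m_{σ₁}` for every permutation `σ`;
(3) `s_{I∪{i},I∪{j}} + s_{I∪{i,j},I∪{j,k}} = s_{I∪{i},I∪{k}} + s_{I∪{i,k},I∪{j,k}}`
for all distinct `i, j, k` and all `I ⊆ [n] ∖ {i,j,k}`. -/
theorem path_sum_characterization {n : ℕ} (hn : 0 < n)
    (s : Finset (Fin n) → Finset (Fin n) → ℝ)
    (hsymm : ∀ I J : Finset (Fin n), s I J = s J I) :
    List.TFAE [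
      (∃ f : Finset (Fin n) → ℝ, ∀ I J : Finset (Fin n), ClosePair I J →
        s I J = f (I ∩ J) + f (I ∪ J) - f I - f J),
      (∃ m : Fin n → ℝ, ∀ σ : Equiv.Perm (Fin n), pathSum σ s = m (σ ⟨0, hn⟩)),
      (∀ i j k : Fin n, ∀ I : Finset (Fin n), i ≠ j → i ≠ k → j ≠ k →
        i ∉ I → j ∉ I → k ∉ I →
        s (insert i I) (insert j I) + s (insert j (insert i I)) (insert k (insert j I)) =
        s (insert i I) (insert k I) + s (insert k (insert i I)) (insert k (insert j I)))] := by
  tfae_have 1 → 2 := by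
    rintro ⟨f, hf⟩
    refine ⟨fun x => f Finset.univ - f (Finset.univ.erase x) - f {x} + f ∅, fun σ => ?_⟩
    unfold pathSum
    have hterm : ∀ r ∈ Finset.Icc 1 (n-1), s (Iset σ r) (Jset σ r) =
        (fun t : ℕ => f (Iset σ (t+1)) - f (Jset σ t)) r
          - (fun t : ℕ => f (Iset σ (t+1)) - f (Jset σ t)) (r-1) := by
      intro r hr
      rw [Finset.mem_Icc] at hr
      obtain ⟨hr1, hr2⟩ := hr
      rw [hf _ _ (closePair_Iset_Jset σ hr1 hr2)]
      rw [Iset_inter_Jset σ hr1, Iset_union_Jset σ hr1]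
      simp only
      have : r - 1 + 1 = r := by omega
      rw [this]
      ring
    rw [Finset.sum_congr rfl hterm]
    set g : ℕ → ℝ := fun t => f (Iset σ (t+1)) - f (Jset σ t) with hg
    have hIcc : Finset.Icc 1 (n-1) = Finset.Ico 1 n := by
      rw [← Finset.Ico_add_one_right_eq_Icc]
      congr 1
      omega
    rw [hIcc, Finset.sum_Ico_eq_sum_range]
    have hre : ∀ i ∈ Finset.range (n - 1), g (1 + i) - g (1 + i - 1) = g (i+1) - g i := by
      intro i _
      rw [show 1 + i = i + 1 by omega, Nat.add_sub_cancel]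
    rw [Finset.sum_congr rfl hre, Finset.sum_range_sub g (n-1)]
    have hg0 : g 0 = f {σ ⟨0, hn⟩} - f ∅ := by
      rw [hg]
      simp only
      rw [Iset_one σ hn, Jset_zero]
    have hgn : g (n-1) = f Finset.univ - f (Finset.univ.erase (σ ⟨0, hn⟩)) := by
      rw [hg]
      simp only
      have h1 : n - 1 + 1 = n := by omega
      rw [h1, Iset_top σ le_rfl, Jset_eq_erase σ hn, h1, Iset_top σ le_rfl]
    rw [hg0, hgn]
    ring
  tfae_have 2 → 3 := fun h => two_to_three hn s h
  tfae_have 3 → 1 := by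
    intro hs
    refine ⟨bF s, fun I J hIJ => ?_⟩
    obtain ⟨K, i, j, hij, hiK, hjK, hI, hJ, hK, hU⟩ := closePair_decomp hIJ
    rw [← hK, hU, hI, hJ]
    exact bF_spec s hsymm hs K i j hij hiK hjK
  tfae_finish
end

section
/- A function f : 2^[n] → ℝ satisfies Tf = 0 if and only if f is modular; consequently the kernel of T is a linear subspace of dimension n + 1 and the image of T has dimension 2^n − n − 1. -/
/-- A function on subsets of `[n]` is modular if
`f (I ∩ J) + f (I ∪ J) = f I + f J` for all `I, J`. -/
def Modular {n : ℕ} (f : Finset (Fin n) → ℝ) : Prop :=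
  ∀ I J : Finset (Fin n), f (I ∩ J) + f (I ∪ J) = f I + f J

/-- The linear map `T` sending `f : 2^[n] → ℝ` to its vector of supermodularity
values `s = (s_{I,J})`, indexed by the close pairs `P_n`. -/
noncomputable def Tmap (n : ℕ) :
    (Finset (Fin n) → ℝ) →ₗ[ℝ]
      ({p : Finset (Fin n) × Finset (Fin n) // ClosePair p.1 p.2} → ℝ) where
  toFun f := fun p => f (p.1.1 ∩ p.1.2) + f (p.1.1 ∪ p.1.2) - f p.1.1 - f p.1.2
  map_add' f g := by funext p; simp only [Pi.add_apply]; ring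
  map_smul' c f := by funext p; simp only [Pi.smul_apply, RingHom.id_apply, smul_eq_mul]; ring

/-! Along a close pair `insert i K, insert j K` the identity `s = 0` says that adding `i`
changes `f` by the same amount whether or not `j` is present. By induction every increment
`f (insert i S) - f S` equals `f {i} - f ∅`, so `f S = f ∅ + ∑ i ∈ S, (f {i} - f ∅)`, and
such functions are modular. Hence `ker T` is the injective image of `ℝ × ℝⁿ`, and rank–nullity
on `ℝ^(2^n)` gives the dimension of the image. -/

namespace Finset

variable {α : Type*} [DecidableEq α]

theorem insert_inter_insert_of_ne {K : Finset α} {i j : α} (hij : i ≠ j) :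
    insert i K ∩ insert j K = K := by
  ext x
  simp only [mem_inter, mem_insert]
  grind

theorem insert_union_insert (K : Finset α) (i j : α) :
    insert i K ∪ insert j K = insert i (insert j K) := by
  ext x
  simp only [mem_union, mem_insert]
  tauto

end Finset

open Finset

theorem ClosePair.insert_insert {n : ℕ} {K : Finset (Fin n)} {i j : Fin n}
    (hij : i ≠ j) (hi : i ∉ K) (hj : j ∉ K) :
    ClosePair (insert i K) (insert j K) := by
  have hiK : (insert i K).card = K.card + 1 := card_insert_of_notMem hi
  have hjK : (insert j K).card = K.card + 1 := card_insert_of_notMem hj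
  have hijK : i ∉ insert j K := by simp [hij, hi]
  refine ⟨hiK.trans hjK.symm, ?_, ?_⟩
  · rw [insert_inter_insert_of_ne hij, hiK]
  · rw [insert_union_insert, card_insert_of_notMem hijK, hjK, hiK]

def ModularOnClosePairs {n : ℕ} (f : Finset (Fin n) → ℝ) : Prop :=
  ∀ I J : Finset (Fin n), ClosePair I J → f (I ∩ J) + f (I ∪ J) = f I + f J

theorem Modular.modularOnClosePairs {n : ℕ} {f : Finset (Fin n) → ℝ} (hf : Modular f) :
    ModularOnClosePairs f :=
  fun I J _ => hf I J

theorem tmap_eq_zero_iff_modularOnClosePairs {n : ℕ} (f : Finset (Fin n) → ℝ) :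
    Tmap n f = 0 ↔ ModularOnClosePairs f := by
  simp only [funext_iff, Tmap, LinearMap.coe_mk, AddHom.coe_mk, Pi.zero_apply, Subtype.forall,
    Prod.forall, ModularOnClosePairs, sub_sub, sub_eq_zero]

namespace ModularOnClosePairs

variable {n : ℕ} {f : Finset (Fin n) → ℝ}

theorem insert_eq (hf : ModularOnClosePairs f) (S : Finset (Fin n)) {i : Fin n} (hi : i ∉ S) :
    f (insert i S) = f S + (f {i} - f ∅) := by
  induction S using Finset.induction_on generalizing i with
  | empty => simp
  | @insert j s hj ih =>
    obtain ⟨hij, his⟩ : i ≠ j ∧ i ∉ s := by simpa using hi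
    have hpair := hf _ _ (ClosePair.insert_insert hij his hj)
    rw [insert_inter_insert_of_ne hij, insert_union_insert] at hpair
    linarith [ih his]

theorem eq_add_sum (hf : ModularOnClosePairs f) (S : Finset (Fin n)) :
    f S = f ∅ + ∑ i ∈ S, (f {i} - f ∅) := by
  induction S using Finset.induction_on with
  | empty => simp
  | @insert i s hi ih =>
    rw [hf.insert_eq s hi, ih, sum_insert hi]
    ring

end ModularOnClosePairs

theorem modular_const_add_sum {n : ℕ} (a : ℝ) (b : Fin n → ℝ) :
    Modular fun S => a + ∑ i ∈ S, b i := by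
  intro I J
  linarith [sum_union_inter (s₁ := I) (s₂ := J) (f := b)]

theorem ModularOnClosePairs.modular {n : ℕ} {f : Finset (Fin n) → ℝ}
    (hf : ModularOnClosePairs f) : Modular f := by
  have hrepr : f = fun S => f ∅ + ∑ i ∈ S, (f {i} - f ∅) := funext hf.eq_add_sum
  rw [hrepr]
  exact modular_const_add_sum _ _

theorem tmap_eq_zero_iff_modular {n : ℕ} (f : Finset (Fin n) → ℝ) :
    Tmap n f = 0 ↔ Modular f := by
  rw [tmap_eq_zero_iff_modularOnClosePairs]
  exact ⟨ModularOnClosePairs.modular, Modular.modularOnClosePairs⟩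

noncomputable def affineSetFunction (n : ℕ) :
    (ℝ × (Fin n → ℝ)) →ₗ[ℝ] (Finset (Fin n) → ℝ) where
  toFun p S := p.1 + ∑ i ∈ S, p.2 i
  map_add' p q := by
    funext S
    simp only [Prod.fst_add, Prod.snd_add, Pi.add_apply, sum_add_distrib]
    ring
  map_smul' c p := by
    funext S
    simp only [Prod.smul_fst, Prod.smul_snd, Pi.smul_apply, smul_eq_mul, RingHom.id_apply,
      mul_add, mul_sum]

theorem affineSetFunction_injective (n : ℕ) : Function.Injective (affineSetFunction n) := by
  intro p q hpq
  have h₀ : p.1 = q.1 := by simpa [affineSetFunction] using congrFun hpq ∅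
  have h₁ (i : Fin n) : p.2 i = q.2 i := by
    simpa [affineSetFunction, h₀] using congrFun hpq {i}
  exact Prod.ext h₀ (funext h₁)

theorem ker_tmap_eq_range_affineSetFunction (n : ℕ) :
    LinearMap.ker (Tmap n) = LinearMap.range (affineSetFunction n) := by
  ext f
  rw [LinearMap.mem_ker, tmap_eq_zero_iff_modular, LinearMap.mem_range]
  constructor
  · intro hf
    exact ⟨(f ∅, fun i => f {i} - f ∅), funext fun S => (hf.modularOnClosePairs.eq_add_sum S).symm⟩
  · rintro ⟨p, rfl⟩
    exact modular_const_add_sum p.1 p.2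

theorem kernel_and_image_of_T_general {n : ℕ} :
    (∀ f : Finset (Fin n) → ℝ, Tmap n f = 0 ↔ Modular f) ∧
    Module.finrank ℝ (LinearMap.ker (Tmap n)) = n + 1 ∧
    Module.finrank ℝ (LinearMap.range (Tmap n)) = 2 ^ n - n - 1 := by
  have hker : Module.finrank ℝ (LinearMap.ker (Tmap n)) = n + 1 := by
    rw [ker_tmap_eq_range_affineSetFunction,
      LinearMap.finrank_range_of_inj (affineSetFunction_injective n), Module.finrank_prod,
      Module.finrank_self, Module.finrank_fin_fun, add_comm]
  refine ⟨tmap_eq_zero_iff_modular, hker, ?_⟩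
  have hrank := (Tmap n).finrank_range_add_finrank_ker
  rw [hker, Module.finrank_fintype_fun_eq_card, Fintype.card_finset, Fintype.card_fin] at hrank
  omega

/-- `T f = 0` iff `f` is modular; consequently the kernel of `T` has dimension `n + 1`
and the image of `T` has dimension `2^n − n − 1`. -/
theorem kernel_and_image_of_T {n : ℕ} (hn : 1 ≤ n) :
    (∀ f : Finset (Fin n) → ℝ, Tmap n f = 0 ↔ Modular f) ∧
    Module.finrank ℝ (LinearMap.ker (Tmap n)) = n + 1 ∧
    Module.finrank ℝ (LinearMap.range (Tmap n)) = 2 ^ n - n - 1 :=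
  kernel_and_image_of_T_general
end

section
/- Let v be an irreducible balanced vector in ℝ^{2^[N]}, scaled so that its entries are nonnegative integers with greatest common divisor 1, and let m be its complexity. Then m ≤ max over A ∈ {0,1}^{N×N} of det A, and this maximum is at most (N+1)^{(N+1)/2}/2^N. -/
/-- A vector `v ∈ ℝ^{2^[N]}`, with coordinates indexed by subsets of `[N]`, is balanced
if it has nonnegative entries and there is `m` with `Σ_{I : i ∈ I} v_I = m` for every `i`. -/
def BalancedVec {N : ℕ} (v : Finset (Fin N) → ℝ) : Prop :=
  (∀ I : Finset (Fin N), 0 ≤ v I) ∧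
  ∃ m : ℝ, ∀ i : Fin N, ∑ I ∈ Finset.univ.filter (fun I : Finset (Fin N) => i ∈ I), v I = m

/-- A balanced vector is irreducible if whenever it is a sum of two balanced vectors,
both summands are real multiples of it. -/
def IrreducibleBalancedVec {N : ℕ} (v : Finset (Fin N) → ℝ) : Prop :=
  BalancedVec v ∧
  ∀ u₁ u₂ : Finset (Fin N) → ℝ, BalancedVec u₁ → BalancedVec u₂ → v = u₁ + u₂ →
    (∃ c : ℝ, u₁ = c • v) ∧ (∃ c : ℝ, u₂ = c • v)

section Auxiliary

open Matrix Finset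

lemma trace_eq_sum_eig {ι : Type*} [Fintype ι] [DecidableEq ι] {G : Matrix ι ι ℝ}
    (hH : G.IsHermitian) : G.trace = ∑ i, hH.eigenvalues i := by
  conv_lhs => rw [hH.spectral_theorem]
  rw [Unitary.conjStarAlgAut_apply]
  rw [Matrix.trace_mul_comm, ← Matrix.mul_assoc]
  have h1 : (star (hH.eigenvectorUnitary : Matrix ι ι ℝ)) * (hH.eigenvectorUnitary : Matrix ι ι ℝ) = 1 :=
    Unitary.coe_star_mul_self _
  rw [h1, Matrix.one_mul, Matrix.trace_diagonal]
  simp [RCLike.ofReal]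

/-- Hadamard-type bound: a PSD real matrix with constant trace bound -/
lemma det_sq_le {ι : Type*} [Fintype ι] [DecidableEq ι] (B : Matrix ι ι ℝ)
    (hB : ∀ i j, B i j = 1 ∨ B i j = -1) :
    B.det ^ 2 ≤ (Fintype.card ι : ℝ) ^ (Fintype.card ι) := by
  set n := Fintype.card ι with hn
  rcases isEmpty_or_nonempty ι with h | h
  · simp [Matrix.det_isEmpty, hn, Fintype.card_eq_zero]
  have hG : (B * Bᴴ).PosSemidef := Matrix.posSemidef_self_mul_conjTranspose B
  have hH := hG.1
  have hdiag : ∀ i, (B * Bᴴ) i i = n := by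
    intro i
    rw [Matrix.mul_apply]
    have : ∀ j, B i j * Bᴴ j i = 1 := by
      intro j
      rw [Matrix.conjTranspose_apply, star_trivial]
      rcases hB i j with h | h <;> rw [h] <;> ring
    simp only [this]
    simp [hn]
  have htr : (B * Bᴴ).trace = (n : ℝ) * n := by
    rw [Matrix.trace]
    simp only [Matrix.diag_apply, hdiag]
    simp [hn, mul_comm]
  have hsum : ∑ i, hH.eigenvalues i = (n : ℝ) * n := by
    rw [← trace_eq_sum_eig hH, htr]
  have hnn : ∀ i, 0 ≤ hH.eigenvalues i := hG.eigenvalues_nonneg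
  have hnpos : (0:ℝ) < n := by positivity -- n ≥ 1 since nonempty
  -- AM-GM
  have amgm := Real.geom_mean_le_arith_mean_weighted Finset.univ (fun _ => 1/(n:ℝ))
    hH.eigenvalues (fun i _ => by positivity)
    (by rw [Finset.sum_const, Finset.card_univ, nsmul_eq_mul, ← hn]; field_simp) (fun i _ => hnn i)
  -- amgm : ∏ λ_i ^ (1/n) ≤ ∑ (1/n) * λ_i = n
  have hrhs : ∑ i, (1/(n:ℝ)) * hH.eigenvalues i = n := by
    rw [← Finset.mul_sum, hsum]; field_simp
  rw [hrhs] at amgm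
  have hprod : B.det ^ 2 = ∏ i, hH.eigenvalues i := by
    have hdet : (B * Bᴴ).det = ∏ i, hH.eigenvalues i := by
      have := hH.det_eq_prod_eigenvalues
      simpa [RCLike.ofReal] using this
    rw [← hdet, Matrix.det_mul, Matrix.conjTranspose_eq_transpose_of_trivial, Matrix.det_transpose, sq]
  rw [hprod]
  calc ∏ i, hH.eigenvalues i = (∏ i, hH.eigenvalues i ^ (1/(n:ℝ))) ^ (n:ℕ) := by
        rw [← Finset.prod_pow]
        refine Finset.prod_congr rfl fun i _ => ?_
        rw [← Real.rpow_natCast (hH.eigenvalues i ^ (1/(n:ℝ))), ← Real.rpow_mul (hnn i)]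
        rw [one_div, inv_mul_cancel₀ (by positivity), Real.rpow_one]
    _ ≤ (n:ℝ) ^ (n:ℕ) := by
        apply pow_le_pow_left₀ (Finset.prod_nonneg fun i _ => Real.rpow_nonneg (hnn i) _) amgm

lemma hadamard01 {N : ℕ} (A : Matrix (Fin N) (Fin N) ℝ) (hA : ∀ i j, A i j = 0 ∨ A i j = 1) :
    A.det ≤ ((N : ℝ) + 1) ^ (((N : ℝ) + 1) / 2) / 2 ^ N := by
  classical
  set B : Matrix (Unit ⊕ Fin N) (Unit ⊕ Fin N) ℝ :=
    Matrix.fromBlocks 1 (Matrix.of fun _ _ => 1) (Matrix.of fun _ _ => -1) (Matrix.of fun i j => 2 * A i j - 1) with hBdef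
  have hBent : ∀ i j, B i j = 1 ∨ B i j = -1 := by
    rintro (i | i) (j | j)
    · left; simp [hBdef, Matrix.one_apply]
    · left; simp [hBdef]
    · right; simp [hBdef]
    · simp only [hBdef, Matrix.fromBlocks_apply₂₂, Matrix.of_apply]
      rcases hA i j with h | h <;> rw [h] <;> [right; left] <;> ring
  have hfact : B = Matrix.fromBlocks 1 0 (Matrix.of fun _ _ => -1) 1 *
      Matrix.fromBlocks 1 (Matrix.of fun _ _ => 1) 0 (Matrix.of fun i j => 2 * A i j) := by
    rw [Matrix.fromBlocks_multiply]
    ext (i | i) (j | j) <;>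
      simp [hBdef, Matrix.mul_apply, Matrix.one_apply, Fintype.sum_sum_type] <;> ring
  have hdetB : B.det = 2 ^ N * A.det := by
    rw [hfact, Matrix.det_mul, Matrix.det_fromBlocks_zero₁₂, Matrix.det_fromBlocks_zero₂₁]
    have h2A : (Matrix.of fun i j => 2 * A i j) = (2:ℝ) • A := by ext i j; simp
    rw [h2A, Matrix.det_smul]
    simp [Fintype.card_fin]
  have hsq := det_sq_le B hBent
  have hcardn : Fintype.card (Unit ⊕ Fin N) = N + 1 := by simp [add_comm]
  rw [hcardn] at hsq
  have h1 : B.det ≤ ((N:ℝ)+1) ^ (((N : ℝ) + 1) / 2) := by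
    have habs : |B.det| ≤ ((N:ℝ)+1) ^ (((N : ℝ) + 1) / 2) := by
      rw [← Real.sqrt_sq_eq_abs]
      have h3 : Real.sqrt (B.det ^ 2) ≤ Real.sqrt (((N:ℝ)+1) ^ (N+1 : ℕ)) := by
        apply Real.sqrt_le_sqrt
        exact_mod_cast hsq
      refine h3.trans_eq ?_
      rw [Real.sqrt_eq_rpow, ← Real.rpow_natCast ((N:ℝ)+1) (N+1),
        ← Real.rpow_mul (by positivity)]
      congr 1
      push_cast
      ring
    exact (le_abs_self _).trans habs
  rw [hdetB] at h1
  have h2N : (0:ℝ) < 2 ^ N := by positivity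
  rw [le_div_iff₀ h2N]
  linarith [h1]

lemma cols_indep {N : ℕ} (hN : 1 ≤ N) (w : Finset (Fin N) → ℕ)
    (hirr : IrreducibleBalancedVec (fun I => (w I : ℝ)))
    (m : ℕ) (hm : ∀ i : Fin N,
      ∑ I ∈ Finset.univ.filter (fun I : Finset (Fin N) => i ∈ I), w I = m)
    (hmpos : 0 < m) :
    LinearIndependent ℝ (fun x : {I : Finset (Fin N) // I ∈ Finset.univ.filter (fun I => w I ≠ 0)} =>
      (fun i : Fin N => if i ∈ (x : Finset (Fin N)) then (1:ℝ) else 0)) := by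
  classical
  set S := Finset.univ.filter (fun I : Finset (Fin N) => w I ≠ 0) with hS
  have hw1 : ∀ I ∈ S, 1 ≤ w I := by
    intro I hI
    rw [hS, Finset.mem_filter] at hI
    omega
  have hwS : ∀ I, I ∉ S → w I = 0 := by
    intro I hI
    rw [hS, Finset.mem_filter] at hI
    simpa using hI
  have hmR : ∀ i : Fin N, ∑ I ∈ Finset.univ.filter (fun I : Finset (Fin N) => i ∈ I),
      (w I : ℝ) = (m : ℝ) := by
    intro i
    rw [← Nat.cast_sum, hm i]
  rw [Fintype.linearIndependent_iff]
  intro c hc x₀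
  set xv : Finset (Fin N) → ℝ := fun I => if h : I ∈ S then c ⟨I, h⟩ else 0 with hxv
  have hxv0 : ∀ I, I ∉ S → xv I = 0 := fun I hI => dif_neg hI
  have hxsum : ∀ i : Fin N, ∑ I ∈ Finset.univ.filter (fun I : Finset (Fin N) => i ∈ I), xv I = 0 := by
    intro i
    have h1 : ∑ I ∈ Finset.univ.filter (fun I : Finset (Fin N) => i ∈ I), xv I
        = ∑ I ∈ Finset.univ, if i ∈ I then xv I else 0 := Finset.sum_filter _ _
    have h2 : ∑ I ∈ S, (if i ∈ I then xv I else 0) = ∑ I ∈ Finset.univ, if i ∈ I then xv I else 0 := by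
      apply Finset.sum_subset (Finset.subset_univ S)
      intro I _ hI
      rw [hxv0 I hI]
      simp
    have h3 : ∑ I ∈ S, (if i ∈ I then xv I else 0)
        = ∑ x : {I // I ∈ S}, c x * (if i ∈ (x : Finset (Fin N)) then (1:ℝ) else 0) := by
      rw [← Finset.sum_coe_sort S (fun I => if i ∈ I then xv I else 0)]
      apply Finset.sum_congr rfl
      intro x _
      rw [hxv]
      simp only [dif_pos x.2]
      by_cases h : i ∈ (x : Finset (Fin N)) <;> simp [h]
    have h4 := congrFun hc i
    simp only [Finset.sum_apply, Pi.smul_apply, smul_eq_mul, Pi.zero_apply] at h4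
    rw [h1, ← h2, h3]
    exact h4
  -- choose epsilon
  set T : ℝ := ∑ I : Finset (Fin N), |xv I| with hT
  have hT0 : 0 ≤ T := Finset.sum_nonneg fun I _ => abs_nonneg _
  set ε : ℝ := 1 / (1 + T) with hε
  have hεpos : 0 < ε := by rw [hε]; positivity
  have hbd : ∀ I ∈ S, |ε * xv I| ≤ (w I : ℝ) := by
    intro I hI
    have h1 : |xv I| ≤ T := Finset.single_le_sum (fun J (_ : J ∈ Finset.univ) => abs_nonneg (xv J))
      (Finset.mem_univ I)
    have h2 : (1 : ℝ) ≤ (w I : ℝ) := by exact_mod_cast hw1 I hI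
    rw [abs_mul, abs_of_pos hεpos, hε]
    rw [div_mul_eq_mul_div, one_mul, div_le_iff₀ (by positivity)]
    nlinarith
  have hbd' : ∀ I, |ε * xv I| ≤ (w I : ℝ) := by
    intro I
    by_cases hI : I ∈ S
    · exact hbd I hI
    · rw [hxv0 I hI]
      simp
  set u₁ : Finset (Fin N) → ℝ := fun I => ((w I : ℝ) + ε * xv I) / 2 with hu₁
  set u₂ : Finset (Fin N) → ℝ := fun I => ((w I : ℝ) - ε * xv I) / 2 with hu₂
  have hbal₁ : BalancedVec u₁ := by
    constructor
    · intro I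
      have := hbd' I
      have := abs_le.1 this
      rw [hu₁]
      dsimp only
      linarith [this.1]
    · refine ⟨(m : ℝ) / 2, fun i => ?_⟩
      rw [hu₁]
      dsimp only
      have : ∑ I ∈ Finset.univ.filter (fun I : Finset (Fin N) => i ∈ I), ((w I : ℝ) + ε * xv I)
          = (m : ℝ) + ε * 0 := by
        rw [Finset.sum_add_distrib, hmR i, ← Finset.mul_sum, hxsum i]
      rw [← Finset.sum_div, this]
      ring
  have hbal₂ : BalancedVec u₂ := by
    constructor
    · intro I
      have := abs_le.1 (hbd' I)
      rw [hu₂]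
      dsimp only
      linarith [this.2]
    · refine ⟨(m : ℝ) / 2, fun i => ?_⟩
      rw [hu₂]
      dsimp only
      have : ∑ I ∈ Finset.univ.filter (fun I : Finset (Fin N) => i ∈ I), ((w I : ℝ) - ε * xv I)
          = (m : ℝ) - ε * 0 := by
        rw [Finset.sum_sub_distrib, hmR i, ← Finset.mul_sum, hxsum i]
      rw [← Finset.sum_div, this]
      ring
  have hsplit : (fun I => (w I : ℝ)) = u₁ + u₂ := by
    funext I
    rw [Pi.add_apply, hu₁, hu₂]
    dsimp only
    ring
  obtain ⟨⟨c', hc'⟩, -⟩ := hirr.2 u₁ u₂ hbal₁ hbal₂ hsplit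
  -- u₁ = c' • v, so ε * xv I = (2c'-1) * w I
  have hxw : ∀ I, ε * xv I = (2 * c' - 1) * (w I : ℝ) := by
    intro I
    have := congrFun hc' I
    rw [hu₁] at this
    dsimp only [Pi.smul_apply, smul_eq_mul] at this
    linarith [this]
  -- sum over I containing i₀
  have i₀ : Fin N := ⟨0, hN⟩
  have hsum0 : (2 * c' - 1) * (m:ℝ) = 0 := by
    have h1 : ∑ I ∈ Finset.univ.filter (fun I : Finset (Fin N) => i₀ ∈ I), ε * xv I
        = (2 * c' - 1) * (m : ℝ) := by
      rw [Finset.sum_congr rfl (fun I _ => hxw I), ← Finset.mul_sum, hmR i₀]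
    rw [← h1, ← Finset.mul_sum, hxsum i₀, mul_zero]
  have hc'val : 2 * c' - 1 = 0 := by
    have hm0 : (m : ℝ) ≠ 0 := by positivity
    rcases mul_eq_zero.1 hsum0 with h | h
    · exact h
    · exact absurd h hm0
  have hxv_zero : ∀ I, xv I = 0 := by
    intro I
    have := hxw I
    rw [hc'val, zero_mul] at this
    exact (mul_eq_zero.1 this).resolve_left (ne_of_gt hεpos)
  have := hxv_zero x₀
  rw [hxv] at this
  simpa [dif_pos x₀.2] using this

section
variable {N : ℕ}
lemma exists_det_ge (hN : 1 ≤ N) (w : Finset (Fin N) → ℕ) (hgcd : Finset.univ.gcd w = 1)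
    (hind : LinearIndependent ℝ (fun x : {I : Finset (Fin N) // I ∈ Finset.univ.filter (fun I => w I ≠ 0)} =>
      (fun i : Fin N => if i ∈ (x : Finset (Fin N)) then (1:ℝ) else 0)))
    (m : ℕ) (hm : ∀ i : Fin N,
      ∑ I ∈ Finset.univ.filter (fun I : Finset (Fin N) => i ∈ I), w I = m)
    (hmpos : 0 < m) :
    ∃ A : Matrix (Fin N) (Fin N) ℝ, (∀ i j, A i j = 0 ∨ A i j = 1) ∧ (m : ℝ) ≤ A.det := by
  classical
  set S := Finset.univ.filter (fun I : Finset (Fin N) => w I ≠ 0) with hS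
  set s := S.card with hs
  set σ : Fin s ≃ {I // I ∈ S} := S.equivFin.symm with hσ
  set M : Matrix (Fin N) (Fin s) ℝ :=
    fun i l => if i ∈ ((σ l : {I // I ∈ S}) : Finset (Fin N)) then 1 else 0 with hM
  have hMcols : LinearIndependent ℝ (fun l : Fin s => Mᵀ l) := by
    have h := hind.comp σ σ.injective
    exact h
  have hsN : s ≤ N := by
    have := hMcols.fintype_card_le_finrank
    rwa [Fintype.card_fin, Module.finrank_fin_fun] at this
  -- rank
  have hrank : Module.finrank ℝ (Submodule.span ℝ (Set.range M)) = s := by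
    have h1 : Mᵀ.rank = s := by
      rw [Matrix.rank_eq_finrank_span_row]; exact (finrank_span_eq_card hMcols).trans (Fintype.card_fin _)
    have h2 : M.rank = s := by rw [← Matrix.rank_transpose]; exact h1
    have h3 : M.rank = Module.finrank ℝ (Submodule.span ℝ (Set.range M)) := Matrix.rank_eq_finrank_span_row M
    omega
  have hspan : Submodule.span ℝ (Set.range M) = ⊤ := by
    apply Submodule.eq_top_of_finrank_eq
    rw [hrank, Module.finrank_fin_fun]
  obtain ⟨b, hbsub, hbspan, hbind⟩ := exists_linearIndependent ℝ (Set.range M)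
  rw [hspan] at hbspan
  have hbfin : b.Finite := hbind.finite
  have : Fintype b := hbfin.fintype
  have basisB : Module.Basis b ℝ (Fin s → ℝ) := Module.Basis.mk hbind (by rw [Subtype.range_coe, hbspan])
  have hcardb : Fintype.card b = s := by
    have := Module.finrank_eq_card_basis basisB
    rw [Module.finrank_fin_fun] at this
    omega
  set eb : Fin s ≃ b := (Fintype.equivFinOfCardEq hcardb).symm with heb
  have hrows : ∀ k : Fin s, ∃ i : Fin N, M i = ((eb k : b) : Fin s → ℝ) := by
    intro k
    obtain ⟨i, hi⟩ := hbsub (eb k).2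
    exact ⟨i, hi⟩
  choose g hg using hrows
  set Qz : Matrix (Fin s) (Fin s) ℤ :=
    fun k l => if g k ∈ ((σ l : {I // I ∈ S}) : Finset (Fin N)) then 1 else 0 with hQz
  set Qr : Matrix (Fin s) (Fin s) ℝ := fun k l => ((Qz k l : ℤ) : ℝ) with hQr
  have hQrM : ∀ k, Qr k = M (g k) := by
    intro k
    funext l
    rw [hQr, hQz, hM]
    dsimp only
    split_ifs <;> simp
  have hQrows : (fun k : Fin s => Qr k) = (Subtype.val : b → (Fin s → ℝ)) ∘ eb := by
    funext k
    rw [hQrM k, hg k]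
    rfl
  have hQunit : IsUnit Qr := by
    rw [← Matrix.linearIndependent_rows_iff_isUnit]
    rw [show Qr.row = _ from hQrows]
    exact hbind.comp eb eb.injective
  have hdetQr : Qr.det = ((Qz.det : ℤ) : ℝ) :=
    (RingHom.map_det (Int.castRingHom ℝ) Qz).symm
  have hdetz : Qz.det ≠ 0 := by
    intro h
    have := (Matrix.isUnit_iff_isUnit_det Qr).1 hQunit
    rw [hdetQr, h] at this
    simp at this
  -- mulVec identity over ℤ
  set wz : Fin s → ℤ := fun l => (w ((σ l : {I // I ∈ S}) : Finset (Fin N)) : ℤ) with hwz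
  have hwS : ∀ I, I ∉ S → w I = 0 := by
    intro I hI
    rw [hS, Finset.mem_filter] at hI
    simpa using hI
  have hmulnat : ∀ k : Fin s, ∑ l : Fin s,
      (if g k ∈ ((σ l : {I // I ∈ S}) : Finset (Fin N)) then 1 else 0) * w ((σ l : {I // I ∈ S}) : Finset (Fin N)) = m := by
    intro k
    have e1 : ∑ l : Fin s, (if g k ∈ ((σ l : {I // I ∈ S}) : Finset (Fin N)) then 1 else 0) * w ((σ l : {I // I ∈ S}) : Finset (Fin N))
        = ∑ x : {I // I ∈ S}, (if g k ∈ (x : Finset (Fin N)) then 1 else 0) * w (x : Finset (Fin N)) :=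
      Fintype.sum_equiv σ _ _ (fun l => rfl)
    have e2 : ∑ x : {I // I ∈ S}, (if g k ∈ (x : Finset (Fin N)) then 1 else 0) * w (x : Finset (Fin N))
        = ∑ I ∈ S, (if g k ∈ I then 1 else 0) * w I :=
      Finset.sum_coe_sort S (fun I => (if g k ∈ I then 1 else 0) * w I)
    have e3 : ∑ I ∈ S, (if g k ∈ I then 1 else 0) * w I
        = ∑ I ∈ Finset.univ, (if g k ∈ I then 1 else 0) * w I := by
      apply Finset.sum_subset (Finset.subset_univ S)
      intro I _ hI
      rw [hwS I hI, mul_zero]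
    have e4 : ∑ I ∈ Finset.univ, (if g k ∈ I then 1 else 0) * w I
        = ∑ I ∈ Finset.univ.filter (fun I : Finset (Fin N) => g k ∈ I), w I := by
      rw [Finset.sum_filter]
      apply Finset.sum_congr rfl
      intro I _
      split_ifs <;> simp
    rw [e1, e2, e3, e4, hm (g k)]
  have hmul : Qz.mulVec wz = fun _ => (m : ℤ) := by
    funext k
    rw [Matrix.mulVec, dotProduct]
    have := hmulnat k
    rw [hQz, hwz]
    dsimp only
    push_cast [← this]
    apply Finset.sum_congr rfl
    intro l _
    split_ifs <;> simp
  -- divisibility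
  have hdvd : ∀ l : Fin s, (m : ℤ) ∣ Qz.det * wz l := by
    have key : Qz.adjugate.mulVec (Qz.mulVec wz) = Qz.det • wz := by
      rw [Matrix.mulVec_mulVec, Matrix.adjugate_mul, Matrix.smul_mulVec, Matrix.one_mulVec]
    intro l
    have h1 : Qz.det * wz l = (Qz.adjugate.mulVec (fun _ => (m : ℤ))) l := by
      rw [← hmul, key, Pi.smul_apply, smul_eq_mul]
    rw [h1, Matrix.mulVec, dotProduct]
    apply Finset.dvd_sum
    intro k _
    exact dvd_mul_left _ _
  have hdvdnat : ∀ l : Fin s, m ∣ Qz.det.natAbs * w ((σ l : {I // I ∈ S}) : Finset (Fin N)) := by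
    intro l
    have h := hdvd l
    have h2 : ((m:ℤ)).natAbs ∣ (Qz.det * wz l).natAbs := Int.natAbs_dvd_natAbs.2 h
    rwa [Int.natAbs_mul, Int.natAbs_natCast, hwz, Int.natAbs_natCast] at h2
  have hgcdS : S.gcd w = 1 := by
    rw [hS, ← Finset.gcd_eq_gcd_filter_ne_zero]
    exact hgcd
  have himg : Finset.univ.image (fun l : Fin s => ((σ l : {I // I ∈ S}) : Finset (Fin N))) = S := by
    ext I
    simp only [Finset.mem_image, Finset.mem_univ, true_and]
    constructor
    · rintro ⟨l, rfl⟩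
      exact (σ l).2
    · intro hI
      exact ⟨σ.symm ⟨I, hI⟩, by simp⟩
  have hgcds : Finset.univ.gcd (fun l : Fin s => w ((σ l : {I // I ∈ S}) : Finset (Fin N))) = 1 := by
    have hcomp : (fun l : Fin s => w ((σ l : {I // I ∈ S}) : Finset (Fin N)))
        = w ∘ (fun l : Fin s => ((σ l : {I // I ∈ S}) : Finset (Fin N))) := rfl
    rw [hcomp, ← Finset.gcd_image, himg]
    exact hgcdS
  have hmdvd : m ∣ Qz.det.natAbs := by
    have h1 : m ∣ Finset.univ.gcd (fun l : Fin s => Qz.det.natAbs * w ((σ l : {I // I ∈ S}) : Finset (Fin N))) :=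
      Finset.dvd_gcd (fun l _ => hdvdnat l)
    rwa [Finset.gcd_mul_left, hgcds, mul_one, normalize_eq] at h1
  have hmle : m ≤ Qz.det.natAbs := Nat.le_of_dvd (Int.natAbs_pos.2 hdetz) hmdvd
  -- sign fixing : get a 0/1 ℝ matrix Q with det = natAbs
  have hQfix : ∃ Q : Matrix (Fin s) (Fin s) ℝ, (∀ k l, Q k l = 0 ∨ Q k l = 1) ∧
      Q.det = (Qz.det.natAbs : ℝ) := by
    have hent : ∀ k l, Qz k l = 0 ∨ Qz k l = 1 := by
      intro k l
      rw [hQz]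
      dsimp only
      split_ifs <;> simp
    rcases le_or_gt 0 Qz.det with hpos | hneg
    · refine ⟨Qr, ?_, ?_⟩
      · intro k l
        rcases hent k l with h | h
        · left
          show ((Qz k l : ℤ) : ℝ) = 0
          rw [h]; norm_num
        · right
          show ((Qz k l : ℤ) : ℝ) = 1
          rw [h]; norm_num
      · rw [hdetQr]
        rw [Nat.cast_natAbs, abs_of_nonneg hpos]
    · -- s ≥ 2
      have hs2 : 2 ≤ s := by
        by_contra hcon
        push_neg at hcon
        rcases isEmpty_or_nonempty (Fin s) with hE | hNE
        · rw [Matrix.det_isEmpty] at hneg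
          omega
        · have hsub : Subsingleton (Fin s) := by
            constructor
            intro a b
            have ha := a.2
            have hb := b.2
            apply Fin.ext
            omega
          obtain ⟨k⟩ := hNE
          have hdd := Matrix.det_eq_elem_of_subsingleton Qz k
          rcases hent k k with h | h <;> omega
      set τ : Equiv.Perm (Fin s) := Equiv.swap ⟨0, by omega⟩ ⟨1, by omega⟩ with hτ
      set Qz' := Qz.submatrix τ id with hQz'
      have hdet' : Qz'.det = -Qz.det := by
        rw [hQz', Matrix.det_permute, Equiv.Perm.sign_swap (by simp [Fin.ext_iff])]
        simp
      refine ⟨fun k l => ((Qz' k l : ℤ) : ℝ), ?_, ?_⟩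
      · intro k l
        rcases hent (τ k) l with h | h
        · left
          show ((Qz (τ k) l : ℤ) : ℝ) = 0
          rw [h]; norm_num
        · right
          show ((Qz (τ k) l : ℤ) : ℝ) = 1
          rw [h]; norm_num
      · have hmm : (fun k l => ((Qz' k l : ℤ) : ℝ)) = (Int.castRingHom ℝ).mapMatrix Qz' := rfl
        rw [hmm, ← RingHom.map_det, hdet']
        show ((-Qz.det : ℤ) : ℝ) = ((Qz.det.natAbs : ℕ) : ℝ)
        rw [Nat.cast_natAbs, Int.cast_neg, abs_of_nonpos hneg.le]
        push_cast
        ring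
    -- done
  obtain ⟨Q, hQent, hQdet⟩ := hQfix
  -- assemble N×N matrix
  have hNs : s + (N - s) = N := by omega
  set e : Fin s ⊕ Fin (N - s) ≃ Fin N := finSumFinEquiv.trans (finCongr hNs) with he
  set A : Matrix (Fin N) (Fin N) ℝ :=
    (Matrix.fromBlocks Q 0 0 (1 : Matrix (Fin (N - s)) (Fin (N - s)) ℝ)).submatrix e.symm e.symm with hA
  refine ⟨A, ?_, ?_⟩
  · intro i j
    rw [hA]
    rcases he' : e.symm i with i' | i' <;> rcases hej : e.symm j with j' | j' <;>
      simp only [Matrix.submatrix_apply, he', hej, Matrix.fromBlocks_apply₁₁,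
        Matrix.fromBlocks_apply₁₂, Matrix.fromBlocks_apply₂₁, Matrix.fromBlocks_apply₂₂]
    · exact hQent i' j'
    · left; rfl
    · left; rfl
    · rw [Matrix.one_apply]
      split_ifs <;> simp
  · have : A.det = Q.det := by
      rw [hA, Matrix.det_submatrix_equiv_self, Matrix.det_fromBlocks_zero₂₁, Matrix.det_one, mul_one]
    rw [this, hQdet]
    exact_mod_cast hmle
end

end Auxiliary

/-- Let `v` be an irreducible balanced vector with nonnegative integer entries `w` whose
greatest common divisor is `1`, and let `m` be its complexity (the common value of
`Σ_{I : i ∈ I} v_I`).  Then `m ≤ max_{A ∈ {0,1}^{N×N}} det A ≤ (N+1)^{(N+1)/2}/2^N`. -/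
theorem complexity_of_irreducible_balanced_vector {N : ℕ} (hN : 1 ≤ N)
    (w : Finset (Fin N) → ℕ) (hgcd : Finset.univ.gcd w = 1)
    (hirr : IrreducibleBalancedVec (fun I => (w I : ℝ)))
    (m : ℕ) (hm : ∀ i : Fin N,
      ∑ I ∈ Finset.univ.filter (fun I : Finset (Fin N) => i ∈ I), w I = m) :
    (∃ A : Matrix (Fin N) (Fin N) ℝ, (∀ i j, A i j = 0 ∨ A i j = 1) ∧ (m : ℝ) ≤ A.det) ∧
    (∀ A : Matrix (Fin N) (Fin N) ℝ, (∀ i j, A i j = 0 ∨ A i j = 1) →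
      A.det ≤ ((N : ℝ) + 1) ^ (((N : ℝ) + 1) / 2) / 2 ^ N) := by
  constructor
  · rcases Nat.eq_zero_or_pos m with hm0 | hmpos
    · refine ⟨1, fun i j => ?_, ?_⟩
      · rw [Matrix.one_apply]
        split_ifs
        · right; rfl
        · left; rfl
      · rw [Matrix.det_one, hm0]
        norm_num
    · exact exists_det_ge hN w hgcd (cols_indep hN w hirr m hm hmpos) m hm hmpos
  · intro A hA
    exact hadamard01 A hA
end

section
/- Let c(N) denote the number of irreducible balanced vectors in ℝ^{2^[N]} whose entries are nonnegative integers with greatest common divisor 1 (equivalently, the number of irreducible balanced vectors up to positive scaling). Then c(N) ≤ C(2^N, N), the binomial coefficient. -/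
/-- `c N` is the number of irreducible balanced vectors in `ℝ^{2^[N]}` whose entries are
nonnegative integers with greatest common divisor `1` (equivalently, the number of
irreducible balanced vectors up to positive scaling). -/
noncomputable def irreducibleBalancedCount (N : ℕ) : ℕ :=
  Nat.card {w : Finset (Fin N) → ℕ //
    Finset.univ.gcd w = 1 ∧ IrreducibleBalancedVec (fun I => (w I : ℝ))}

open Finset Module

private lemma aux_false {N : ℕ} (hN : 1 ≤ N) {v : Finset (Fin N) → ℝ}
    (hv : IrreducibleBalancedVec v)
    (s : Finset (Finset (Fin N)))
    (hcard : N < #s)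
    (hvpos : ∀ I ∈ s, 0 < v I)
    (hvzero : ∀ I, I ∉ s → v I = 0)
    (t : ℝ)   -- the common row sum of the extension xh
    (x : ↥s → ℝ)
    (hxspan : x ∉ Submodule.span ℝ {(fun J => v J.1 : ↥s → ℝ)})
    (hrow : ∀ i : Fin N, (∑ I ∈ Finset.univ.filter (fun I : Finset (Fin N) => i ∈ I),
        (if h : I ∈ s then x ⟨I, h⟩ else 0)) = t) : False := by
  classical
  set xh : Finset (Fin N) → ℝ := fun I => if h : I ∈ s then x ⟨I, h⟩ else 0 with hxh
  have hsne : s.Nonempty := Finset.card_pos.1 (by omega)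
  set δ : ℝ := s.inf' hsne (fun I => v I / (|xh I| + 1)) with hδ
  have hδpos : 0 < δ := by
    rw [hδ, Finset.lt_inf'_iff]
    intro I hI
    exact div_pos (hvpos I hI) (by positivity)
  have hbound : ∀ I, |δ * xh I| ≤ v I := by
    intro I
    by_cases hI : I ∈ s
    · have h1 : δ ≤ v I / (|xh I| + 1) := Finset.inf'_le _ hI
      have h2 : δ * (|xh I| + 1) ≤ v I := by
        rw [← le_div_iff₀ (by positivity)]; exact h1
      have h3 : δ * |xh I| ≤ δ * (|xh I| + 1) :=
        mul_le_mul_of_nonneg_left (by linarith) hδpos.le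
      rw [abs_mul, abs_of_pos hδpos]
      linarith
    · simp [hxh, dif_neg hI, hvzero I hI]
  obtain ⟨m, hm⟩ := hv.1.2
  set u₁ : Finset (Fin N) → ℝ := fun I => (v I + δ * xh I) / 2 with hu₁
  set u₂ : Finset (Fin N) → ℝ := fun I => (v I - δ * xh I) / 2 with hu₂
  have hrowsum : ∀ (i : Fin N) (a b : ℝ),
      ∑ I ∈ Finset.univ.filter (fun I : Finset (Fin N) => i ∈ I),
        (a * v I + b * xh I) = a * m + b * t := by
    intro i a b
    rw [Finset.sum_add_distrib, ← Finset.mul_sum, ← Finset.mul_sum, hm i, hrow i]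
  have hb₁ : BalancedVec u₁ := by
    constructor
    · intro I
      have := hbound I
      have := abs_le.1 this
      rw [hu₁]
      dsimp only
      linarith [this.1, this.2]
    · refine ⟨(m + δ * t) / 2, fun i => ?_⟩
      have := hrowsum i (1/2) (δ/2)
      calc ∑ I ∈ Finset.univ.filter (fun I : Finset (Fin N) => i ∈ I), u₁ I
          = ∑ I ∈ Finset.univ.filter (fun I : Finset (Fin N) => i ∈ I),
              ((1/2) * v I + (δ/2) * xh I) := by
            refine Finset.sum_congr rfl fun I _ => ?_; rw [hu₁]; ring
        _ = (1/2) * m + (δ/2) * t := this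
        _ = (m + δ * t) / 2 := by ring
  have hb₂ : BalancedVec u₂ := by
    constructor
    · intro I
      have := abs_le.1 (hbound I)
      rw [hu₂]; dsimp only
      linarith [this.1, this.2]
    · refine ⟨(m - δ * t) / 2, fun i => ?_⟩
      have := hrowsum i (1/2) (-(δ/2))
      calc ∑ I ∈ Finset.univ.filter (fun I : Finset (Fin N) => i ∈ I), u₂ I
          = ∑ I ∈ Finset.univ.filter (fun I : Finset (Fin N) => i ∈ I),
              ((1/2) * v I + (-(δ/2)) * xh I) := by
            refine Finset.sum_congr rfl fun I _ => ?_; rw [hu₂]; ring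
        _ = (1/2) * m + (-(δ/2)) * t := this
        _ = (m - δ * t) / 2 := by ring
  have hsum : v = u₁ + u₂ := by
    funext I; simp only [Pi.add_apply, hu₁, hu₂]; ring
  obtain ⟨⟨c, hc⟩, -⟩ := hv.2 u₁ u₂ hb₁ hb₂ hsum
  apply hxspan
  rw [Submodule.mem_span_singleton]
  refine ⟨(2 * c - 1) / δ, ?_⟩
  funext J
  have hcJ := congrFun hc J.1
  simp only [Pi.smul_apply, smul_eq_mul, hu₁] at hcJ
  have hxJ : xh J.1 = x J := by rw [hxh]; simp [J.2]
  rw [hxJ] at hcJ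
  simp only [Pi.smul_apply, smul_eq_mul]
  field_simp
  linarith

lemma aux_support_card_le {N : ℕ} (hN : 1 ≤ N) {v : Finset (Fin N) → ℝ}
    (hv : IrreducibleBalancedVec v) :
    #(Finset.univ.filter (fun I => v I ≠ 0)) ≤ N := by
  classical
  by_contra hcard
  push_neg at hcard
  set s : Finset (Finset (Fin N)) := Finset.univ.filter (fun I => v I ≠ 0) with hs
  have hvpos : ∀ I ∈ s, 0 < v I := fun I hI =>
    lt_of_le_of_ne (hv.1.1 I) (Ne.symm ((mem_filter.1 hI).2))
  have hvzero : ∀ I, I ∉ s → v I = 0 := by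
    intro I hI
    by_contra h
    exact hI (mem_filter.2 ⟨mem_univ I, h⟩)
  let i0 : Fin N := ⟨0, hN⟩
  -- the linear maps
  let A : Fin N → ((↥s → ℝ) →ₗ[ℝ] ℝ) := fun i =>
    ∑ J ∈ Finset.univ.filter (fun J : ↥s => i ∈ J.1), LinearMap.proj J
  have hA : ∀ i (y : ↥s → ℝ), A i y = ∑ J ∈ Finset.univ.filter (fun J : ↥s => i ∈ J.1), y J := by
    intro i y
    simp [A, LinearMap.sum_apply]
  let L : (↥s → ℝ) →ₗ[ℝ] (Fin N → ℝ) := LinearMap.pi (fun i => A i - A i0)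
  -- extension of a vector on s by zero, and its row sums
  have hext : ∀ (y : ↥s → ℝ) (i : Fin N),
      (∑ I ∈ Finset.univ.filter (fun I : Finset (Fin N) => i ∈ I),
        (if h : I ∈ s then y ⟨I, h⟩ else 0)) = A i y := by
    intro y i
    rw [hA, Finset.sum_filter, Finset.sum_filter]
    have h1 : ∑ I : Finset (Fin N), (if i ∈ I then (if h : I ∈ s then y ⟨I, h⟩ else 0) else 0)
        = ∑ I ∈ s, (if i ∈ I then (if h : I ∈ s then y ⟨I, h⟩ else 0) else 0) := by
      refine (Finset.sum_subset (subset_univ s) ?_).symm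
      intro I _ hIs
      simp [dif_neg hIs]
    rw [h1, ← Finset.sum_attach s (fun I => if i ∈ I then (if h : I ∈ s then y ⟨I, h⟩ else 0) else 0)]
    rw [univ_eq_attach]
    refine Finset.sum_congr rfl fun J _ => ?_
    simp [J.2]
  -- rank computations
  have hrange : LinearMap.range L ≤ LinearMap.ker (LinearMap.proj i0 : (Fin N → ℝ) →ₗ[ℝ] ℝ) := by
    rintro _ ⟨x, rfl⟩
    simp [L, LinearMap.mem_ker]
  have hsurj : Function.Surjective (LinearMap.proj i0 : (Fin N → ℝ) →ₗ[ℝ] ℝ) := by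
    intro r; exact ⟨fun _ => r, rfl⟩
  have e3 : finrank ℝ (LinearMap.range (LinearMap.proj i0 : (Fin N → ℝ) →ₗ[ℝ] ℝ))
      + finrank ℝ (LinearMap.ker (LinearMap.proj i0 : (Fin N → ℝ) →ₗ[ℝ] ℝ)) = N := by
    rw [LinearMap.finrank_range_add_finrank_ker]
    simp [finrank_fintype_fun_eq_card]
  have e4 : finrank ℝ (LinearMap.range (LinearMap.proj i0 : (Fin N → ℝ) →ₗ[ℝ] ℝ)) = 1 := by
    rw [LinearMap.range_eq_top.2 hsurj]
    simp
  have e1 : finrank ℝ (LinearMap.range L) + finrank ℝ (LinearMap.ker L) = #s := by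
    rw [LinearMap.finrank_range_add_finrank_ker]
    simp [finrank_fintype_fun_eq_card]
  have e2 : finrank ℝ (LinearMap.range L)
      ≤ finrank ℝ (LinearMap.ker (LinearMap.proj i0 : (Fin N → ℝ) →ₗ[ℝ] ℝ)) :=
    Submodule.finrank_mono hrange
  -- there is an element of the kernel outside the span of v|s
  let vs : ↥s → ℝ := fun J => v J.1
  have hspan : finrank ℝ (Submodule.span ℝ {vs}) ≤ 1 := by
    have := finrank_span_le_card (R := ℝ) ({vs} : Set (↥s → ℝ))
    simpa using this
  have hker2 : 2 ≤ finrank ℝ (LinearMap.ker L) := by omega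
  have hexists : ∃ x ∈ LinearMap.ker L, x ∉ Submodule.span ℝ {vs} := by
    by_contra h
    push_neg at h
    have hle : LinearMap.ker L ≤ Submodule.span ℝ {vs} := fun x hx => h x hx
    have := Submodule.finrank_mono hle
    omega
  obtain ⟨x, hxker, hxspan⟩ := hexists
  have hLx : ∀ i : Fin N, A i x = A i0 x := by
    intro i
    have := congrFun (LinearMap.mem_ker.1 hxker) i
    simpa [L, sub_eq_zero] using this
  have hrow : ∀ i : Fin N, (∑ I ∈ Finset.univ.filter (fun I : Finset (Fin N) => i ∈ I),
      (if h : I ∈ s then x ⟨I, h⟩ else 0)) = A i0 x := by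
    intro i
    rw [hext x i, hLx i]
  exact aux_false hN hv s hcard hvpos hvzero (A i0 x) x hxspan hrow

lemma aux_eq_of_supp_subset {N : ℕ} {w₁ w₂ : Finset (Fin N) → ℕ}
    (hg₁ : Finset.univ.gcd w₁ = 1) (hg₂ : Finset.univ.gcd w₂ = 1)
    (hI₂ : IrreducibleBalancedVec (fun I => (w₂ I : ℝ)))
    (hB₁ : BalancedVec (fun I => (w₁ I : ℝ)))
    (hsub : ∀ I, w₁ I ≠ 0 → w₂ I ≠ 0) : w₁ = w₂ := by
  classical
  set u : Finset (Fin N) → ℝ := fun I => (w₁ I : ℝ) with hu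
  set v : Finset (Fin N) → ℝ := fun I => (w₂ I : ℝ) with hv
  -- w₁ has a nonzero entry
  have hne : ∃ I, w₁ I ≠ 0 := by
    by_contra h
    push_neg at h
    have : Finset.univ.gcd w₁ = 0 := Finset.gcd_eq_zero_iff.2 fun i _ => h i
    rw [hg₁] at this
    exact one_ne_zero this
  obtain ⟨I₀, hI₀⟩ := hne
  set s : Finset (Finset (Fin N)) := Finset.univ.filter (fun I => w₁ I ≠ 0) with hs
  have hsne : s.Nonempty := ⟨I₀, by simp [hs, hI₀]⟩
  set δ : ℝ := s.inf' hsne (fun I => v I / (u I + 1)) with hδ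
  have hδpos : 0 < δ := by
    rw [hδ, Finset.lt_inf'_iff]
    intro I hI
    have h2 : w₂ I ≠ 0 := hsub I (by simpa [hs] using hI)
    have : (0:ℝ) < w₂ I := by exact_mod_cast Nat.pos_of_ne_zero h2
    exact div_pos this (by positivity)
  have hbound : ∀ I, δ * u I ≤ v I := by
    intro I
    by_cases hI : w₁ I ≠ 0
    · have hIs : I ∈ s := by simp [hs, hI]
      have h1 : δ ≤ v I / (u I + 1) := Finset.inf'_le _ hIs
      have hpos : (0:ℝ) ≤ u I := by positivity
      have h2 : δ * (u I + 1) ≤ v I := by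
        rw [← le_div_iff₀ (by positivity)]; exact h1
      nlinarith
    · push_neg at hI
      have : u I = 0 := by simp [hu, hI]
      rw [this, mul_zero]
      positivity
  -- decompose v = δ•u + (v - δ•u)
  obtain ⟨m₁, hm₁⟩ := hB₁.2
  obtain ⟨m₂, hm₂⟩ := hI₂.1.2
  set g₁ : Finset (Fin N) → ℝ := fun I => δ * u I with hg1
  set g₂ : Finset (Fin N) → ℝ := fun I => v I - δ * u I with hg2
  have hbg₁ : BalancedVec g₁ := by
    refine ⟨fun I => by simpa [hg1] using mul_nonneg hδpos.le (by positivity : (0:ℝ) ≤ u I),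
      ⟨δ * m₁, fun i => ?_⟩⟩
    rw [show (∑ I ∈ Finset.univ.filter (fun I : Finset (Fin N) => i ∈ I), g₁ I)
      = δ * ∑ I ∈ Finset.univ.filter (fun I : Finset (Fin N) => i ∈ I), u I from by
        rw [Finset.mul_sum], hm₁ i]
  have hbg₂ : BalancedVec g₂ := by
    refine ⟨fun I => by simpa [hg2] using sub_nonneg.2 (hbound I), ⟨m₂ - δ * m₁, fun i => ?_⟩⟩
    rw [show (∑ I ∈ Finset.univ.filter (fun I : Finset (Fin N) => i ∈ I), g₂ I)
      = (∑ I ∈ Finset.univ.filter (fun I : Finset (Fin N) => i ∈ I), v I)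
        - δ * ∑ I ∈ Finset.univ.filter (fun I : Finset (Fin N) => i ∈ I), u I from by
        rw [Finset.sum_sub_distrib, Finset.mul_sum], hm₁ i, hm₂ i]
  have hsum : v = g₁ + g₂ := by funext I; simp [hg1, hg2]
  obtain ⟨⟨c, hc⟩, -⟩ := hI₂.2 g₁ g₂ hbg₁ hbg₂ hsum
  -- so δ * u I = c * v I for all I
  have hprop : ∀ I, δ * u I = c * v I := fun I => by
    have := congrFun hc I; simpa [hg1] using this
  -- at I₀ : u I₀ > 0, hence c > 0 and v I₀ > 0
  have huI₀ : (0:ℝ) < u I₀ := by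
    simp only [hu]; exact_mod_cast Nat.pos_of_ne_zero hI₀
  have hw₂I₀ : w₂ I₀ ≠ 0 := hsub I₀ hI₀
  have hvI₀ : (0:ℝ) < v I₀ := by
    simp only [hv]; exact_mod_cast Nat.pos_of_ne_zero hw₂I₀
  -- w₁ I * w₂ I₀ = w₂ I * w₁ I₀ for all I
  have hcross : ∀ I, w₁ I * w₂ I₀ = w₂ I * w₁ I₀ := by
    intro I
    have h1 := hprop I
    have h2 := hprop I₀
    have hδne : δ ≠ 0 := hδpos.ne'
    have key : δ * (u I * v I₀) = δ * (v I * u I₀) := by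
      calc δ * (u I * v I₀) = (δ * u I) * v I₀ := by ring
        _ = (c * v I) * v I₀ := by rw [h1]
        _ = v I * (c * v I₀) := by ring
        _ = v I * (δ * u I₀) := by rw [h2]
        _ = δ * (v I * u I₀) := by ring
    have : u I * v I₀ = v I * u I₀ := mul_left_cancel₀ hδne key
    simp only [hu, hv] at this
    exact_mod_cast this
  -- gcd argument
  have hgcd1 : Finset.univ.gcd (fun I => w₁ I * w₂ I₀) = w₂ I₀ := by
    rw [show (fun I => w₁ I * w₂ I₀) = (fun I => w₂ I₀ * w₁ I) from by funext I; ring,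
      Finset.gcd_mul_left, hg₁]
    simp
  have hgcd2 : Finset.univ.gcd (fun I => w₂ I * w₁ I₀) = w₁ I₀ := by
    rw [show (fun I => w₂ I * w₁ I₀) = (fun I => w₁ I₀ * w₂ I) from by funext I; ring,
      Finset.gcd_mul_left, hg₂]
    simp
  have heq : w₂ I₀ = w₁ I₀ := by
    rw [← hgcd1, ← hgcd2]
    exact Finset.gcd_congr rfl fun I _ => hcross I
  funext I
  have := hcross I
  rw [heq] at this
  exact Nat.eq_of_mul_eq_mul_right (Nat.pos_of_ne_zero hI₀) this

lemma aux_choose_mono_half {M r n : ℕ} (h1 : r ≤ n) (h2 : n ≤ M / 2) :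
    M.choose r ≤ M.choose n := by
  induction n with
  | zero => simp_all
  | succ k ih =>
    rcases Nat.lt_or_ge r (k+1) with h | h
    · have hk : k ≤ M / 2 := by omega
      exact (ih (by omega) hk).trans (Nat.choose_le_succ_of_lt_half_left (by omega))
    · have : r = k + 1 := by omega
      rw [this]

lemma aux_antichain_card_le {β : Type*} [Fintype β] [DecidableEq β]
    {𝒜 : Finset (Finset β)} {n : ℕ}
    (hA : IsAntichain (· ⊆ ·) (𝒜 : Set (Finset β)))
    (hsize : ∀ t ∈ 𝒜, #t ≤ n) (hn : n ≤ Fintype.card β / 2) :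
    𝒜.card ≤ (Fintype.card β).choose n := by
  classical
  set M := Fintype.card β with hM
  suffices h : (∑ r ∈ Iic M, (#(𝒜 # r) : ℚ) / M.choose n) ≤ 1 by
    rw [← sum_div, ← Nat.cast_sum, div_le_one] at h
    · rw [Nat.cast_le] at h
      rwa [Finset.sum_card_slice] at h
    · exact_mod_cast Nat.choose_pos (le_trans hn (Nat.div_le_self _ _))
  rw [Iic_eq_Icc, ← Finset.Ico_add_one_right_eq_Icc, bot_eq_zero, ← Finset.range_eq_Ico]
  refine (sum_le_sum fun r hr => ?_).trans (Finset.sum_card_slice_div_choose_le_one hA)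
  rcases Finset.eq_empty_or_nonempty (𝒜 # r) with he | ⟨t, ht⟩
  · simp [he]
  · have htr : #t = r := (Finset.mem_slice.1 ht).2
    have hrn : r ≤ n := htr ▸ hsize t (Finset.mem_slice.1 ht).1
    have h1 : M.choose r ≤ M.choose n := aux_choose_mono_half hrn hn
    refine div_le_div_of_nonneg_left (by positivity) ?_ ?_
    · exact_mod_cast Nat.choose_pos (le_trans hrn (le_trans hn (Nat.div_le_self _ _)))
    · exact_mod_cast h1


/-- The number of irreducible balanced vectors (up to positive scaling) in `ℝ^{2^[N]}`
is at most the binomial coefficient `C(2^N, N)`. -/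
theorem count_irreducible_balanced_vectors_le {N : ℕ} (hN : 1 ≤ N) :
    irreducibleBalancedCount N ≤ (2 ^ N).choose N := by
  classical
  set T := {w : Finset (Fin N) → ℕ //
    Finset.univ.gcd w = 1 ∧ IrreducibleBalancedVec (fun I => (w I : ℝ))} with hT
  let f : T → Finset (Finset (Fin N)) := fun w => Finset.univ.filter (fun I => w.1 I ≠ 0)
  have key : ∀ w₁ w₂ : T, f w₁ ⊆ f w₂ → w₁ = w₂ := by
    intro w₁ w₂ hsub
    apply Subtype.ext
    refine aux_eq_of_supp_subset w₁.2.1 w₂.2.1 w₂.2.2 w₁.2.2.1 (fun I hI => ?_)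
    have := hsub (mem_filter.2 ⟨mem_univ I, hI⟩)
    exact (mem_filter.1 this).2
  let 𝒜 : Finset (Finset (Finset (Fin N))) := Finset.univ.filter (fun t => ∃ w : T, f w = t)
  have hmem : ∀ w : T, f w ∈ 𝒜 := fun w => mem_filter.2 ⟨mem_univ _, ⟨w, rfl⟩⟩
  have hcard : irreducibleBalancedCount N ≤ #𝒜 := by
    have hg : Function.Injective (fun w : T => (⟨f w, hmem w⟩ : ↥𝒜)) := by
      intro a b h
      have hfab : f a = f b := congrArg Subtype.val h
      exact key a b (le_of_eq hfab)
    calc irreducibleBalancedCount N = Nat.card T := rfl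
      _ ≤ Nat.card ↥𝒜 := Nat.card_le_card_of_injective _ hg
      _ = #𝒜 := Nat.card_eq_finsetCard 𝒜
  have hanti : IsAntichain (· ⊆ ·) (𝒜 : Set (Finset (Finset (Fin N)))) := by
    intro a ha b hb hne hab
    obtain ⟨w₁, rfl⟩ := (mem_filter.1 ha).2
    obtain ⟨w₂, rfl⟩ := (mem_filter.1 hb).2
    exact hne (congrArg f (key w₁ w₂ hab))
  have hsize : ∀ t ∈ 𝒜, #t ≤ N := by
    intro t ht
    obtain ⟨w, rfl⟩ := (mem_filter.1 ht).2
    have heq : f w = Finset.univ.filter (fun I => (fun I => ((w.1 I : ℝ))) I ≠ 0) := by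
      refine Finset.filter_congr fun I _ => ?_
      simp [Nat.cast_ne_zero]
    rw [heq]
    exact aux_support_card_le hN w.2.2
  have hhalf : N ≤ Fintype.card (Finset (Fin N)) / 2 := by
    rw [Fintype.card_finset, Fintype.card_fin]
    have h1 : N ≤ 2 ^ (N - 1) := by
      have := Nat.lt_two_pow_self (n := N - 1)
      omega
    have h2 : 2 ^ (N - 1) * 2 = 2 ^ N := by
      rw [← pow_succ]; congr 1; omega
    omega
  have := aux_antichain_card_le hanti hsize hhalf
  rw [Fintype.card_finset, Fintype.card_fin] at this
  omega
end

section
/- Let n ≥ 2 and let f : 2^[n] → ℝ be a simple supermodular function that is neither modular nor irreducible. Then there exist a partition [n] = S₁ ∪ S₂ into two disjoint nonempty sets and supermodular functions g₁ : 2^{S₁} → ℝ and g₂ : 2^{S₂} → ℝ such that f(I) = g₁(I∩S₁) + g₂(I∩S₂) for all I ⊆ [n]. -/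
/-!
Call coordinates `i ≠ j` interacting when some mixed second difference of `f` in `i, j`
is nonzero. If the interaction graph is disconnected, all mixed differences across a
component `S` vanish and `f` splits additively along `S` and its complement. If it is
connected, no `∂ᵢ f` is constant, so simplicity makes all of them irreducible: for a
decomposition `f = g₁ + g₂` we get `∂ᵢ g₁ = cᵢ ∂ᵢ f + dᵢ`, and computing the mixed difference
of `g₁` in `i, j` through `∂ᵢ` and through `∂ⱼ` forces `cᵢ = cⱼ` on every edge. Hence `c` is
constant, `g₁ - c f` has constant derivatives, i.e. is modular, and `f` is irreducible.
-/

/-- A function on subsets of `[n]` is supermodular if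
`f (I ∩ J) + f (I ∪ J) ≥ f I + f J` for all `I, J`. -/
def Supermodular {n : ℕ} (f : Finset (Fin n) → ℝ) : Prop :=
  ∀ I J : Finset (Fin n), f I + f J ≤ f (I ∩ J) + f (I ∪ J)

/-- A supermodular function is irreducible if it is not modular and whenever it is a
sum of two supermodular functions, each summand differs from `c • f`, some `c ≥ 0`,
by a modular function. -/
def IrreducibleSupermodular {n : ℕ} (f : Finset (Fin n) → ℝ) : Prop :=
  Supermodular f ∧ ¬ Modular f ∧
  ∀ g₁ g₂ : Finset (Fin n) → ℝ, Supermodular g₁ → Supermodular g₂ → f = g₁ + g₂ →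
    (∃ c : ℝ, 0 ≤ c ∧ Modular (g₁ - c • f)) ∧ (∃ c : ℝ, 0 ≤ c ∧ Modular (g₂ - c • f))

/-- The discrete derivative `∂ᵢ f`, a function on subsets of `[n] ∖ {i}`. -/
def dDeriv {n : ℕ} (i : Fin n) (f : Finset (Fin n) → ℝ) (I : Finset (Fin n)) : ℝ :=
  f (insert i I) - f I

/-- `g` is nondecreasing as a function on subsets of the ground set `S`. -/
def NondecreasingOn {n : ℕ} (S : Finset (Fin n)) (g : Finset (Fin n) → ℝ) : Prop :=
  ∀ I J : Finset (Fin n), I ⊆ S → J ⊆ I → g J ≤ g I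

/-- `g` is constant as a function on subsets of the ground set `S`. -/
def ConstantOn {n : ℕ} (S : Finset (Fin n)) (g : Finset (Fin n) → ℝ) : Prop :=
  ∃ c : ℝ, ∀ I : Finset (Fin n), I ⊆ S → g I = c

/-- A nondecreasing function `g` on subsets of the ground set `S` is irreducible if it
is not constant and whenever `g = h₁ + h₂` on `2^S` with `h₁, h₂` nondecreasing on `S`,
each `hᵢ` differs on `2^S` from a nonnegative multiple of `g` by a constant. -/
def NondecIrreducibleOn {n : ℕ} (S : Finset (Fin n)) (g : Finset (Fin n) → ℝ) : Prop :=
  ¬ ConstantOn S g ∧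
  ∀ h₁ h₂ : Finset (Fin n) → ℝ, NondecreasingOn S h₁ → NondecreasingOn S h₂ →
    (∀ I : Finset (Fin n), I ⊆ S → g I = h₁ I + h₂ I) →
    (∃ c : ℝ, 0 ≤ c ∧ ∃ d : ℝ, ∀ I : Finset (Fin n), I ⊆ S → h₁ I = c * g I + d) ∧
    (∃ c : ℝ, 0 ≤ c ∧ ∃ d : ℝ, ∀ I : Finset (Fin n), I ⊆ S → h₂ I = c * g I + d)

/-- A supermodular function `f` is simple if for each `i ∈ [n]` the nondecreasing
function `∂ᵢ f` on subsets of `[n] ∖ {i}` is irreducible or constant. -/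
def SimpleSupermodular {n : ℕ} (f : Finset (Fin n) → ℝ) : Prop :=
  Supermodular f ∧
  ∀ i : Fin n, NondecIrreducibleOn (Finset.univ.erase i) (dDeriv i f) ∨
    ConstantOn (Finset.univ.erase i) (dDeriv i f)

open Finset Relation

section Interaction

variable {n : ℕ}

def mixedDiff (f : Finset (Fin n) → ℝ) (i j : Fin n) (K : Finset (Fin n)) : ℝ :=
  f (insert i (insert j K)) - f (insert i K) - f (insert j K) + f K

lemma mixedDiff_comm (f : Finset (Fin n) → ℝ) (i j : Fin n) (K : Finset (Fin n)) :
    mixedDiff f i j K = mixedDiff f j i K := by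
  unfold mixedDiff
  rw [insert_comm]
  ring

lemma mixedDiff_eq_dDeriv_sub (f : Finset (Fin n) → ℝ) (i j : Fin n) (K : Finset (Fin n)) :
    mixedDiff f i j K = dDeriv i f (insert j K) - dDeriv i f K := by
  unfold mixedDiff dDeriv
  ring

def Interacts (f : Finset (Fin n) → ℝ) (i j : Fin n) : Prop :=
  i ≠ j ∧ ∃ K : Finset (Fin n), i ∉ K ∧ j ∉ K ∧ mixedDiff f i j K ≠ 0

lemma Interacts.symm {f : Finset (Fin n) → ℝ} {i j : Fin n} (h : Interacts f i j) :
    Interacts f j i := by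
  obtain ⟨hne, K, hi, hj, hD⟩ := h
  exact ⟨hne.symm, K, hj, hi, by rwa [mixedDiff_comm]⟩

lemma not_interacts_of_constantOn_dDeriv {f : Finset (Fin n) → ℝ} {i : Fin n}
    (hconst : ConstantOn (univ.erase i) (dDeriv i f)) (j : Fin n) : ¬ Interacts f i j := by
  obtain ⟨c, hc⟩ := hconst
  rintro ⟨hne, K, hiK, -, hD⟩
  have hiK' : i ∉ insert j K := by simp [hne, hiK]
  apply hD
  rw [mixedDiff_eq_dDeriv_sub, hc _ (subset_erase.mpr ⟨subset_univ _, hiK'⟩),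
    hc _ (subset_erase.mpr ⟨subset_univ _, hiK⟩), sub_self]

lemma exists_interacts_of_connected {f : Finset (Fin n) → ℝ} {i₀ : Fin n}
    (hconn : ∀ j, ReflTransGen (Interacts f) i₀ j) (i j : Fin n) (hij : i ≠ j) :
    ∃ k, Interacts f i k := by
  by_cases hi : i = i₀
  · subst hi
    rcases (hconn j).cases_head with rfl | ⟨k, hk, -⟩
    · exact absurd rfl hij
    · exact ⟨k, hk⟩
  · rcases (hconn i).cases_tail with rfl | ⟨k, -, hk⟩
    · exact absurd rfl hi
    · exact ⟨k, hk.symm⟩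

end Interaction

section Derivatives

variable {n : ℕ}

lemma Supermodular.nondecreasingOn_dDeriv {f : Finset (Fin n) → ℝ} (hf : Supermodular f)
    (i : Fin n) : NondecreasingOn (univ.erase i) (dDeriv i f) := by
  intro I J hI hJI
  have hiI : i ∉ I := fun h => (mem_erase.mp (hI h)).1 rfl
  have hinter : insert i J ∩ I = J := by
    rw [insert_inter_of_notMem hiI, inter_eq_left.mpr hJI]
  have hunion : insert i J ∪ I = insert i I := by
    rw [insert_union, union_eq_right.mpr hJI]
  have := hf (insert i J) I
  rw [hinter, hunion] at this
  unfold dDeriv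
  linarith

lemma modular_of_dDeriv_const {h : Finset (Fin n) → ℝ}
    (hd : ∀ i : Fin n, ∃ d : ℝ, ∀ I : Finset (Fin n), i ∉ I → dDeriv i h I = d) :
    Modular h := by
  choose d hd using hd
  have hsum : ∀ I : Finset (Fin n), h I = h ∅ + ∑ i ∈ I, d i := by
    intro I
    induction I using Finset.induction_on with
    | empty => simp
    | insert a s ha ih =>
      have := hd a s ha
      rw [dDeriv] at this
      rw [sum_insert ha]
      linarith
  intro I J
  rw [hsum I, hsum J, hsum (I ∩ J), hsum (I ∪ J)]
  linarith [sum_union_inter (s₁ := I) (s₂ := J) (f := d)]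

lemma NondecIrreducibleOn.exists_dDeriv_eq {f g₁ g₂ : Finset (Fin n) → ℝ} {i : Fin n}
    (hirr : NondecIrreducibleOn (univ.erase i) (dDeriv i f))
    (hg₁ : Supermodular g₁) (hg₂ : Supermodular g₂) (hsum : f = g₁ + g₂) :
    ∃ c : ℝ, 0 ≤ c ∧ ∃ d : ℝ,
      ∀ I : Finset (Fin n), i ∉ I → dDeriv i g₁ I = c * dDeriv i f I + d := by
  have hsplit : ∀ I, I ⊆ univ.erase i → dDeriv i f I = dDeriv i g₁ I + dDeriv i g₂ I := by
    intro I _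
    simp only [dDeriv, hsum, Pi.add_apply]
    ring
  obtain ⟨⟨c, hc, d, hd⟩, -⟩ :=
    hirr.2 _ _ (hg₁.nondecreasingOn_dDeriv i) (hg₂.nondecreasingOn_dDeriv i) hsplit
  exact ⟨c, hc, d, fun I hI => hd I (subset_erase.mpr ⟨subset_univ I, hI⟩)⟩

lemma eq_of_interacts_of_dDeriv_eq {f g : Finset (Fin n) → ℝ} {c d : Fin n → ℝ}
    (hd : ∀ i I, i ∉ I → dDeriv i g I = c i * dDeriv i f I + d i)
    {i j : Fin n} (hij : Interacts f i j) : c i = c j := by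
  obtain ⟨hne, K, hiK, hjK, hD⟩ := hij
  have hiK' : i ∉ insert j K := by simp [hne, hiK]
  have hjK' : j ∉ insert i K := by simp [hne.symm, hjK]
  have hi : mixedDiff g i j K = c i * mixedDiff f i j K := by
    rw [mixedDiff_eq_dDeriv_sub, mixedDiff_eq_dDeriv_sub, hd i _ hiK', hd i K hiK]
    ring
  have hj : mixedDiff g j i K = c j * mixedDiff f j i K := by
    rw [mixedDiff_eq_dDeriv_sub, mixedDiff_eq_dDeriv_sub, hd j _ hjK', hd j K hjK]
    ring
  rw [mixedDiff_comm g, hj, mixedDiff_comm f j i] at hi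
  exact mul_right_cancel₀ hD hi.symm

lemma exists_modular_sub_smul_of_connected {f g₁ g₂ : Finset (Fin n) → ℝ}
    (hg₁ : Supermodular g₁) (hg₂ : Supermodular g₂) (hsum : f = g₁ + g₂)
    (hirr : ∀ i, NondecIrreducibleOn (univ.erase i) (dDeriv i f))
    {i₀ : Fin n} (hconn : ∀ j, ReflTransGen (Interacts f) i₀ j) :
    ∃ c : ℝ, 0 ≤ c ∧ Modular (g₁ - c • f) := by
  choose c hc d hd using fun i => (hirr i).exists_dDeriv_eq hg₁ hg₂ hsum
  have hc_const : ∀ j, c j = c i₀ := by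
    intro j
    induction hconn j with
    | refl => rfl
    | tail _ hjk ih => exact (eq_of_interacts_of_dDeriv_eq hd hjk).symm.trans ih
  refine ⟨c i₀, hc i₀, modular_of_dDeriv_const fun i => ⟨d i, fun I hI => ?_⟩⟩
  have := hd i I hI
  rw [hc_const i] at this
  simp only [dDeriv, Pi.sub_apply, Pi.smul_apply, smul_eq_mul] at this ⊢
  linarith

lemma irreducibleSupermodular_of_connected [Nontrivial (Fin n)] {f : Finset (Fin n) → ℝ}
    (hf : SimpleSupermodular f) (hnotmod : ¬ Modular f) {i₀ : Fin n}
    (hconn : ∀ j, ReflTransGen (Interacts f) i₀ j) : IrreducibleSupermodular f := by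
  have hirr : ∀ i, NondecIrreducibleOn (univ.erase i) (dDeriv i f) := fun i =>
    (hf.2 i).resolve_right fun hconst =>
      have ⟨j, hij⟩ := exists_ne i
      have ⟨k, hik⟩ := exists_interacts_of_connected hconn i j hij.symm
      not_interacts_of_constantOn_dDeriv hconst k hik
  exact ⟨hf.1, hnotmod, fun g₁ g₂ hg₁ hg₂ hsum =>
    ⟨exists_modular_sub_smul_of_connected hg₁ hg₂ hsum hirr hconn,
      exists_modular_sub_smul_of_connected hg₂ hg₁ (hsum.trans (add_comm _ _)) hirr hconn⟩⟩

end Derivatives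

section Splitting

variable {n : ℕ} {f : Finset (Fin n) → ℝ} {S : Finset (Fin n)}

lemma dDeriv_union_eq_of_mixedDiff_eq_zero
    (hsep : ∀ a ∈ S, ∀ b ∉ S, ∀ K, a ∉ K → b ∉ K → mixedDiff f a b K = 0)
    {a : Fin n} (ha : a ∈ S) {I : Finset (Fin n)} (hI : I ⊆ S) (haI : a ∉ I)
    {J : Finset (Fin n)} (hJ : J ⊆ Sᶜ) : dDeriv a f (I ∪ J) = dDeriv a f I := by
  induction J using Finset.induction_on with
  | empty => rw [union_empty]
  | insert b J hbJ ih =>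
    have hbS : b ∉ S := mem_compl.mp (hJ (mem_insert_self b J))
    have hJ' : J ⊆ Sᶜ := (subset_insert b J).trans hJ
    have haIJ : a ∉ I ∪ J := by
      simp only [mem_union, not_or]
      exact ⟨haI, fun h => mem_compl.mp (hJ' h) ha⟩
    have hbIJ : b ∉ I ∪ J := by
      simp only [mem_union, not_or]
      exact ⟨fun h => hbS (hI h), hbJ⟩
    have hD := hsep a ha b hbS (I ∪ J) haIJ hbIJ
    rw [mixedDiff_eq_dDeriv_sub] at hD
    rw [union_insert, ← ih hJ']
    linarith

lemma add_empty_eq_of_mixedDiff_eq_zero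
    (hsep : ∀ a ∈ S, ∀ b ∉ S, ∀ K, a ∉ K → b ∉ K → mixedDiff f a b K = 0)
    (I : Finset (Fin n)) : f I + f ∅ = f (I ∩ S) + f (I ∩ Sᶜ) := by
  have hsplit : ∀ I, I ⊆ S → ∀ J, J ⊆ Sᶜ → f (I ∪ J) + f ∅ = f I + f J := by
    intro I
    induction I using Finset.induction_on with
    | empty => intro _ J _; rw [empty_union]; ring
    | insert a I haI ih =>
      intro hIS J hJ
      have hIS' : I ⊆ S := (subset_insert a I).trans hIS
      have h := dDeriv_union_eq_of_mixedDiff_eq_zero hsep (hIS (mem_insert_self a I))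
        hIS' haI hJ
      unfold dDeriv at h
      rw [insert_union]
      linarith [ih hIS' J hJ]
  have hI : I ∩ S ∪ I ∩ Sᶜ = I := by
    rw [← inter_union_distrib_left, union_compl, inter_univ]
  simpa only [hI] using hsplit (I ∩ S) inter_subset_right (I ∩ Sᶜ) inter_subset_right

lemma mixedDiff_eq_zero_of_component {i₀ a b : Fin n}
    (ha : ReflTransGen (Interacts f) i₀ a) (hb : ¬ ReflTransGen (Interacts f) i₀ b)
    (K : Finset (Fin n)) (haK : a ∉ K) (hbK : b ∉ K) : mixedDiff f a b K = 0 := by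
  by_contra hD
  have hab : a ≠ b := by
    rintro rfl
    exact hb ha
  exact hb (ha.tail ⟨hab, K, haK, hbK, hD⟩)

end Splitting

/-- If `f` is a simple supermodular function on `2^[n]` (`n ≥ 2`) which is neither
modular nor irreducible, then there is a partition `[n] = S₁ ∪ S₂` into nonempty sets
and supermodular functions `g₁` on `2^{S₁}` and `g₂` on `2^{S₂}` with
`f I = g₁ (I ∩ S₁) + g₂ (I ∩ S₂)` for all `I`. -/
theorem simple_supermodular_decomposition {n : ℕ} (hn : 2 ≤ n)
    (f : Finset (Fin n) → ℝ) (hf : SimpleSupermodular f)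
    (hnotmod : ¬ Modular f) (hnotirr : ¬ IrreducibleSupermodular f) :
    ∃ S₁ S₂ : Finset (Fin n), S₁ ∪ S₂ = Finset.univ ∧ Disjoint S₁ S₂ ∧
      S₁.Nonempty ∧ S₂.Nonempty ∧
      ∃ g₁ g₂ : Finset (Fin n) → ℝ,
        (∀ I J : Finset (Fin n), I ⊆ S₁ → J ⊆ S₁ →
          g₁ I + g₁ J ≤ g₁ (I ∩ J) + g₁ (I ∪ J)) ∧
        (∀ I J : Finset (Fin n), I ⊆ S₂ → J ⊆ S₂ →
          g₂ I + g₂ J ≤ g₂ (I ∩ J) + g₂ (I ∪ J)) ∧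
        (∀ I : Finset (Fin n), f I = g₁ (I ∩ S₁) + g₂ (I ∩ S₂)) := by
  classical
  let i₀ : Fin n := ⟨0, by omega⟩
  by_cases hconn : ∀ j, ReflTransGen (Interacts f) i₀ j
  · have : Nontrivial (Fin n) := Fin.nontrivial_iff_two_le.mpr hn
    exact absurd (irreducibleSupermodular_of_connected hf hnotmod hconn) hnotirr
  push Not at hconn
  obtain ⟨j₀, hj₀⟩ := hconn
  let S := univ.filter (ReflTransGen (Interacts f) i₀)
  have hsep : ∀ a ∈ S, ∀ b ∉ S, ∀ K, a ∉ K → b ∉ K → mixedDiff f a b K = 0 :=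
    fun a ha b hb => mixedDiff_eq_zero_of_component (mem_filter.mp ha).2
      fun h => hb (mem_filter.mpr ⟨mem_univ b, h⟩)
  refine ⟨S, Sᶜ, union_compl S, disjoint_compl_right,
    ⟨i₀, mem_filter.mpr ⟨mem_univ _, .refl⟩⟩, ⟨j₀, by simpa [S] using hj₀⟩,
    f, fun I => f I - f ∅, fun I J _ _ => hf.1 I J,
    fun I J _ _ => by linarith [hf.1 I J], fun I => ?_⟩
  linarith [add_empty_eq_of_mixedDiff_eq_zero hsep I]
end

section
/- For every ε > 0 there exists n₀ such that for all n ≥ n₀, the number of equivalence classes of irreducible supermodular functions on 2^[n] is at least 2^{(√(2/π) − ε) · 2^n / n^{3/2}}. -/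
open Finset

/-- Second difference of `f`. -/
def Dd {n : ℕ} (f : Finset (Fin n) → ℝ) (I : Finset (Fin n)) (i j : Fin n) : ℝ :=
  f (insert i (insert j I)) + f I - f (insert i I) - f (insert j I)

variable {n : ℕ} {f g : Finset (Fin n) → ℝ}

lemma Dd_comm (f : Finset (Fin n) → ℝ) (I : Finset (Fin n)) (i j : Fin n) :
    Dd f I i j = Dd f I j i := by
  unfold Dd; rw [Finset.insert_comm]; ring

lemma Dd_add (f g : Finset (Fin n) → ℝ) (I : Finset (Fin n)) (i j : Fin n) :
    Dd (f + g) I i j = Dd f I i j + Dd g I i j := by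
  simp [Dd]; ring

lemma Dd_sub (f g : Finset (Fin n) → ℝ) (I : Finset (Fin n)) (i j : Fin n) :
    Dd (f - g) I i j = Dd f I i j - Dd g I i j := by
  simp [Dd]; ring

lemma Dd_smul (c : ℝ) (f : Finset (Fin n) → ℝ) (I : Finset (Fin n)) (i j : Fin n) :
    Dd (c • f) I i j = c * Dd f I i j := by
  simp [Dd]; ring

lemma inter_insert_insert {I : Finset (Fin n)} {i j : Fin n} (hi : i ∉ I) (hj : j ∉ I)
    (hij : i ≠ j) : (insert i I) ∩ (insert j I) = I := by
  ext x
  simp only [mem_inter, mem_insert]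
  constructor
  · rintro ⟨hx1 | hx1, hx2 | hx2⟩ <;> first | assumption | (subst hx1; simp_all) | (subst hx2; simp_all)
  · exact fun hx => ⟨Or.inr hx, Or.inr hx⟩

lemma union_insert_insert (I : Finset (Fin n)) (i j : Fin n) :
    (insert i I) ∪ (insert j I) = insert i (insert j I) := by
  ext x; simp [mem_union, mem_insert]; tauto

lemma Supermodular.dd_nonneg (hf : Supermodular f) {I : Finset (Fin n)} {i j : Fin n}
    (hi : i ∉ I) (hj : j ∉ I) (hij : i ≠ j) : 0 ≤ Dd f I i j := by
  have := hf (insert i I) (insert j I)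
  rw [inter_insert_insert hi hj hij, union_insert_insert] at this
  unfold Dd; linarith

lemma Modular.dd_eq_zero (hf : Modular f) {I : Finset (Fin n)} {i j : Fin n}
    (hi : i ∉ I) (hj : j ∉ I) (hij : i ≠ j) : Dd f I i j = 0 := by
  have := hf (insert i I) (insert j I)
  rw [inter_insert_insert hi hj hij, union_insert_insert] at this
  unfold Dd; linarith

/-- increments are monotone when all second differences are nonnegative -/
lemma dd_step (h : ∀ I (i j : Fin n), i ∉ I → j ∉ I → i ≠ j → 0 ≤ Dd f I i j) :
    ∀ (k : ℕ) (A B : Finset (Fin n)) (x : Fin n), (B \ A).card = k → A ⊆ B → x ∉ B →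
      f (insert x A) - f A ≤ f (insert x B) - f B := by
  intro k
  induction k with
  | zero =>
    intro A B x hk hAB hx
    have hBA : B ⊆ A := by
      rw [Finset.card_eq_zero, Finset.sdiff_eq_empty_iff_subset] at hk
      exact hk
    have : A = B := Finset.Subset.antisymm hAB hBA
    subst this
    exact le_of_eq rfl
  | succ k ih =>
    intro A B x hk hAB hx
    have hne : (B \ A).Nonempty := by
      rw [← Finset.card_pos, hk]; omega
    obtain ⟨y, hy⟩ := hne
    rw [mem_sdiff] at hy
    set B' := B.erase y with hB'
    have hyB : y ∈ B := hy.1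
    have hAB' : A ⊆ B' := fun z hz => mem_erase.mpr ⟨fun h => hy.2 (h ▸ hz), hAB hz⟩
    have hxB' : x ∉ B' := fun h => hx (mem_of_mem_erase h)
    have hcard : (B' \ A).card = k := by
      have : B' \ A = (B \ A).erase y := by
        ext z; simp [hB', mem_sdiff, mem_erase]; tauto
      rw [this, Finset.card_erase_of_mem (mem_sdiff.mpr hy), hk]
      omega
    have h1 := ih A B' x hcard hAB' hxB'
    have hxy : x ≠ y := fun h => hx (h ▸ hyB)
    have hyB' : y ∉ B' := Finset.notMem_erase y B
    have h2 := h B' x y hxB' hyB' hxy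
    have hins : insert y B' = B := Finset.insert_erase hyB
    unfold Dd at h2
    rw [hins] at h2
    linarith

lemma supermodular_of_dd (h : ∀ I (i j : Fin n), i ∉ I → j ∉ I → i ≠ j → 0 ≤ Dd f I i j) :
    Supermodular f := by
  have key : ∀ (k : ℕ) (I J : Finset (Fin n)), (I \ J).card = k →
      f I - f (I ∩ J) ≤ f (I ∪ J) - f J := by
    intro k
    induction k with
    | zero =>
      intro I J hk
      have hIJ : I ⊆ J := by
        rw [Finset.card_eq_zero, Finset.sdiff_eq_empty_iff_subset] at hk
        exact hk
      rw [Finset.inter_eq_left.mpr hIJ, Finset.union_eq_right.mpr hIJ]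
      simp
    | succ k ih =>
      intro I J hk
      have hne : (I \ J).Nonempty := by rw [← Finset.card_pos, hk]; omega
      obtain ⟨x, hx⟩ := hne
      rw [mem_sdiff] at hx
      set I' := I.erase x with hI'
      have hxI : x ∈ I := hx.1
      have hcard : (I' \ J).card = k := by
        have : I' \ J = (I \ J).erase x := by
          ext z; simp [hI', mem_sdiff, mem_erase]; tauto
        rw [this, Finset.card_erase_of_mem (mem_sdiff.mpr hx), hk]
        omega
      have ih' := ih I' J hcard
      have hI'J : I' ∩ J = I ∩ J := by
        ext z
        simp only [hI', mem_inter, mem_erase]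
        constructor
        · rintro ⟨⟨_, h1⟩, h2⟩; exact ⟨h1, h2⟩
        · rintro ⟨h1, h2⟩; exact ⟨⟨fun he => hx.2 (he ▸ h2), h1⟩, h2⟩
      have hxU : x ∉ I' ∪ J := by
        simp only [hI', mem_union, mem_erase, not_or]
        exact ⟨fun h => h.1 rfl, hx.2⟩
      have hstep := dd_step h ((I' ∪ J) \ I').card I' (I' ∪ J) x rfl
        Finset.subset_union_left hxU
      have hinsI : insert x I' = I := Finset.insert_erase hxI
      have hinsU : insert x (I' ∪ J) = I ∪ J := by
        rw [← Finset.insert_union, hinsI]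
      rw [hinsI, hinsU] at hstep
      rw [hI'J] at ih'
      linarith
  intro I J
  have := key (I \ J).card I J rfl
  linarith

lemma supermodular_iff_dd :
    Supermodular f ↔ ∀ I (i j : Fin n), i ∉ I → j ∉ I → i ≠ j → 0 ≤ Dd f I i j :=
  ⟨fun hf _ _ _ hi hj hij => hf.dd_nonneg hi hj hij, supermodular_of_dd⟩

lemma repr_of_dd_zero (h : ∀ I (i j : Fin n), i ∉ I → j ∉ I → i ≠ j → Dd f I i j = 0) :
    ∀ I : Finset (Fin n), f I = f ∅ + ∑ i ∈ I, (f {i} - f ∅) := by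
  intro I
  induction I using Finset.strongInduction with
  | _ I ih =>
    rcases Finset.eq_empty_or_nonempty I with hI | ⟨i, hi⟩
    · simp [hI]
    rcases Finset.eq_empty_or_nonempty (I.erase i) with hI' | ⟨j, hj⟩
    · have : I = {i} := by
        ext z; simp only [mem_singleton]
        constructor
        · intro hz; by_contra hzi
          have : z ∈ I.erase i := mem_erase.mpr ⟨hzi, hz⟩
          rw [hI'] at this; simp at this
        · rintro rfl; exact hi
      rw [this]; simp
    · rw [mem_erase] at hj
      set S := (I.erase i).erase j with hS
      have hiS : i ∉ S := fun hh => (Finset.notMem_erase i I) (mem_of_mem_erase hh)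
      have hjS : j ∉ S := Finset.notMem_erase j _
      have hij : i ≠ j := fun hh => hj.1 hh.symm
      have hd := h S i j hiS hjS hij
      have hins : insert i (insert j S) = I := by
        rw [hS, Finset.insert_erase (mem_erase.mpr hj), Finset.insert_erase hi]
      have hiSj : insert j S = I.erase i := Finset.insert_erase (mem_erase.mpr hj)
      have hiSi : insert i S = I.erase j := by
        ext z
        simp only [hS, mem_insert, mem_erase]
        constructor
        · rintro (rfl | ⟨hz1, hz2, hz3⟩)
          · exact ⟨hij, hi⟩
          · exact ⟨hz1, hz3⟩
        · rintro ⟨hz1, hz2⟩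
          by_cases hzi : z = i
          · exact Or.inl hzi
          · exact Or.inr ⟨hz1, hzi, hz2⟩
      unfold Dd at hd
      rw [hins, hiSj, hiSi] at hd
      have e1 := ih (I.erase i) (Finset.erase_ssubset hi)
      have e2 := ih (I.erase j) (Finset.erase_ssubset hj.2)
      have e3 := ih S (lt_of_lt_of_le (Finset.erase_ssubset (mem_erase.mpr hj))
        (Finset.erase_subset i I))
      have s1 : ∑ z ∈ I.erase i, (f {z} - f ∅) = (∑ z ∈ I, (f {z} - f ∅)) - (f {i} - f ∅) := by
        rw [Finset.sum_erase_eq_sub hi]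
      have s2 : ∑ z ∈ I.erase j, (f {z} - f ∅) = (∑ z ∈ I, (f {z} - f ∅)) - (f {j} - f ∅) := by
        rw [Finset.sum_erase_eq_sub hj.2]
      have s3 : ∑ z ∈ S, (f {z} - f ∅) =
          (∑ z ∈ I, (f {z} - f ∅)) - (f {i} - f ∅) - (f {j} - f ∅) := by
        rw [hS, Finset.sum_erase_eq_sub (mem_erase.mpr hj), s1]
      rw [e1, s1] at hd
      rw [e2, s2] at hd
      rw [e3, s3] at hd
      linarith

lemma modular_of_dd (h : ∀ I (i j : Fin n), i ∉ I → j ∉ I → i ≠ j → Dd f I i j = 0) :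
    Modular f := by
  have hr := repr_of_dd_zero h
  intro I J
  rw [hr I, hr J, hr (I ∩ J), hr (I ∪ J)]
  have := Finset.sum_union_inter (s₁ := I) (s₂ := J) (f := fun z => f {z} - f ∅)
  linarith

lemma modular_iff_dd :
    Modular f ↔ ∀ I (i j : Fin n), i ∉ I → j ∉ I → i ≠ j → Dd f I i j = 0 :=
  ⟨fun hf _ _ _ hi hj hij => hf.dd_eq_zero hi hj hij, modular_of_dd⟩

/-- The type of irreducible supermodular functions on `2^[n]` up to equivalence
(two irreducible supermodular functions are identified when they agree up to a
modular function and a positive scaling, i.e. when they determine the same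
equivalence class). -/
def IrreducibleSupermodularClasses (n : ℕ) : Type :=
  Quot (fun f g : {f : Finset (Fin n) → ℝ // IrreducibleSupermodular f} =>
    ∃ c : ℝ, 0 < c ∧ Modular (f.1 - c • g.1))

open Classical

lemma Modular.smul {n : ℕ} {f : Finset (Fin n) → ℝ} (c : ℝ) (hf : Modular f) :
    Modular (c • f) := by
  intro I J
  simp only [Pi.smul_apply, smul_eq_mul]
  rw [← mul_add, ← mul_add, hf I J]

lemma dd_eq_of_modular_sub {n : ℕ} {f g : Finset (Fin n) → ℝ} {c : ℝ}
    (h : Modular (f - c • g)) {I : Finset (Fin n)} {i j : Fin n}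
    (hi : i ∉ I) (hj : j ∉ I) (hij : i ≠ j) : Dd f I i j = c * Dd g I i j := by
  have := h.dd_eq_zero hi hj hij
  rw [Dd_sub, Dd_smul] at this
  linarith

/-- support map -/
noncomputable def suppMap {n : ℕ} (f : Finset (Fin n) → ℝ) :
    Finset (Fin n) × Fin n × Fin n → Bool :=
  fun p => decide (p.2.1 ∉ p.1 ∧ p.2.2 ∉ p.1 ∧ p.2.1 ≠ p.2.2 ∧ 0 < Dd f p.1 p.2.1 p.2.2)

lemma suppMap_eq_iff {n : ℕ} {f g : Finset (Fin n) → ℝ} :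
    suppMap f = suppMap g ↔ ∀ I (i j : Fin n), i ∉ I → j ∉ I → i ≠ j →
      (0 < Dd f I i j ↔ 0 < Dd g I i j) := by
  constructor
  · intro h I i j hi hj hij
    have := congrFun h (I, i, j)
    simp only [suppMap, decide_eq_decide] at this
    constructor
    · intro hf; exact (this.mp ⟨hi, hj, hij, hf⟩).2.2.2
    · intro hg; exact (this.mpr ⟨hi, hj, hij, hg⟩).2.2.2
  · intro h
    funext p
    obtain ⟨I, i, j⟩ := p
    simp only [suppMap, decide_eq_decide]
    constructor
    · rintro ⟨h1, h2, h3, h4⟩; exact ⟨h1, h2, h3, (h I i j h1 h2 h3).mp h4⟩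
    · rintro ⟨h1, h2, h3, h4⟩; exact ⟨h1, h2, h3, (h I i j h1 h2 h3).mpr h4⟩

lemma suppMap_eq_of_rel {n : ℕ} {f g : Finset (Fin n) → ℝ} {c : ℝ} (hc : 0 < c)
    (hfg : Modular (f - c • g)) (hf : Supermodular f) (hg : Supermodular g) :
    suppMap f = suppMap g := by
  rw [suppMap_eq_iff]
  intro I i j hi hj hij
  have hD := dd_eq_of_modular_sub hfg hi hj hij
  constructor
  · intro h; nlinarith [hg.dd_nonneg hi hj hij]
  · intro h; nlinarith

/-- the key perturbation lemma: two irreducible supermodular functions with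
the same support of second differences are equivalent -/
lemma rel_of_suppMap_eq {n : ℕ} {f g : Finset (Fin n) → ℝ}
    (hf : IrreducibleSupermodular f) (hg : IrreducibleSupermodular g)
    (hS : suppMap f = suppMap g) :
    ∃ c : ℝ, 0 < c ∧ Modular (g - c • f) := by
  rw [suppMap_eq_iff] at hS
  -- the support as a finset
  set P : Finset (Finset (Fin n) × Fin n × Fin n) :=
    Finset.univ.filter (fun p => p.2.1 ∉ p.1 ∧ p.2.2 ∉ p.1 ∧ p.2.1 ≠ p.2.2 ∧
      0 < Dd f p.1 p.2.1 p.2.2) with hP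
  have hmemP : ∀ p, p ∈ P ↔ (p.2.1 ∉ p.1 ∧ p.2.2 ∉ p.1 ∧ p.2.1 ≠ p.2.2 ∧
      0 < Dd f p.1 p.2.1 p.2.2) := by
    intro p; rw [hP]; simp
  have hPne : P.Nonempty := by
    by_contra hPe
    rw [Finset.not_nonempty_iff_eq_empty] at hPe
    apply hf.2.1
    apply modular_of_dd
    intro I i j hi hj hij
    have h0 := hf.1.dd_nonneg hi hj hij
    rcases eq_or_lt_of_le h0 with h | h
    · exact h.symm
    · exfalso
      have : (I, i, j) ∈ P := (hmemP (I, i, j)).mpr ⟨hi, hj, hij, h⟩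
      rw [hPe] at this; simp at this
  have hgpos : ∀ p ∈ P, 0 < Dd g p.1 p.2.1 p.2.2 := by
    intro p hp
    rw [hmemP] at hp
    exact (hS p.1 p.2.1 p.2.2 hp.1 hp.2.1 hp.2.2.1).mp hp.2.2.2
  set t : ℝ := P.inf' hPne (fun p => Dd f p.1 p.2.1 p.2.2 / Dd g p.1 p.2.1 p.2.2) with ht
  have htpos : 0 < t := by
    rw [ht, Finset.lt_inf'_iff]
    intro p hp
    exact div_pos ((hmemP p).mp hp).2.2.2 (hgpos p hp)
  -- f = (f - t • g) + t • g
  have hdd1 : ∀ I (i j : Fin n), i ∉ I → j ∉ I → i ≠ j → 0 ≤ Dd (f - t • g) I i j := by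
    intro I i j hi hj hij
    rw [Dd_sub, Dd_smul]
    by_cases hmem : (I, i, j) ∈ P
    · have hgp := hgpos _ hmem
      have hle : t ≤ Dd f I i j / Dd g I i j := Finset.inf'_le _ hmem
      rw [le_div_iff₀ hgp] at hle
      linarith
    · rw [hmemP] at hmem
      push_neg at hmem
      have h1 : Dd f I i j = 0 :=
        le_antisymm (hmem hi hj hij) (hf.1.dd_nonneg hi hj hij)
      have h2 : Dd g I i j = 0 := by
        have h0 := hg.1.dd_nonneg hi hj hij
        rcases eq_or_lt_of_le h0 with h | h
        · exact h.symm
        · exact absurd ((hS I i j hi hj hij).mpr h) (by rw [h1]; simp)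
      rw [h1, h2]; ring_nf; exact le_refl 0
  have hsm1 : Supermodular (f - t • g) := supermodular_of_dd hdd1
  have hsm2 : Supermodular (t • g) := by
    apply supermodular_of_dd
    intro I i j hi hj hij
    rw [Dd_smul]
    exact mul_nonneg (le_of_lt htpos) (hg.1.dd_nonneg hi hj hij)
  have hdec : f = (f - t • g) + (t • g) := by funext I; simp
  obtain ⟨_, ⟨c, hc0, hcmod⟩⟩ := hf.2.2 _ _ hsm1 hsm2 hdec
  -- hcmod : Modular (t • g - c • f)
  have hcne : c ≠ 0 := by
    rintro rfl
    apply hg.2.1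
    apply modular_of_dd
    intro I i j hi hj hij
    have := hcmod.dd_eq_zero hi hj hij
    rw [Dd_sub, Dd_smul, Dd_smul] at this
    have : t * Dd g I i j = 0 := by linarith
    exact (mul_eq_zero.mp this).resolve_left (ne_of_gt htpos)
  refine ⟨c / t, div_pos (lt_of_le_of_ne hc0 (Ne.symm hcne)) htpos, ?_⟩
  have : g - (c / t) • f = (1 / t) • (t • g - c • f) := by
    funext I
    simp only [Pi.sub_apply, Pi.smul_apply, smul_eq_mul]
    field_simp
  rw [this]
  exact hcmod.smul _

noncomputable def classSupp {n : ℕ} :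
    IrreducibleSupermodularClasses n → (Finset (Fin n) × Fin n × Fin n → Bool) :=
  Quot.lift (fun f => suppMap f.1) (by
    rintro f g ⟨c, hc, hmod⟩
    exact suppMap_eq_of_rel hc hmod f.2.1 g.2.1)

lemma classSupp_injective {n : ℕ} : Function.Injective (classSupp (n := n)) := by
  intro x y
  induction x using Quot.ind with | _ f =>
  induction y using Quot.ind with | _ g =>
  intro h
  simp only [classSupp] at h
  obtain ⟨c, hc, hmod⟩ := rel_of_suppMap_eq g.2 f.2 (h.symm)
  exact Quot.sound ⟨c, hc, hmod⟩

noncomputable instance {n : ℕ} : Finite (IrreducibleSupermodularClasses n) :=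
  Finite.of_injective _ classSupp_injective

/-! ### The concrete family of supermodular functions -/

section Family

variable {n : ℕ}

/-- indicator of membership in the family -/
def indF (𝓕 : Finset (Finset (Fin n))) (A : Finset (Fin n)) : ℝ := if A ∈ 𝓕 then 1 else 0

/-- the supermodular function attached to a code `𝓕` of `r`-sets -/
def FF (r : ℕ) (𝓕 : Finset (Finset (Fin n))) : Finset (Fin n) → ℝ :=
  fun I => indF 𝓕 I - ((min I.card r : ℕ) : ℝ)

/-- a good family: all sets of size `r`, pairwise intersections of size `≤ r - 2` -/
structure GoodFamily (n r : ℕ) (𝓕 : Finset (Finset (Fin n))) : Prop where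
  card_eq : ∀ A ∈ 𝓕, A.card = r
  code : ∀ A ∈ 𝓕, ∀ B ∈ 𝓕, A ≠ B → (A ∩ B).card + 2 ≤ r

lemma indF_nonneg (𝓕 : Finset (Finset (Fin n))) (A : Finset (Fin n)) : 0 ≤ indF 𝓕 A := by
  unfold indF; split_ifs <;> norm_num

lemma indF_of_not_mem {𝓕 : Finset (Finset (Fin n))} {A : Finset (Fin n)} (h : A ∉ 𝓕) :
    indF 𝓕 A = 0 := by simp [indF, h]

lemma indF_of_mem {𝓕 : Finset (Finset (Fin n))} {A : Finset (Fin n)} (h : A ∈ 𝓕) :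
    indF 𝓕 A = 1 := by simp [indF, h]

lemma GoodFamily.indF_of_card_ne {r : ℕ} {𝓕 : Finset (Finset (Fin n))}
    (h𝓕 : GoodFamily n r 𝓕) {A : Finset (Fin n)} (h : A.card ≠ r) : indF 𝓕 A = 0 := by
  apply indF_of_not_mem
  intro hc
  exact h (h𝓕.card_eq A hc)

lemma min_second_diff (c r : ℕ) :
    2 * ((min (c + 1) r : ℕ) : ℝ) - ((min (c + 2) r : ℕ) : ℝ) - ((min c r : ℕ) : ℝ)
      = if c + 1 = r then 1 else 0 := by
  have h : 2 * (min (c + 1) r : ℤ) - (min (c + 2) r : ℤ) - (min c r : ℤ)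
      = if c + 1 = r then 1 else 0 := by
    split_ifs with h <;> omega
  have h2 : (((if c + 1 = r then 1 else 0 : ℤ)) : ℝ) = (if c + 1 = r then 1 else 0 : ℝ) := by
    split_ifs <;> norm_num
  rw [← h2, ← h]
  push_cast
  ring

lemma Dd_FF {r : ℕ} {𝓕 : Finset (Finset (Fin n))} {I : Finset (Fin n)} {i j : Fin n}
    (hi : i ∉ I) (hj : j ∉ I) (hij : i ≠ j) :
    Dd (FF r 𝓕) I i j = (if I.card + 1 = r then 1 else 0)
      + indF 𝓕 (insert i (insert j I)) + indF 𝓕 I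
      - indF 𝓕 (insert i I) - indF 𝓕 (insert j I) := by
  have hiJ : i ∉ insert j I := by simp [Finset.mem_insert, hij, hi]
  have c1 : (insert i I).card = I.card + 1 := Finset.card_insert_of_notMem hi
  have c2 : (insert j I).card = I.card + 1 := Finset.card_insert_of_notMem hj
  have c3 : (insert i (insert j I)).card = I.card + 2 := by
    rw [Finset.card_insert_of_notMem hiJ, Finset.card_insert_of_notMem hj]
  unfold Dd FF
  rw [c1, c2, c3, ← min_second_diff I.card r]
  ring

/-- two distinct extensions of a set of size `r-1` cannot both be in the family -/
lemma GoodFamily.not_both_ext {r : ℕ} {𝓕 : Finset (Finset (Fin n))}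
    (h𝓕 : GoodFamily n r 𝓕) {I : Finset (Fin n)} {i j : Fin n}
    (hi : i ∉ I) (hj : j ∉ I) (hij : i ≠ j) (hc : I.card + 1 = r) :
    ¬(insert i I ∈ 𝓕 ∧ insert j I ∈ 𝓕) := by
  rintro ⟨h1, h2⟩
  have hne : insert i I ≠ insert j I := by
    intro h
    have : i ∈ insert j I := h ▸ Finset.mem_insert_self i I
    simp [Finset.mem_insert, hij, hi] at this
  have := h𝓕.code _ h1 _ h2 hne
  rw [inter_insert_insert hi hj hij] at this
  omega

/-- two sets of the family sharing `r-1` common elements are equal -/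
lemma GoodFamily.eq_of_subset {r : ℕ} {𝓕 : Finset (Finset (Fin n))}
    (h𝓕 : GoodFamily n r 𝓕) {A B S : Finset (Fin n)} (hA : A ∈ 𝓕) (hB : B ∈ 𝓕)
    (hSA : S ⊆ A) (hSB : S ⊆ B) (hS : S.card + 1 = r) : A = B := by
  by_contra hne
  have := h𝓕.code _ hA _ hB hne
  have : S ⊆ A ∩ B := Finset.subset_inter hSA hSB
  have := Finset.card_le_card this
  omega

lemma GoodFamily.supermodular {r : ℕ} {𝓕 : Finset (Finset (Fin n))}
    (h𝓕 : GoodFamily n r 𝓕) : Supermodular (FF r 𝓕) := by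
  apply supermodular_of_dd
  intro I i j hi hj hij
  rw [Dd_FF hi hj hij]
  have hiJ : i ∉ insert j I := by simp [Finset.mem_insert, hij, hi]
  have c1 : (insert i I).card = I.card + 1 := Finset.card_insert_of_notMem hi
  have c2 : (insert j I).card = I.card + 1 := Finset.card_insert_of_notMem hj
  have c3 : (insert i (insert j I)).card = I.card + 2 := by
    rw [Finset.card_insert_of_notMem hiJ, Finset.card_insert_of_notMem hj]
  by_cases hc : I.card + 1 = r
  · -- middle level
    rw [if_pos hc]
    have hI : indF 𝓕 I = 0 := h𝓕.indF_of_card_ne (by omega)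
    have hU : indF 𝓕 (insert i (insert j I)) = 0 := h𝓕.indF_of_card_ne (by omega)
    have := h𝓕.not_both_ext hi hj hij hc
    rw [hI, hU]
    by_cases h1 : insert i I ∈ 𝓕
    · have h2 : insert j I ∉ 𝓕 := fun h2 => this ⟨h1, h2⟩
      rw [indF_of_mem h1, indF_of_not_mem h2]; norm_num
    · rw [indF_of_not_mem h1]
      have := indF_nonneg 𝓕 (insert j I)
      have h2 : indF 𝓕 (insert j I) ≤ 1 := by unfold indF; split_ifs <;> norm_num
      linarith
  · rw [if_neg hc]
    have h1 : indF 𝓕 (insert i I) = 0 := h𝓕.indF_of_card_ne (by omega)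
    have h2 : indF 𝓕 (insert j I) = 0 := h𝓕.indF_of_card_ne (by omega)
    rw [h1, h2]
    have := indF_nonneg 𝓕 (insert i (insert j I))
    have := indF_nonneg 𝓕 I
    linarith

/-- in a good family, a set of size `r - 1` has at most one extension in the family;
    so among ≥ 2 candidate extension elements outside, one yields a non-member. -/
lemma GoodFamily.exists_good_pair {r : ℕ} {𝓕 : Finset (Finset (Fin n))}
    (h𝓕 : GoodFamily n r 𝓕) (hn : r + 2 ≤ n) {J : Finset (Fin n)} (hJ : J.card + 1 = r) :
    ∃ i j : Fin n, i ∉ J ∧ j ∉ J ∧ i ≠ j ∧ insert i J ∉ 𝓕 ∧ insert j J ∉ 𝓕 := by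
  classical
  set Bad : Finset (Fin n) := Finset.univ.filter (fun x => x ∉ J ∧ insert x J ∈ 𝓕) with hBad
  have hBad1 : Bad.card ≤ 1 := by
    rw [Finset.card_le_one]
    intro a ha b hb
    simp only [hBad, Finset.mem_filter] at ha hb
    by_contra hne
    exact h𝓕.not_both_ext ha.2.1 hb.2.1 hne hJ ⟨ha.2.2, hb.2.2⟩
  set Good : Finset (Fin n) := (Finset.univ \ J) \ Bad with hGood
  have hGcard : 2 ≤ Good.card := by
    have h1 : (Finset.univ \ J).card = n - J.card := by
      rw [Finset.card_sdiff_of_subset (Finset.subset_univ J), Finset.card_univ, Fintype.card_fin]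
    have h2 : (Finset.univ \ J).card - Bad.card ≤ ((Finset.univ \ J) \ Bad).card :=
      Finset.le_card_sdiff Bad _
    rw [← hGood] at h2
    omega
  obtain ⟨i, hiG, j, hjG, hij⟩ := Finset.one_lt_card.mp (show 1 < Good.card by omega)
  simp only [hGood, hBad, Finset.mem_sdiff, Finset.mem_filter, Finset.mem_univ, true_and,
    not_and, not_not] at hiG hjG
  refine ⟨i, j, hiG.1, hjG.1, hij, ?_, ?_⟩
  · intro hc; exact absurd (hiG.2 hiG.1) (by simp [hc])
  · intro hc; exact absurd (hjG.2 hjG.1) (by simp [hc])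

lemma GoodFamily.not_modular {r : ℕ} {𝓕 : Finset (Finset (Fin n))}
    (h𝓕 : GoodFamily n r 𝓕) (hr : 1 ≤ r) (hn : r + 2 ≤ n) : ¬ Modular (FF r 𝓕) := by
  intro hmod
  -- find a set of size r - 1
  obtain ⟨J, _, hJcard⟩ := Finset.exists_subset_card_eq
    (show r - 1 ≤ (Finset.univ : Finset (Fin n)).card by
      rw [Finset.card_univ, Fintype.card_fin]; omega)
  have hJ : J.card + 1 = r := by omega
  obtain ⟨i, j, hi, hj, hij, h1, h2⟩ := h𝓕.exists_good_pair hn hJ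
  have := hmod.dd_eq_zero hi hj hij
  rw [Dd_FF hi hj hij, if_pos hJ] at this
  have hI : indF 𝓕 J = 0 := h𝓕.indF_of_card_ne (by omega)
  have hU : indF 𝓕 (insert i (insert j J)) = 0 := h𝓕.indF_of_card_ne (by
    have hiJ : i ∉ insert j J := by simp [Finset.mem_insert, hij, hi]
    rw [Finset.card_insert_of_notMem hiJ, Finset.card_insert_of_notMem hj]; omega)
  rw [hI, hU, indF_of_not_mem h1, indF_of_not_mem h2] at this
  norm_num at this

end Family

/-! ### Irreducibility -/

section Irred

variable {n r : ℕ} {𝓕 : Finset (Finset (Fin n))}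

/-- third differences are symmetric -/
lemma third_symm (g : Finset (Fin n) → ℝ) (I : Finset (Fin n)) (i j k : Fin n) :
    Dd g (insert k I) i j - Dd g I i j = Dd g (insert j I) i k - Dd g I i k := by
  unfold Dd
  rw [Finset.insert_comm j k I]
  ring

/-- a good pair at a base set: both extensions avoid the family -/
def GoodPair (𝓕 : Finset (Finset (Fin n))) (J : Finset (Fin n)) (i j : Fin n) : Prop :=
  i ∉ J ∧ j ∉ J ∧ i ≠ j ∧ insert i J ∉ 𝓕 ∧ insert j J ∉ 𝓕

lemma GoodFamily.unique_ext (h𝓕 : GoodFamily n r 𝓕) {T : Finset (Fin n)}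
    (hT : T.card + 1 = r) {x y : Fin n} (hx : x ∉ T) (hy : y ∉ T)
    (hxF : insert x T ∈ 𝓕) (hyF : insert y T ∈ 𝓕) : x = y := by
  by_contra hne
  exact h𝓕.not_both_ext hx hy hne hT ⟨hxF, hyF⟩

lemma card_insert2 {I : Finset (Fin n)} {i j : Fin n} (hi : i ∉ I) (hj : j ∉ I) (hij : i ≠ j) :
    (insert i (insert j I)).card = I.card + 2 := by
  rw [Finset.card_insert_of_notMem (by simp [Finset.mem_insert, hij, hi]),
    Finset.card_insert_of_notMem hj]

lemma ddff_one (h𝓕 : GoodFamily n r 𝓕) {J : Finset (Fin n)} {i j : Fin n}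
    (hJ : J.card + 1 = r) (hg : GoodPair 𝓕 J i j) : Dd (FF r 𝓕) J i j = 1 := by
  obtain ⟨hi, hj, hij, h1, h2⟩ := hg
  rw [Dd_FF hi hj hij, if_pos hJ, indF_of_not_mem h1, indF_of_not_mem h2,
    h𝓕.indF_of_card_ne (show J.card ≠ r by omega),
    h𝓕.indF_of_card_ne (show (insert i (insert j J)).card ≠ r by
      rw [card_insert2 hi hj hij]; omega)]
  ring

lemma ddff_mid_zero (h𝓕 : GoodFamily n r 𝓕) {J : Finset (Fin n)} {i j : Fin n}
    (hi : i ∉ J) (hj : j ∉ J) (hij : i ≠ j) (hJ : J.card + 1 = r)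
    (h : insert i J ∈ 𝓕 ∨ insert j J ∈ 𝓕) : Dd (FF r 𝓕) J i j = 0 := by
  rw [Dd_FF hi hj hij, if_pos hJ,
    h𝓕.indF_of_card_ne (show J.card ≠ r by omega),
    h𝓕.indF_of_card_ne (show (insert i (insert j J)).card ≠ r by
      rw [card_insert2 hi hj hij]; omega)]
  have hnb := h𝓕.not_both_ext hi hj hij hJ
  rcases h with h | h
  · rw [indF_of_mem h, indF_of_not_mem (fun hc => hnb ⟨h, hc⟩)]; ring
  · rw [indF_of_mem h, indF_of_not_mem (fun hc => hnb ⟨hc, h⟩)]; ring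

lemma ddff_low (h𝓕 : GoodFamily n r 𝓕) {S : Finset (Fin n)} {i j : Fin n}
    (hi : i ∉ S) (hj : j ∉ S) (hij : i ≠ j) (hS : S.card + 2 = r) :
    Dd (FF r 𝓕) S i j = indF 𝓕 (insert i (insert j S)) := by
  rw [Dd_FF hi hj hij, if_neg (by omega),
    h𝓕.indF_of_card_ne (show S.card ≠ r by omega),
    h𝓕.indF_of_card_ne (show (insert i S).card ≠ r by
      rw [Finset.card_insert_of_notMem hi]; omega),
    h𝓕.indF_of_card_ne (show (insert j S).card ≠ r by
      rw [Finset.card_insert_of_notMem hj]; omega)]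
  ring

lemma ddff_high (h𝓕 : GoodFamily n r 𝓕) (hr : 1 ≤ r) {I : Finset (Fin n)} {i j : Fin n}
    (hi : i ∉ I) (hj : j ∉ I) (hij : i ≠ j) (hI : I.card = r) :
    Dd (FF r 𝓕) I i j = indF 𝓕 I := by
  rw [Dd_FF hi hj hij, if_neg (by omega),
    h𝓕.indF_of_card_ne (show (insert i (insert j I)).card ≠ r by
      rw [card_insert2 hi hj hij]; omega),
    h𝓕.indF_of_card_ne (show (insert i I).card ≠ r by
      rw [Finset.card_insert_of_notMem hi]; omega),
    h𝓕.indF_of_card_ne (show (insert j I).card ≠ r by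
      rw [Finset.card_insert_of_notMem hj]; omega)]
  ring

lemma ddff_other (h𝓕 : GoodFamily n r 𝓕) {I : Finset (Fin n)} {i j : Fin n}
    (hi : i ∉ I) (hj : j ∉ I) (hij : i ≠ j)
    (h1 : I.card + 1 ≠ r) (h2 : I.card + 2 ≠ r) (h3 : I.card ≠ r) :
    Dd (FF r 𝓕) I i j = 0 := by
  rw [Dd_FF hi hj hij, if_neg h1,
    h𝓕.indF_of_card_ne h3,
    h𝓕.indF_of_card_ne (show (insert i (insert j I)).card ≠ r by
      rw [card_insert2 hi hj hij]; omega),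
    h𝓕.indF_of_card_ne (show (insert i I).card ≠ r by
      rw [Finset.card_insert_of_notMem hi]; omega),
    h𝓕.indF_of_card_ne (show (insert j I).card ≠ r by
      rw [Finset.card_insert_of_notMem hj]; omega)]
  ring

lemma not_mem_insert' {J : Finset (Fin n)} {i k : Fin n} (hik : i ≠ k) (hiJ : i ∉ J) :
    i ∉ insert k J := fun h => by
  rcases Finset.mem_insert.mp h with h | h
  exacts [hik h, hiJ h]

section Decompose

variable {g : Finset (Fin n) → ℝ}

/-- whenever the second difference of `FF` vanishes, so does that of `g` -/
lemma dd_g_zero (hg : Supermodular g)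
    (hle : ∀ I (i j : Fin n), i ∉ I → j ∉ I → i ≠ j → Dd g I i j ≤ Dd (FF r 𝓕) I i j)
    {I : Finset (Fin n)} {i j : Fin n}
    (hi : i ∉ I) (hj : j ∉ I) (hij : i ≠ j) (h0 : Dd (FF r 𝓕) I i j = 0) :
    Dd g I i j = 0 :=
  le_antisymm (h0 ▸ hle I i j hi hj hij) (hg.dd_nonneg hi hj hij)

/-- triangle step within a fixed base set -/
lemma tri_step (h𝓕 : GoodFamily n r 𝓕) (hg : Supermodular g)
    (hle : ∀ I (i j : Fin n), i ∉ I → j ∉ I → i ≠ j → Dd g I i j ≤ Dd (FF r 𝓕) I i j)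
    {J : Finset (Fin n)} (hJ : J.card + 1 = r) {i j k : Fin n}
    (hiJ : i ∉ J) (hjJ : j ∉ J) (hkJ : k ∉ J)
    (hij : i ≠ j) (hik : i ≠ k) (hjk : j ≠ k)
    (hjF : insert j J ∉ 𝓕) (hkF : insert k J ∉ 𝓕) :
    Dd g J i j = Dd g J i k := by
  have h3 := third_symm g J i j k
  have hz1 : Dd g (insert k J) i j = 0 := by
    apply dd_g_zero hg hle (not_mem_insert' hik hiJ) (not_mem_insert' hjk hjJ) hij
    rw [ddff_high h𝓕 (by omega) (not_mem_insert' hik hiJ) (not_mem_insert' hjk hjJ) hij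
      (by rw [Finset.card_insert_of_notMem hkJ]; omega)]
    exact indF_of_not_mem hkF
  have hz2 : Dd g (insert j J) i k = 0 := by
    apply dd_g_zero hg hle (not_mem_insert' hij hiJ) (not_mem_insert' hjk.symm hkJ) hik
    rw [ddff_high h𝓕 (by omega) (not_mem_insert' hij hiJ) (not_mem_insert' hjk.symm hkJ) hik
      (by rw [Finset.card_insert_of_notMem hjJ]; omega)]
    exact indF_of_not_mem hjF
  linarith


lemma GoodFamily.exists_good_el_avoiding (h𝓕 : GoodFamily n r 𝓕) (hn : r + 5 ≤ n)
    {J : Finset (Fin n)} (hJ : J.card + 1 = r) (A : Finset (Fin n)) (hA : A.card ≤ 4) :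
    ∃ m, m ∉ J ∧ insert m J ∉ 𝓕 ∧ m ∉ A := by
  classical
  set Bad := Finset.univ.filter (fun x => x ∉ J ∧ insert x J ∈ 𝓕) with hBad
  have hBad1 : Bad.card ≤ 1 := Finset.card_le_one.mpr (fun a ha b hb => by
    simp only [hBad, Finset.mem_filter, Finset.mem_univ, true_and] at ha hb
    exact h𝓕.unique_ext hJ ha.1 hb.1 ha.2 hb.2)
  set Good := ((Finset.univ \ J) \ A) \ Bad with hGood
  have h1 : (Finset.univ \ J).card = n - J.card := by
    rw [Finset.card_sdiff_of_subset (Finset.subset_univ J), Finset.card_univ, Fintype.card_fin]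
  have h2 : (Finset.univ \ J).card - A.card ≤ ((Finset.univ \ J) \ A).card :=
    Finset.le_card_sdiff _ _
  have h3 : ((Finset.univ \ J) \ A).card - Bad.card ≤ (((Finset.univ \ J) \ A) \ Bad).card :=
    Finset.le_card_sdiff _ _
  rw [← hGood] at h3
  have hne : Good.Nonempty := Finset.card_pos.mp (by omega)
  obtain ⟨m, hm⟩ := hne
  rw [hGood] at hm
  have hm1 := Finset.mem_sdiff.mp hm
  have hm2 := Finset.mem_sdiff.mp hm1.1
  have hm3 := Finset.mem_sdiff.mp hm2.1
  refine ⟨m, hm3.2, ?_, hm2.2⟩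
  intro hF
  exact hm1.2 (Finset.mem_filter.mpr ⟨Finset.mem_univ m, hm3.2, hF⟩)

lemma GoodFamily.exists_good_x (h𝓕 : GoodFamily n r 𝓕) (hn : r + 5 ≤ n)
    {S : Finset (Fin n)} (hS : S.card + 2 = r) {a b : Fin n}
    (ha : a ∉ S) (hb : b ∉ S) (hab : a ≠ b) :
    ∃ x, x ∉ S ∧ x ≠ a ∧ x ≠ b ∧ insert a (insert x S) ∉ 𝓕 ∧ insert b (insert x S) ∉ 𝓕 := by
  classical
  have key : ∀ c : Fin n, c ∉ S →
      (Finset.univ.filter (fun x => x ∉ S ∧ x ≠ c ∧ insert c (insert x S) ∈ 𝓕)).card ≤ 1 := by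
    intro c hcS
    rw [Finset.card_le_one]
    intro x hx y hy
    simp only [Finset.mem_filter, Finset.mem_univ, true_and] at hx hy
    by_contra hne
    have hTc : (insert c S).card + 1 = r := by
      rw [Finset.card_insert_of_notMem hcS]; omega
    have hsub1 : insert c S ⊆ insert c (insert x S) :=
      Finset.insert_subset_insert _ (Finset.subset_insert _ _)
    have hsub2 : insert c S ⊆ insert c (insert y S) :=
      Finset.insert_subset_insert _ (Finset.subset_insert _ _)
    have heq := h𝓕.eq_of_subset hx.2.2 hy.2.2 hsub1 hsub2 hTc
    have hxmem : x ∈ insert c (insert y S) := by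
      rw [← heq]; exact Finset.mem_insert_of_mem (Finset.mem_insert_self x S)
    rcases Finset.mem_insert.mp hxmem with h | h
    · exact hx.2.1 h
    · rcases Finset.mem_insert.mp h with h | h
      · exact hne h
      · exact hx.1 h
  set BadA := Finset.univ.filter (fun x => x ∉ S ∧ x ≠ a ∧ insert a (insert x S) ∈ 𝓕) with hBadA
  set BadB := Finset.univ.filter (fun x => x ∉ S ∧ x ≠ b ∧ insert b (insert x S) ∈ 𝓕) with hBadB
  set Good := ((Finset.univ \ S) \ ({a, b} : Finset (Fin n))) \ (BadA ∪ BadB) with hGood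
  have h1 : (Finset.univ \ S).card = n - S.card := by
    rw [Finset.card_sdiff_of_subset (Finset.subset_univ S), Finset.card_univ, Fintype.card_fin]
  have h2 : (Finset.univ \ S).card - ({a, b} : Finset (Fin n)).card
      ≤ ((Finset.univ \ S) \ ({a, b} : Finset (Fin n))).card := Finset.le_card_sdiff _ _
  have hab2 : ({a, b} : Finset (Fin n)).card ≤ 2 := le_trans (Finset.card_insert_le _ _) (by simp)
  have hBu : (BadA ∪ BadB).card ≤ 2 := by
    have := Finset.card_union_le BadA BadB
    have hA := key a ha
    have hB := key b hb
    rw [← hBadA] at hA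
    rw [← hBadB] at hB
    omega
  have h3 : ((Finset.univ \ S) \ ({a, b} : Finset (Fin n))).card - (BadA ∪ BadB).card
      ≤ Good.card := by
    rw [hGood]; exact Finset.le_card_sdiff _ _
  have hne : Good.Nonempty := Finset.card_pos.mp (by omega)
  obtain ⟨x, hx⟩ := hne
  rw [hGood] at hx
  have hx1 := Finset.mem_sdiff.mp hx
  have hx2 := Finset.mem_sdiff.mp hx1.1
  have hx3 := Finset.mem_sdiff.mp hx2.1
  have hxab : x ≠ a ∧ x ≠ b := by
    have := hx2.2
    simp only [Finset.mem_insert, Finset.mem_singleton, not_or] at this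
    exact this
  have hxBad := hx1.2
  rw [Finset.mem_union] at hxBad
  push_neg at hxBad
  refine ⟨x, hx3.2, hxab.1, hxab.2, ?_, ?_⟩
  · intro hF
    exact hxBad.1 (Finset.mem_filter.mpr ⟨Finset.mem_univ x, hx3.2, hxab.1, hF⟩)
  · intro hF
    exact hxBad.2 (Finset.mem_filter.mpr ⟨Finset.mem_univ x, hx3.2, hxab.2, hF⟩)

variable {g : Finset (Fin n) → ℝ}

lemma val_eq_within (h𝓕 : GoodFamily n r 𝓕) (hn : r + 5 ≤ n) (hg : Supermodular g)
    (hle : ∀ I (i j : Fin n), i ∉ I → j ∉ I → i ≠ j → Dd g I i j ≤ Dd (FF r 𝓕) I i j)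
    {J : Finset (Fin n)} (hJ : J.card + 1 = r) {i j i' j' : Fin n}
    (h1 : GoodPair 𝓕 J i j) (h2 : GoodPair 𝓕 J i' j') :
    Dd g J i j = Dd g J i' j' := by
  obtain ⟨hi, hj, hij, hiF, hjF⟩ := h1
  obtain ⟨hi', hj', hij', hiF', hjF'⟩ := h2
  obtain ⟨m, hmJ, hmF, hmA⟩ := h𝓕.exists_good_el_avoiding hn hJ {i, j, i', j'}
    (le_trans (Finset.card_insert_le _ _) (by
      have := Finset.card_insert_le j ({i', j'} : Finset (Fin n))
      have := Finset.card_insert_le i' ({j'} : Finset (Fin n))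
      simp only [Finset.card_singleton] at *
      omega))
  simp only [Finset.mem_insert, Finset.mem_singleton, not_or] at hmA
  obtain ⟨hmi, hmj, hmi', hmj'⟩ := hmA
  have e1 : Dd g J i j = Dd g J i m :=
    tri_step h𝓕 hg hle hJ hi hj hmJ hij (Ne.symm hmi) (Ne.symm hmj) hjF hmF
  have e3 : Dd g J m i = Dd g J m i' := by
    by_cases hii' : i = i'
    · rw [hii']
    · exact tri_step h𝓕 hg hle hJ hmJ hi hi' hmi hmi' hii' hiF hiF'
  have e5 : Dd g J i' m = Dd g J i' j' :=
    tri_step h𝓕 hg hle hJ hi' hmJ hj' (Ne.symm hmi') hij' hmj' hmF hjF'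
  rw [e1, Dd_comm g J i m, e3, Dd_comm g J m i', e5]

lemma swap_core (h𝓕 : GoodFamily n r 𝓕) (hg : Supermodular g)
    (hle : ∀ I (i j : Fin n), i ∉ I → j ∉ I → i ≠ j → Dd g I i j ≤ Dd (FF r 𝓕) I i j)
    {S : Finset (Fin n)} (hS : S.card + 2 = r) {a b x : Fin n}
    (haS : a ∉ S) (hbS : b ∉ S) (hxS : x ∉ S) (hxa : x ≠ a) (hxb : x ≠ b)
    (haxF : insert a (insert x S) ∉ 𝓕) (hbxF : insert b (insert x S) ∉ 𝓕) :
    Dd g (insert a S) x b = Dd g (insert b S) x a := by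
  have h3 := third_symm g S x b a
  have hz1 : Dd g S x b = 0 := by
    apply dd_g_zero hg hle hxS hbS hxb
    rw [ddff_low h𝓕 hxS hbS hxb hS]
    apply indF_of_not_mem
    rw [Finset.insert_comm]
    exact hbxF
  have hz2 : Dd g S x a = 0 := by
    apply dd_g_zero hg hle hxS haS hxa
    rw [ddff_low h𝓕 hxS haS hxa hS]
    apply indF_of_not_mem
    rw [Finset.insert_comm]
    exact haxF
  linarith

lemma swap_step (h𝓕 : GoodFamily n r 𝓕) (hn : r + 5 ≤ n) (hg : Supermodular g)
    (hle : ∀ I (i j : Fin n), i ∉ I → j ∉ I → i ≠ j → Dd g I i j ≤ Dd (FF r 𝓕) I i j)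
    {S : Finset (Fin n)} (hS : S.card + 2 = r) {a b : Fin n}
    (haS : a ∉ S) (hbS : b ∉ S) (hab : a ≠ b) (habF : insert b (insert a S) ∉ 𝓕)
    {i j i' j' : Fin n} (h1 : GoodPair 𝓕 (insert a S) i j) (h2 : GoodPair 𝓕 (insert b S) i' j') :
    Dd g (insert a S) i j = Dd g (insert b S) i' j' := by
  obtain ⟨x, hxS, hxa, hxb, haxF, hbxF⟩ := h𝓕.exists_good_x hn hS haS hbS hab
  have hcardA : (insert a S).card + 1 = r := by rw [Finset.card_insert_of_notMem haS]; omega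
  have hcardB : (insert b S).card + 1 = r := by rw [Finset.card_insert_of_notMem hbS]; omega
  have hGa : GoodPair 𝓕 (insert a S) x b :=
    ⟨not_mem_insert' hxa hxS, not_mem_insert' (Ne.symm hab) hbS, hxb, by
      rw [Finset.insert_comm]; exact haxF, habF⟩
  have hGb : GoodPair 𝓕 (insert b S) x a :=
    ⟨not_mem_insert' hxb hxS, not_mem_insert' hab haS, hxa, by
      rw [Finset.insert_comm]; exact hbxF, by rw [Finset.insert_comm]; exact habF⟩
  have e1 := val_eq_within h𝓕 hn hg hle hcardA h1 hGa
  have e2 := swap_core h𝓕 hg hle hS haS hbS hxS hxa hxb haxF hbxF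
  have e3 := val_eq_within h𝓕 hn hg hle hcardB hGb h2
  rw [e1, e2, e3]

lemma val_eq_swap (h𝓕 : GoodFamily n r 𝓕) (hn : r + 5 ≤ n) (hg : Supermodular g)
    (hle : ∀ I (i j : Fin n), i ∉ I → j ∉ I → i ≠ j → Dd g I i j ≤ Dd (FF r 𝓕) I i j)
    {S : Finset (Fin n)} (hS : S.card + 2 = r) {a b : Fin n}
    (haS : a ∉ S) (hbS : b ∉ S) (hab : a ≠ b)
    {i j i' j' : Fin n} (h1 : GoodPair 𝓕 (insert a S) i j) (h2 : GoodPair 𝓕 (insert b S) i' j') :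
    Dd g (insert a S) i j = Dd g (insert b S) i' j' := by
  by_cases habF : insert b (insert a S) ∈ 𝓕
  · obtain ⟨c, hcS, hca, hcb, hacF, hbcF⟩ := h𝓕.exists_good_x hn hS haS hbS hab
    have hcardC : (insert c S).card + 1 = r := by rw [Finset.card_insert_of_notMem hcS]; omega
    obtain ⟨p, q, hp, hq, hpq, hpF, hqF⟩ := h𝓕.exists_good_pair (by omega) hcardC
    have hGpq : GoodPair 𝓕 (insert c S) p q := ⟨hp, hq, hpq, hpF, hqF⟩
    have e1 := swap_step h𝓕 hn hg hle hS haS hcS (Ne.symm hca)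
      (by rw [Finset.insert_comm]; exact hacF) h1 hGpq
    have e2 := swap_step h𝓕 hn hg hle hS hcS hbS (fun h => hcb h) hbcF hGpq h2
    rw [e1, e2]
  · exact swap_step h𝓕 hn hg hle hS haS hbS hab habF h1 h2

lemma val_eq_bases (h𝓕 : GoodFamily n r 𝓕) (hn : r + 5 ≤ n) (hg : Supermodular g)
    (hle : ∀ I (i j : Fin n), i ∉ I → j ∉ I → i ≠ j → Dd g I i j ≤ Dd (FF r 𝓕) I i j) :
    ∀ (k : ℕ) (J J' : Finset (Fin n)), (J' \ J).card = k →
      J.card + 1 = r → J'.card + 1 = r →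
      ∀ {i j i' j' : Fin n}, GoodPair 𝓕 J i j → GoodPair 𝓕 J' i' j' →
      Dd g J i j = Dd g J' i' j' := by
  intro k
  induction k with
  | zero =>
    intro J J' hk hJ hJ' i j i' j' h1 h2
    have hsub : J' ⊆ J := by
      rw [Finset.card_eq_zero, Finset.sdiff_eq_empty_iff_subset] at hk; exact hk
    have : J' = J := Finset.eq_of_subset_of_card_le hsub (by omega)
    subst this
    exact val_eq_within h𝓕 hn hg hle hJ h1 h2
  | succ k ih =>
    intro J J' hk hJ hJ' i j i' j' h1 h2
    have hne : (J' \ J).Nonempty := by rw [← Finset.card_pos, hk]; omega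
    obtain ⟨b, hb⟩ := hne
    rw [Finset.mem_sdiff] at hb
    have hne2 : (J \ J').Nonempty := by
      by_contra h
      rw [Finset.not_nonempty_iff_eq_empty, Finset.sdiff_eq_empty_iff_subset] at h
      have := Finset.eq_of_subset_of_card_le h (by omega)
      rw [← this] at hk
      simp at hk
    obtain ⟨a, ha⟩ := hne2
    rw [Finset.mem_sdiff] at ha
    set S := J.erase a with hSdef
    have hins : insert a S = J := Finset.insert_erase ha.1
    have haS : a ∉ S := Finset.notMem_erase a J
    have hbS : b ∉ S := fun h => hb.2 (Finset.mem_of_mem_erase h)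
    have hab : a ≠ b := fun h => hb.2 (h ▸ ha.1)
    have hJpos : 1 ≤ J.card := Finset.card_pos.mpr ⟨a, ha.1⟩
    have hScard : S.card + 2 = r := by
      rw [hSdef, Finset.card_erase_of_mem ha.1]; omega
    have hcardB : (insert b S).card + 1 = r := by rw [Finset.card_insert_of_notMem hbS]; omega
    have hkeq : J' \ insert b S = (J' \ J).erase b := by
      ext z
      simp only [Finset.mem_sdiff, Finset.mem_insert, Finset.mem_erase, hSdef, not_or]
      constructor
      · rintro ⟨hz1, hz2, hz3⟩
        refine ⟨hz2, hz1, fun hzJ => ?_⟩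
        by_cases hza : z = a
        · exact ha.2 (hza ▸ hz1)
        · exact hz3 ⟨hza, hzJ⟩
      · rintro ⟨hz1, hz2, hz3⟩
        exact ⟨hz2, hz1, fun hmem => hz3 hmem.2⟩
    have hk' : (J' \ insert b S).card = k := by
      rw [hkeq, Finset.card_erase_of_mem (Finset.mem_sdiff.mpr hb), hk]
      omega
    obtain ⟨p, q, hp, hq, hpq, hpF, hqF⟩ := h𝓕.exists_good_pair (by omega) hcardB
    have hGpq : GoodPair 𝓕 (insert b S) p q := ⟨hp, hq, hpq, hpF, hqF⟩
    have e1 : Dd g J i j = Dd g (insert b S) p q := by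
      rw [← hins] at h1 ⊢
      exact val_eq_swap h𝓕 hn hg hle hScard haS hbS hab h1 hGpq
    have e2 := ih (insert b S) J' hk' hcardB hJ' hGpq h2
    rw [e1, e2]

lemma high_step (h𝓕 : GoodFamily n r 𝓕) (hg : Supermodular g)
    (hle : ∀ I (i j : Fin n), i ∉ I → j ∉ I → i ≠ j → Dd g I i j ≤ Dd (FF r 𝓕) I i j)
    {I : Finset (Fin n)} (hI : I ∈ 𝓕) {i j k : Fin n} (hi : i ∉ I) (hj : j ∉ I)
    (hij : i ≠ j) (hk : k ∈ I) (hrI : I.card = r) :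
    Dd g I i j = Dd g (I.erase k) i j ∧ GoodPair 𝓕 (I.erase k) i j := by
  set J := I.erase k with hJdef
  have hins : insert k J = I := Finset.insert_erase hk
  have hkJ : k ∉ J := Finset.notMem_erase k I
  have hIpos : 1 ≤ I.card := Finset.card_pos.mpr ⟨k, hk⟩
  have hJcard : J.card + 1 = r := by
    rw [hJdef, Finset.card_erase_of_mem hk]; omega
  have hiJ : i ∉ J := fun h => hi (Finset.mem_of_mem_erase h)
  have hjJ : j ∉ J := fun h => hj (Finset.mem_of_mem_erase h)
  have hik : i ≠ k := fun h => hi (h ▸ hk)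
  have hjk : j ≠ k := fun h => hj (h ▸ hk)
  have hiF : insert i J ∉ 𝓕 := by
    intro hF
    have := h𝓕.eq_of_subset hF hI (Finset.subset_insert i J)
      (hJdef ▸ Finset.erase_subset k I) hJcard
    exact hi (this ▸ Finset.mem_insert_self i J)
  have hjF : insert j J ∉ 𝓕 := by
    intro hF
    have := h𝓕.eq_of_subset hF hI (Finset.subset_insert j J)
      (hJdef ▸ Finset.erase_subset k I) hJcard
    exact hj (this ▸ Finset.mem_insert_self j J)
  have h3 := third_symm g J i j k
  have hz1 : Dd g (insert j J) i k = 0 := by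
    have hjIF : insert j J ∉ 𝓕 := hjF
    apply dd_g_zero hg hle (not_mem_insert' hij hiJ) (not_mem_insert' hjk.symm hkJ) hik
    rw [ddff_high h𝓕 (by omega) (not_mem_insert' hij hiJ) (not_mem_insert' hjk.symm hkJ) hik
      (by rw [Finset.card_insert_of_notMem hjJ]; omega)]
    exact indF_of_not_mem hjIF
  have hz2 : Dd g J i k = 0 := by
    apply dd_g_zero hg hle hiJ hkJ hik
    apply ddff_mid_zero h𝓕 hiJ hkJ hik hJcard
    right
    rw [hins]
    exact hI
  constructor
  · rw [← hins]; linarith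
  · exact ⟨hiJ, hjJ, hij, hiF, hjF⟩

lemma low_step (h𝓕 : GoodFamily n r 𝓕) (hg : Supermodular g)
    (hle : ∀ I (i j : Fin n), i ∉ I → j ∉ I → i ≠ j → Dd g I i j ≤ Dd (FF r 𝓕) I i j)
    {S : Finset (Fin n)} (hS : S.card + 2 = r) {i j k : Fin n}
    (hi : i ∉ S) (hj : j ∉ S) (hij : i ≠ j)
    (hM : insert i (insert j S) ∈ 𝓕) (hkS : k ∉ S) (hki : k ≠ i) (hkj : k ≠ j) :
    Dd g S i j = Dd g (insert k S) i j ∧ GoodPair 𝓕 (insert k S) i j := by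
  have hiT : (insert i S).card + 1 = r := by rw [Finset.card_insert_of_notMem hi]; omega
  have hjT : (insert j S).card + 1 = r := by rw [Finset.card_insert_of_notMem hj]; omega
  have hkM : k ∉ insert i (insert j S) :=
    not_mem_insert' hki (not_mem_insert' hkj hkS)
  have hiF : insert i (insert k S) ∉ 𝓕 := by
    intro hF
    have := h𝓕.eq_of_subset hF hM
      (Finset.insert_subset_insert i (Finset.subset_insert k S))
      (Finset.insert_subset_insert i (Finset.subset_insert j S)) hiT
    exact hkM (this ▸ Finset.mem_insert_of_mem (Finset.mem_insert_self k S))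
  have hjF : insert j (insert k S) ∉ 𝓕 := by
    intro hF
    have hsub : insert j S ⊆ insert i (insert j S) := Finset.subset_insert _ _
    have := h𝓕.eq_of_subset hF hM
      (Finset.insert_subset_insert j (Finset.subset_insert k S)) hsub hjT
    exact hkM (this ▸ Finset.mem_insert_of_mem (Finset.mem_insert_self k S))
  have h3 := third_symm g S i j k
  have hz1 : Dd g S i k = 0 := by
    apply dd_g_zero hg hle hi hkS (fun h => hki h.symm)
    rw [ddff_low h𝓕 hi hkS (fun h => hki h.symm) hS]
    exact indF_of_not_mem hiF
  have hz2 : Dd g (insert j S) i k = 0 := by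
    apply dd_g_zero hg hle (not_mem_insert' hij hi) (not_mem_insert' hkj hkS)
      (fun h => hki h.symm)
    apply ddff_mid_zero h𝓕 (not_mem_insert' hij hi) (not_mem_insert' hkj hkS)
      (fun h => hki h.symm) hjT
    left
    exact hM
  constructor
  · linarith
  · exact ⟨not_mem_insert' (fun h => hki h.symm) hi, not_mem_insert' (fun h => hkj h.symm) hj,
      hij, hiF, hjF⟩

lemma decompose (h𝓕 : GoodFamily n r 𝓕) (hr : 2 ≤ r) (hn : r + 5 ≤ n)
    (hg : Supermodular g)
    (hle : ∀ I (i j : Fin n), i ∉ I → j ∉ I → i ≠ j → Dd g I i j ≤ Dd (FF r 𝓕) I i j) :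
    ∃ c : ℝ, 0 ≤ c ∧ Modular (g - c • FF r 𝓕) := by
  classical
  obtain ⟨J₀, -, hJ₀⟩ := Finset.exists_subset_card_eq
    (show r - 1 ≤ (Finset.univ : Finset (Fin n)).card by
      rw [Finset.card_univ, Fintype.card_fin]; omega)
  have hJ₀r : J₀.card + 1 = r := by omega
  obtain ⟨i₀, j₀, hi₀, hj₀, hij₀, hF1, hF2⟩ := h𝓕.exists_good_pair (by omega) hJ₀r
  have hgp₀ : GoodPair 𝓕 J₀ i₀ j₀ := ⟨hi₀, hj₀, hij₀, hF1, hF2⟩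
  set c := Dd g J₀ i₀ j₀ with hc
  have hc0 : 0 ≤ c := hg.dd_nonneg hi₀ hj₀ hij₀
  have base : ∀ (J : Finset (Fin n)) (i j : Fin n), J.card + 1 = r → GoodPair 𝓕 J i j →
      Dd g J i j = c := by
    intro J i j hJr hgp
    exact (val_eq_bases h𝓕 hn hg hle (J₀ \ J).card J J₀ rfl hJr hJ₀r hgp hgp₀)
  refine ⟨c, hc0, modular_of_dd ?_⟩
  intro I i j hi hj hij
  rw [Dd_sub, Dd_smul]
  suffices h : Dd g I i j = c * Dd (FF r 𝓕) I i j by linarith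
  by_cases h1 : I.card + 1 = r
  · by_cases h2 : insert i I ∈ 𝓕 ∨ insert j I ∈ 𝓕
    · rw [ddff_mid_zero h𝓕 hi hj hij h1 h2,
        dd_g_zero hg hle hi hj hij (ddff_mid_zero h𝓕 hi hj hij h1 h2)]
      ring
    · push_neg at h2
      have hgp : GoodPair 𝓕 I i j := ⟨hi, hj, hij, h2.1, h2.2⟩
      rw [ddff_one h𝓕 h1 hgp, base I i j h1 hgp]
      ring
  · by_cases h2 : I.card + 2 = r
    · by_cases h3 : insert i (insert j I) ∈ 𝓕
      · -- find k outside I ∪ {i, j}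
        have hcard3 : (insert i (insert j I)).card = r := by
          rw [card_insert2 hi hj hij]; omega
        have hex : (Finset.univ \ insert i (insert j I)).Nonempty := by
          apply Finset.card_pos.mp
          rw [Finset.card_sdiff_of_subset (Finset.subset_univ _), Finset.card_univ, Fintype.card_fin,
            hcard3]
          omega
        obtain ⟨k, hkmem⟩ := hex
        rw [Finset.mem_sdiff] at hkmem
        have hkM := hkmem.2
        have hki : k ≠ i := fun h => hkM (by rw [h]; exact Finset.mem_insert_self i _)
        have hkj : k ≠ j := fun h => hkM (by
          rw [h]; exact Finset.mem_insert_of_mem (Finset.mem_insert_self j I))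
        have hkI : k ∉ I := fun h => hkM (Finset.mem_insert_of_mem (Finset.mem_insert_of_mem h))
        obtain ⟨hstep, hgp⟩ := low_step h𝓕 hg hle h2 hi hj hij h3 hkI hki hkj
        have hcardk : (insert k I).card + 1 = r := by
          rw [Finset.card_insert_of_notMem hkI]; omega
        rw [hstep, base _ i j hcardk hgp, ddff_low h𝓕 hi hj hij h2, indF_of_mem h3]
        ring
      · rw [ddff_low h𝓕 hi hj hij h2, indF_of_not_mem h3,
          dd_g_zero hg hle hi hj hij (by
            rw [ddff_low h𝓕 hi hj hij h2]; exact indF_of_not_mem h3)]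
        ring
    · by_cases h3 : I.card = r
      · by_cases h4 : I ∈ 𝓕
        · have hIne : I.Nonempty := Finset.card_pos.mp (by omega)
          obtain ⟨k, hk⟩ := hIne
          obtain ⟨hstep, hgp⟩ := high_step h𝓕 hg hle h4 hi hj hij hk h3
          have hcardk : (I.erase k).card + 1 = r := by
            rw [Finset.card_erase_of_mem hk]; omega
          rw [hstep, base _ i j hcardk hgp, ddff_high h𝓕 (by omega) hi hj hij h3,
            indF_of_mem h4]
          ring
        · rw [ddff_high h𝓕 (by omega) hi hj hij h3, indF_of_not_mem h4,
            dd_g_zero hg hle hi hj hij (by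
              rw [ddff_high h𝓕 (by omega) hi hj hij h3]; exact indF_of_not_mem h4)]
          ring
      · rw [ddff_other h𝓕 hi hj hij h1 h2 h3,
          dd_g_zero hg hle hi hj hij (ddff_other h𝓕 hi hj hij h1 h2 h3)]
        ring

theorem GoodFamily.irreducible (h𝓕 : GoodFamily n r 𝓕) (hr : 2 ≤ r) (hn : r + 5 ≤ n) :
    IrreducibleSupermodular (FF r 𝓕) := by
  have key : ∀ g₁ g₂ : Finset (Fin n) → ℝ, Supermodular g₁ → Supermodular g₂ →
      FF r 𝓕 = g₁ + g₂ → ∃ c : ℝ, 0 ≤ c ∧ Modular (g₁ - c • FF r 𝓕) := by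
    intro g₁ g₂ h1 h2 hsum
    apply decompose h𝓕 hr hn h1
    intro I i j hi hj hij
    have he : Dd (FF r 𝓕) I i j = Dd g₁ I i j + Dd g₂ I i j := by rw [hsum, Dd_add]
    have := h2.dd_nonneg hi hj hij
    linarith
  refine ⟨h𝓕.supermodular, h𝓕.not_modular (by omega) (by omega), ?_⟩
  intro g₁ g₂ h1 h2 hsum
  exact ⟨key g₁ g₂ h1 h2 hsum, key g₂ g₁ h2 h1 (by rw [hsum, add_comm])⟩

end Decompose

end Irred

/-! ### The Graham–Sloane style construction and counting -/

section Count

variable {n : ℕ}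

def wgt (n : ℕ) [NeZero n] : Finset (Fin n) → ZMod n :=
  fun A => ∑ i ∈ A, ((i : ℕ) : ZMod n)

lemma goodFamily_of_code [NeZero n] {r : ℕ} {t : ZMod n} {𝓕 : Finset (Finset (Fin n))}
    (hsub : ∀ A ∈ 𝓕, A.card = r ∧ wgt n A = t) : GoodFamily n r 𝓕 := by
  constructor
  · exact fun A hA => (hsub A hA).1
  · intro A hA B hB hne
    have hAr := (hsub A hA).1
    have hBr := (hsub B hB).1
    have hwA := (hsub A hA).2
    have hwB := (hsub B hB).2
    have hlt : (A ∩ B).card < r := by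
      have hsubAB : A ∩ B ⊆ A := Finset.inter_subset_left
      have hle : (A ∩ B).card ≤ r := hAr ▸ Finset.card_le_card hsubAB
      rcases lt_or_eq_of_le hle with h | h
      · exact h
      · exfalso
        have : A ∩ B = A := Finset.eq_of_subset_of_card_le hsubAB (by omega)
        have hAB : A ⊆ B := by rw [← this]; exact Finset.inter_subset_right
        exact hne (Finset.eq_of_subset_of_card_le hAB (by omega))
    by_contra hcon
    have hcard : (A ∩ B).card + 1 = r := by omega
    have hAd : (A \ B).card = 1 := by
      have := Finset.card_inter_add_card_sdiff A B
      omega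
    have hBd : (B \ A).card = 1 := by
      have := Finset.card_inter_add_card_sdiff B A
      rw [Finset.inter_comm] at this
      omega
    obtain ⟨a, ha⟩ := Finset.card_eq_one.mp hAd
    obtain ⟨b, hb⟩ := Finset.card_eq_one.mp hBd
    have hwA' : wgt n (A ∩ B) + ((a : ℕ) : ZMod n) = t := by
      rw [← hwA]
      unfold wgt
      rw [← Finset.sum_inter_add_sum_sdiff A B (fun i => ((i : ℕ) : ZMod n)), ha]
      simp
    have hwB' : wgt n (A ∩ B) + ((b : ℕ) : ZMod n) = t := by
      rw [← hwB]
      unfold wgt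
      rw [← Finset.sum_inter_add_sum_sdiff B A (fun i => ((i : ℕ) : ZMod n)), hb,
        Finset.inter_comm]
      simp
    have hab : ((a : ℕ) : ZMod n) = ((b : ℕ) : ZMod n) := by
      have := hwA'.trans hwB'.symm
      exact add_left_cancel this
    have : (a : ℕ) = (b : ℕ) := by
      have h1 := ZMod.val_cast_of_lt a.isLt
      have h2 := ZMod.val_cast_of_lt b.isLt
      rw [← h1, ← h2, hab]
    have hab' : a = b := Fin.ext this
    have haA : a ∈ A \ B := ha ▸ Finset.mem_singleton_self a
    have hbB : b ∈ B \ A := hb ▸ Finset.mem_singleton_self b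
    rw [Finset.mem_sdiff] at haA hbB
    exact haA.2 (hab' ▸ hbB.1)

lemma exists_big_class [NeZero n] (r : ℕ) :
    ∃ t : ZMod n, n.choose r ≤ n *
      ((Finset.powersetCard r (Finset.univ : Finset (Fin n))).filter
        (fun A => wgt n A = t)).card := by
  classical
  set P := Finset.powersetCard r (Finset.univ : Finset (Fin n)) with hP
  have hPcard : P.card = n.choose r := by
    rw [hP, Finset.card_powersetCard, Finset.card_univ, Fintype.card_fin]
  have hsum : P.card = ∑ t ∈ (Finset.univ : Finset (ZMod n)),
      (P.filter (fun A => wgt n A = t)).card :=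
    Finset.card_eq_sum_card_fiberwise (fun A _ => Finset.mem_univ _)
  have hne : (Finset.univ : Finset (ZMod n)).Nonempty := Finset.univ_nonempty
  obtain ⟨t, -, ht⟩ := Finset.exists_max_image (Finset.univ : Finset (ZMod n))
    (fun t => (P.filter (fun A => wgt n A = t)).card) hne
  refine ⟨t, ?_⟩
  have hle := Finset.sum_le_card_nsmul (Finset.univ : Finset (ZMod n))
    (fun t => (P.filter (fun A => wgt n A = t)).card)
    ((P.filter (fun A => wgt n A = t)).card) (fun x _ => ht x (Finset.mem_univ x))
  rw [Finset.card_univ, ZMod.card n, smul_eq_mul] at hle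
  omega

lemma family_eq_of_suppMap {r : ℕ} (hr : 2 ≤ r) (hn : r + 5 ≤ n)
    {𝓕 𝓕' : Finset (Finset (Fin n))}
    (h𝓕 : GoodFamily n r 𝓕) (h𝓕' : GoodFamily n r 𝓕')
    (h : suppMap (FF r 𝓕) = suppMap (FF r 𝓕')) : 𝓕 = 𝓕' := by
  have key : ∀ (G G' : Finset (Finset (Fin n))), GoodFamily n r G → GoodFamily n r G' →
      (∀ I (i j : Fin n), i ∉ I → j ∉ I → i ≠ j →
        (0 < Dd (FF r G) I i j ↔ 0 < Dd (FF r G') I i j)) →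
      ∀ A ∈ G, A ∈ G' := by
    intro G G' hG hG' hiff A hA
    have hAr : A.card = r := hG.card_eq A hA
    have h2 : 1 < (Finset.univ \ A).card := by
      rw [Finset.card_sdiff_of_subset (Finset.subset_univ A), Finset.card_univ, Fintype.card_fin, hAr]
      omega
    obtain ⟨i, hi, j, hj, hij⟩ := Finset.one_lt_card.mp h2
    rw [Finset.mem_sdiff] at hi hj
    have hi' := hi.2
    have hj' := hj.2
    have hpos : 0 < Dd (FF r G) A i j := by
      rw [ddff_high hG (by omega) hi' hj' hij hAr, indF_of_mem hA]
      norm_num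
    have hpos' := (hiff A i j hi' hj' hij).mp hpos
    rw [ddff_high hG' (by omega) hi' hj' hij hAr] at hpos'
    by_contra hnA
    rw [indF_of_not_mem hnA] at hpos'
    exact lt_irrefl 0 hpos'
  rw [suppMap_eq_iff] at h
  ext A
  constructor
  · exact key 𝓕 𝓕' h𝓕 h𝓕' h A
  · exact key 𝓕' 𝓕 h𝓕' h𝓕 (fun I i j hi hj hij => (h I i j hi hj hij).symm) A

theorem count_main {r : ℕ} (hr : 2 ≤ r) (hn : r + 5 ≤ n) :
    ∃ m : ℕ, n.choose r ≤ n * m ∧ 2 ^ m ≤ Nat.card (IrreducibleSupermodularClasses n) := by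
  classical
  haveI : NeZero n := ⟨by omega⟩
  obtain ⟨t, ht⟩ := exists_big_class (n := n) r
  set 𝓒 := (Finset.powersetCard r (Finset.univ : Finset (Fin n))).filter
    (fun A => wgt n A = t) with h𝓒
  refine ⟨𝓒.card, ht, ?_⟩
  have hgood : ∀ 𝓕 : Finset (Finset (Fin n)), 𝓕 ⊆ 𝓒 → GoodFamily n r 𝓕 := by
    intro 𝓕 hsub
    apply goodFamily_of_code (t := t)
    intro A hA
    have := hsub hA
    rw [h𝓒, Finset.mem_filter, Finset.mem_powersetCard] at this
    exact ⟨this.1.2, this.2⟩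
  set φ : {𝓕 // 𝓕 ∈ 𝓒.powerset} → IrreducibleSupermodularClasses n :=
    fun 𝓕 => Quot.mk _ ⟨FF r 𝓕.1,
      (hgood 𝓕.1 (Finset.mem_powerset.mp 𝓕.2)).irreducible hr hn⟩ with hφ
  have hinj : Function.Injective φ := by
    intro 𝓕 𝓕' hEq
    have h1 := congrArg classSupp hEq
    have h2 : suppMap (FF r 𝓕.1) = suppMap (FF r 𝓕'.1) := h1
    exact Subtype.ext (family_eq_of_suppMap hr hn
      (hgood 𝓕.1 (Finset.mem_powerset.mp 𝓕.2))
      (hgood 𝓕'.1 (Finset.mem_powerset.mp 𝓕'.2)) h2)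
  have hcard := Nat.card_le_card_of_injective φ hinj
  rw [Nat.card_eq_fintype_card, Fintype.card_coe, Finset.card_powerset] at hcard
  exact hcard

end Count

/-! ### Asymptotics of the central binomial coefficient -/

section Asymptotics

open Real Filter Stirling Topology

lemma stirlingSeq_pos' {k : ℕ} (hk : 1 ≤ k) : 0 < stirlingSeq k := by
  have hk' : (0:ℝ) < k := by exact_mod_cast hk
  unfold stirlingSeq
  apply div_pos
  · exact_mod_cast Nat.factorial_pos k
  · apply mul_pos
    · apply Real.sqrt_pos.mpr; positivity
    · apply pow_pos; positivity

lemma factorial_eq_stirling {k : ℕ} (hk : 1 ≤ k) :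
    (Nat.factorial k : ℝ) = stirlingSeq k * (Real.sqrt (2 * k) * ((k : ℝ) / Real.exp 1) ^ k) := by
  have hk' : (0:ℝ) < k := by exact_mod_cast hk
  have hpos : (0:ℝ) < Real.sqrt (2 * k) * ((k : ℝ) / Real.exp 1) ^ k := by
    apply mul_pos
    · apply Real.sqrt_pos.mpr; positivity
    · apply pow_pos; positivity
  unfold stirlingSeq
  field_simp

lemma central_key {m : ℕ} (hm : 1 ≤ m) :
    ((2 * m).choose m : ℝ) * Real.sqrt m * (stirlingSeq m) ^ 2
      = stirlingSeq (2 * m) * 4 ^ m := by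
  have hm' : (0:ℝ) < m := by exact_mod_cast hm
  have hfact : ((2*m).choose m) * Nat.factorial m * Nat.factorial m = Nat.factorial (2*m) := by
    have := Nat.choose_mul_factorial_mul_factorial (show m ≤ 2*m by omega)
    rwa [show 2*m - m = m by omega] at this
  have hcast : (((2*m).choose m : ℕ) : ℝ) * (Nat.factorial m : ℝ) * (Nat.factorial m : ℝ) = (Nat.factorial (2*m) : ℝ) := by
    exact_mod_cast congrArg (Nat.cast (R := ℝ)) hfact
  rw [factorial_eq_stirling hm, factorial_eq_stirling (show 1 ≤ 2*m by omega)] at hcast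
  set a := stirlingSeq (2*m) with ha
  set b := stirlingSeq m with hb
  set C := ((2*m).choose m : ℝ) with hC
  set p := ((m:ℝ) / Real.exp 1) ^ m with hp
  set s := Real.sqrt m with hs
  set q := Real.sqrt (2 * (m:ℝ)) with hq
  have hsq : s * s = (m:ℝ) := Real.mul_self_sqrt (le_of_lt hm')
  have hqq : q * q = 2 * (m:ℝ) := Real.mul_self_sqrt (by positivity)
  have hspos : 0 < s := Real.sqrt_pos.mpr hm'
  have hppos : 0 < p := by rw [hp]; apply pow_pos; positivity
  have hbpos : 0 < b := stirlingSeq_pos' hm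
  -- rewrite the (2m)-part
  have h2mcast : ((2*m : ℕ) : ℝ) = 2 * (m:ℝ) := by push_cast; ring
  have h4 : Real.sqrt (2 * ((2*m : ℕ) : ℝ)) = 2 * s := by
    rw [h2mcast, show (2:ℝ) * (2 * (m:ℝ)) = 2^2 * m by ring,
      Real.sqrt_mul (by norm_num : (0:ℝ) ≤ 2^2) (m:ℝ), Real.sqrt_sq (by norm_num : (0:ℝ) ≤ 2), hs]
  have hpow : (((2*m : ℕ) : ℝ) / Real.exp 1) ^ (2*m) = 4 ^ m * p ^ 2 := by
    rw [h2mcast, show (2 * (m:ℝ)) / Real.exp 1 = 2 * ((m:ℝ) / Real.exp 1) by ring, mul_pow,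
      pow_mul (2:ℝ) 2 m, pow_mul' ((m:ℝ) / Real.exp 1) 2 m, hp]
    norm_num
  rw [h4, hpow] at hcast
  -- hcast : C * (b * (q * p)) * (b * (q * p)) = a * (2 * s * (4 ^ m * p ^ 2))
  have H2 : (C * b^2 * (q * q) * p^2) = (a * 2 * s * 4^m * p^2) := by
    linear_combination hcast
  rw [hqq, ← hsq] at H2
  have hp2 : p^2 ≠ 0 := by positivity
  have H3 : C * b^2 * (2 * (s * s)) = a * 2 * s * 4^m :=
    mul_right_cancel₀ hp2 H2
  have h2s : (2 * s) ≠ 0 := by positivity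
  apply mul_left_cancel₀ h2s
  linear_combination H3

/-- the normalized central binomial tends to `√π / √π ^ 2 = 1/√π`. -/
lemma tendsto_central :
    Tendsto (fun m : ℕ => ((2 * m).choose m : ℝ) * Real.sqrt m / 4 ^ m) atTop
      (𝓝 (Real.sqrt π / Real.sqrt π ^ 2)) := by
  have ha : Tendsto (fun m : ℕ => stirlingSeq (2 * m)) atTop (𝓝 (Real.sqrt π)) :=
    tendsto_stirlingSeq_sqrt_pi.comp
      (Filter.tendsto_atTop_mono (fun m => by omega : ∀ m : ℕ, m ≤ 2 * m) tendsto_id)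
  have hb : Tendsto (fun m : ℕ => (stirlingSeq m) ^ 2) atTop (𝓝 (Real.sqrt π ^ 2)) :=
    tendsto_stirlingSeq_sqrt_pi.pow 2
  have hne : Real.sqrt π ^ 2 ≠ 0 := by
    rw [Real.sq_sqrt Real.pi_pos.le]; exact Real.pi_ne_zero
  have h := ha.div hb hne
  apply h.congr'
  filter_upwards [eventually_ge_atTop 1] with m hm
  have hbpos : 0 < stirlingSeq m := stirlingSeq_pos' hm
  have hkey := central_key hm
  have h4 : (0:ℝ) < 4 ^ m := by positivity
  show stirlingSeq (2 * m) / stirlingSeq m ^ 2 = _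
  rw [div_eq_div_iff (by positivity) h4.ne']
  linear_combination (-1 : ℝ) * hkey

/-- the limit constant -/
lemma limit_const : Real.sqrt 2 * (Real.sqrt π / Real.sqrt π ^ 2) = Real.sqrt (2 / π) := by
  have hpi := Real.pi_pos
  have hs : Real.sqrt π > 0 := Real.sqrt_pos.mpr hpi
  rw [Real.sqrt_div (by norm_num : (0:ℝ) ≤ 2) π, Real.sq_sqrt hpi.le]
  have h1 : Real.sqrt π / π = 1 / Real.sqrt π := by
    rw [div_eq_div_iff (ne_of_gt hpi) (ne_of_gt hs), one_mul]
    exact Real.mul_self_sqrt hpi.le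
  rw [h1, mul_one_div]

/-- the function whose limit we're after -/
noncomputable def bfun (n : ℕ) : ℝ := (n.choose (n / 2) : ℝ) * Real.sqrt n / 2 ^ n

lemma bfun_even (m : ℕ) : bfun (2 * m) = Real.sqrt 2 *
    (((2 * m).choose m : ℝ) * Real.sqrt m / 4 ^ m) := by
  unfold bfun
  rw [show (2 * m) / 2 = m by omega]
  have h1 : Real.sqrt ((2 * m : ℕ) : ℝ) = Real.sqrt 2 * Real.sqrt m := by
    push_cast
    rw [Real.sqrt_mul (by norm_num : (0:ℝ) ≤ 2)]
  have h2 : (2:ℝ) ^ (2 * m) = 4 ^ m := by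
    rw [pow_mul]; norm_num
  rw [h1, h2]
  ring

lemma tendsto_bfun_even : Tendsto (fun m : ℕ => bfun (2 * m)) atTop (𝓝 (Real.sqrt (2 / π))) := by
  rw [← limit_const]
  have := (tendsto_central.const_mul (Real.sqrt 2))
  apply this.congr
  intro m
  rw [bfun_even]

lemma choose_odd_eq (m : ℕ) :
    (((2 * m + 1).choose m : ℕ) : ℝ) = (2 * m + 1) * ((2 * m).choose m : ℝ) / (m + 1) := by
  have h1 : (2 * m + 1) * ((2*m).choose m) = (2 * m + 1).choose (m + 1) * (m + 1) := by
    have := Nat.add_one_mul_choose_eq (2 * m) m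
    simpa [Nat.succ_eq_add_one] using this
  have h2 : (2 * m + 1).choose (m + 1) = (2 * m + 1).choose m := by
    have := Nat.choose_symm (show m ≤ 2 * m + 1 by omega)
    rwa [show 2 * m + 1 - m = m + 1 by omega] at this
  rw [h2] at h1
  have h1' : ((2 * m + 1) : ℝ) * ((2*m).choose m : ℝ) = ((2 * m + 1).choose m : ℝ) * (m + 1) := by
    exact_mod_cast congrArg (Nat.cast (R := ℝ)) h1
  rw [eq_div_iff (by positivity : ((m:ℝ) + 1) ≠ 0)]
  push_cast at h1' ⊢
  linarith

lemma bfun_odd {m : ℕ} (hm : 1 ≤ m) : bfun (2 * m + 1) =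
    (((2 * m).choose m : ℝ) * Real.sqrt m / 4 ^ m) *
      ((2 * m + 1) * Real.sqrt (2 * m + 1) / (2 * (m + 1) * Real.sqrt m)) := by
  have hm' : (0:ℝ) < m := by exact_mod_cast hm
  have hs : (0:ℝ) < Real.sqrt m := Real.sqrt_pos.mpr hm'
  unfold bfun
  rw [show (2 * m + 1) / 2 = m by omega, choose_odd_eq]
  have h2 : (2:ℝ) ^ (2 * m + 1) = 2 * 4 ^ m := by
    rw [pow_succ, pow_mul]; norm_num; ring
  rw [h2]
  have hcast : ((2 * m + 1 : ℕ) : ℝ) = 2 * (m:ℝ) + 1 := by push_cast; ring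
  rw [hcast]
  field_simp

lemma tendsto_ratio1 : Tendsto (fun m : ℕ => (2 * (m:ℝ) + 1) / ((m:ℝ) + 1)) atTop (𝓝 2) := by
  have h : ∀ m : ℕ, (2 * (m:ℝ) + 1) / ((m:ℝ) + 1) = 2 - 1 / ((m:ℝ) + 1) := by
    intro m
    have : ((m:ℝ) + 1) ≠ 0 := by positivity
    field_simp
    ring
  have h0 : Tendsto (fun m : ℕ => 1 / ((m:ℝ) + 1)) atTop (𝓝 0) :=
    tendsto_one_div_add_atTop_nhds_zero_nat
  have := (tendsto_const_nhds (x := (2:ℝ)) (f := atTop)).sub h0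
  rw [sub_zero] at this
  exact this.congr (fun m => (h m).symm)

lemma tendsto_ratio2 : Tendsto (fun m : ℕ => (2 * (m:ℝ) + 1) / (m:ℝ)) atTop (𝓝 2) := by
  have h0 : Tendsto (fun m : ℕ => 1 / (m:ℝ)) atTop (𝓝 0) := tendsto_one_div_atTop_nhds_zero_nat
  have h2 := (tendsto_const_nhds (x := (2:ℝ)) (f := atTop)).add h0
  rw [add_zero] at h2
  apply h2.congr'
  filter_upwards [eventually_ge_atTop 1] with m hm
  have hm' : (0:ℝ) < m := by exact_mod_cast hm
  field_simp

lemma tendsto_ufactor : Tendsto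
    (fun m : ℕ => (2 * (m:ℝ) + 1) * Real.sqrt (2 * (m:ℝ) + 1) / (2 * ((m:ℝ) + 1) * Real.sqrt m))
    atTop (𝓝 (Real.sqrt 2)) := by
  have key : Tendsto
      (fun m : ℕ => ((2 * (m:ℝ) + 1) / ((m:ℝ) + 1)) * Real.sqrt ((2 * (m:ℝ) + 1) / (m:ℝ)) / 2)
      atTop (𝓝 (2 * Real.sqrt 2 / 2)) := by
    exact (tendsto_ratio1.mul tendsto_ratio2.sqrt).div_const 2
  rw [show (2 : ℝ) * Real.sqrt 2 / 2 = Real.sqrt 2 by ring] at key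
  apply key.congr'
  filter_upwards [eventually_ge_atTop 1] with m hm
  have hm' : (0:ℝ) < m := by exact_mod_cast hm
  have hs : (0:ℝ) < Real.sqrt m := Real.sqrt_pos.mpr hm'
  rw [Real.sqrt_div (by positivity : (0:ℝ) ≤ 2 * (m:ℝ) + 1) (m:ℝ)]
  field_simp

lemma tendsto_bfun_odd : Tendsto (fun m : ℕ => bfun (2 * m + 1)) atTop (𝓝 (Real.sqrt (2 / π))) := by
  have hmul := tendsto_central.mul tendsto_ufactor
  have hlim : Real.sqrt π / Real.sqrt π ^ 2 * Real.sqrt 2 = Real.sqrt (2 / π) := by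
    rw [← limit_const]; ring
  rw [hlim] at hmul
  apply hmul.congr'
  filter_upwards [eventually_ge_atTop 1] with m hm
  rw [bfun_odd hm]

lemma bfun_eventually {ε : ℝ} (hε : 0 < ε) :
    ∃ N : ℕ, ∀ n : ℕ, N ≤ n → Real.sqrt (2 / π) - ε ≤ bfun n := by
  have hlt : Real.sqrt (2 / π) - ε < Real.sqrt (2 / π) := by linarith
  have he := tendsto_bfun_even.eventually (eventually_ge_nhds hlt)
  have ho := tendsto_bfun_odd.eventually (eventually_ge_nhds hlt)
  obtain ⟨N1, hN1⟩ := eventually_atTop.mp he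
  obtain ⟨N2, hN2⟩ := eventually_atTop.mp ho
  refine ⟨2 * N1 + 2 * N2 + 2, ?_⟩
  intro n hn
  rcases Nat.even_or_odd n with h | h
  · obtain ⟨k, hk⟩ := h
    have hkeq : n = 2 * k := by omega
    rw [hkeq]
    exact hN1 k (by omega)
  · obtain ⟨k, hk⟩ := h
    rw [hk]
    exact hN2 k (by omega)

end Asymptotics

/-- For every `ε > 0` there is `n₀` such that for all `n ≥ n₀`, the number of
equivalence classes of irreducible supermodular functions on `2^[n]` is at least
`2^{(√(2/π) − ε) · 2^n / n^{3/2}}`. -/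
theorem count_irreducible_supermodular_lower (ε : ℝ) (hε : 0 < ε) :
    ∃ n₀ : ℕ, ∀ n : ℕ, n₀ ≤ n →
      (2 : ℝ) ^ ((Real.sqrt (2 / Real.pi) - ε) * 2 ^ n / (n : ℝ) ^ ((3 : ℝ) / 2)) ≤
        (Nat.card (IrreducibleSupermodularClasses n) : ℝ) := by
  have hε'pos : 0 < min ε (1/2) := lt_min hε (by norm_num)
  obtain ⟨N, hN⟩ := bfun_eventually hε'pos
  set ε' := min ε (1/2) with hε'
  refine ⟨N + 14, ?_⟩
  intro n hn
  have hn14 : 14 ≤ n := by omega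
  set r := n / 2 with hr
  have hr2 : 2 ≤ r := by omega
  have hrn : r + 5 ≤ n := by omega
  obtain ⟨m, hm1, hm2⟩ := count_main (n := n) hr2 hrn
  have hnpos : (0:ℝ) < n := by
    have : (0:ℕ) < n := by omega
    exact_mod_cast this
  have h2npos : (0:ℝ) < 2 ^ n := by positivity
  have hsn : (0:ℝ) ≤ Real.sqrt n := Real.sqrt_nonneg _
  have hb := hN n (by omega)
  unfold bfun at hb
  rw [← hr] at hb
  have hc1 : (Real.sqrt (2 / Real.pi) - ε') * 2 ^ n ≤ (n.choose r : ℝ) * Real.sqrt n :=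
    (le_div_iff₀ h2npos).mp hb
  have hm1R : (n.choose r : ℝ) ≤ (n : ℝ) * m := by exact_mod_cast hm1
  have h5 : (n.choose r : ℝ) * Real.sqrt n ≤ (m : ℝ) * ((n : ℝ) * Real.sqrt n) := by
    calc (n.choose r : ℝ) * Real.sqrt n ≤ ((n:ℝ) * m) * Real.sqrt n :=
          mul_le_mul_of_nonneg_right hm1R hsn
      _ = (m : ℝ) * ((n : ℝ) * Real.sqrt n) := by ring
  have h32 : (n : ℝ) ^ ((3 : ℝ) / 2) = (n : ℝ) * Real.sqrt n := by
    rw [show (3:ℝ)/2 = 1 + 1/2 by norm_num, Real.rpow_add hnpos, Real.rpow_one,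
      ← Real.sqrt_eq_rpow]
  have h32pos : (0:ℝ) < (n : ℝ) * Real.sqrt n := by
    apply mul_pos hnpos (Real.sqrt_pos.mpr hnpos)
  have heps : Real.sqrt (2 / Real.pi) - ε ≤ Real.sqrt (2 / Real.pi) - ε' := by
    have : ε' ≤ ε := min_le_left _ _
    linarith
  have hc0 : (Real.sqrt (2 / Real.pi) - ε) * 2 ^ n ≤ (Real.sqrt (2 / Real.pi) - ε') * 2 ^ n :=
    mul_le_mul_of_nonneg_right heps (le_of_lt h2npos)
  have key : (Real.sqrt (2 / Real.pi) - ε) * 2 ^ n / (n : ℝ) ^ ((3 : ℝ) / 2) ≤ (m : ℝ) := by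
    rw [h32, div_le_iff₀ h32pos]
    calc (Real.sqrt (2 / Real.pi) - ε) * 2 ^ n
        ≤ (Real.sqrt (2 / Real.pi) - ε') * 2 ^ n := hc0
      _ ≤ (n.choose r : ℝ) * Real.sqrt n := hc1
      _ ≤ (m : ℝ) * ((n : ℝ) * Real.sqrt n) := h5
  calc (2 : ℝ) ^ ((Real.sqrt (2 / Real.pi) - ε) * 2 ^ n / (n : ℝ) ^ ((3 : ℝ) / 2))
      ≤ (2 : ℝ) ^ ((m : ℕ) : ℝ) := Real.rpow_le_rpow_of_exponent_le one_le_two key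
    _ = ((2 ^ m : ℕ) : ℝ) := by rw [Real.rpow_natCast]; push_cast; ring
    _ ≤ (Nat.card (IrreducibleSupermodularClasses n) : ℝ) := by exact_mod_cast hm2
end
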